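/- arXiv:2309.06434 — 9 statements merged into one kernel-verified Lean document; each statement's English description precedes it below -/
import Mathlib

section
/- For all compactly supported smooth functions u on ℝᵈ \ {0}, the Hardy inequality holds: ∫_{ℝᵈ} ((d-2)²/(4|x|²)) |u(x)|² dx ≤ ∫_{ℝᵈ} |∇u(x)|² dx. -/
open MeasureTheory Set

namespace HardyAuxNS

variable {d : ℕ}

/-- squared norm as a sum of squares of coordinates -/
def φ (y : EuclideanSpace ℝ (Fin d)) : ℝ := ∑ j, (y j)^2

lemma φ_eq (y : EuclideanSpace ℝ (Fin d)) : φ y = ‖y‖^2 := by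
  rw [φ, EuclideanSpace.norm_eq, Real.sq_sqrt (by positivity)]
  simp [Real.norm_eq_abs, sq_abs]

lemma φ_ne {x : EuclideanSpace ℝ (Fin d)} (hx : x ≠ 0) : φ x ≠ 0 := by
  rw [φ_eq]; exact pow_ne_zero 2 (norm_ne_zero_iff.mpr hx)

lemma φ_nonneg (x : EuclideanSpace ℝ (Fin d)) : 0 ≤ φ x := by
  rw [φ_eq]; positivity

lemma φ_contDiff : ContDiff ℝ ((⊤ : ℕ∞) : WithTop ℕ∞) (φ (d := d)) := by
  apply ContDiff.sum
  intro j _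
  exact ((EuclideanSpace.proj (𝕜 := ℝ) j).contDiff).pow 2

lemma φ_cont : Continuous (φ (d := d)) := φ_contDiff.continuous

lemma decomp (L : EuclideanSpace ℝ (Fin d) →L[ℝ] ℝ) (x : EuclideanSpace ℝ (Fin d)) :
    ∑ i, x i * L (EuclideanSpace.single i 1) = L x := by
  conv_rhs => rw [← (EuclideanSpace.basisFun (Fin d) ℝ).sum_repr x]
  rw [map_sum]
  simp [EuclideanSpace.basisFun_apply, EuclideanSpace.basisFun_repr, smul_eq_mul, mul_comm]

lemma integrable_fderiv_apply (h : EuclideanSpace ℝ (Fin d) → ℝ)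
    (hcont : Continuous (fderiv ℝ h)) (hc : HasCompactSupport h)
    (w : EuclideanSpace ℝ (Fin d)) :
    Integrable (fun x => fderiv ℝ h x w) := by
  apply Continuous.integrable_of_hasCompactSupport
  · exact (ContinuousLinearMap.apply ℝ ℝ w).continuous.comp hcont
  · exact (hc.fderiv ℝ).comp_left (g := fun L : _ →L[ℝ] ℝ => L w) rfl

lemma aux_int_zero (h : EuclideanSpace ℝ (Fin d) → ℝ)
    (hdiff : Differentiable ℝ h) (hcont : Continuous (fderiv ℝ h))
    (hc : HasCompactSupport h) (w : EuclideanSpace ℝ (Fin d)) :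
    ∫ x, fderiv ℝ h x w = 0 := by
  have hint : Integrable (fun x => fderiv ℝ h x w) := integrable_fderiv_apply h hcont hc w
  have h1 : Integrable (fun x => fderiv ℝ h x w * 1) := hint.mul_const 1
  have h2 : Integrable (fun x => h x * fderiv ℝ (fun _ => (1:ℝ)) x w) := by
    simp only [fderiv_fun_const, Pi.zero_apply, ContinuousLinearMap.zero_apply, mul_zero]
    exact integrable_zero _ _ _
  have h3 : Integrable (fun x => h x * 1) :=
    (hdiff.continuous.integrable_of_hasCompactSupport hc).mul_const 1
  have := integral_mul_fderiv_eq_neg_fderiv_mul_of_integrable h1 h2 h3 (fun x _ => hdiff x)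
    (fun x _ => differentiable_const (1:ℝ) x)
  simp only [fderiv_fun_const, Pi.zero_apply, ContinuousLinearMap.zero_apply, mul_zero, mul_one,
    integral_zero] at this
  linarith [this]

/-- the pointwise derivative computation for the vector field components, at `x ≠ 0`. -/
lemma fderiv_g_eval (u : EuclideanSpace ℝ (Fin d) → ℝ) (hud : Differentiable ℝ u)
    (x : EuclideanSpace ℝ (Fin d)) (hx : x ≠ 0) (i : Fin d) :
    fderiv ℝ (fun y => (u y * u y) * ((φ y)⁻¹ * y i)) x (EuclideanSpace.single i 1)
    = (u x * u x) * ((φ x)⁻¹ + x i * ((2 * x i) * (-((φ x) ^ 2)⁻¹)))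
      + ((φ x)⁻¹ * x i) * (2 * (u x * fderiv ℝ u x (EuclideanSpace.single i 1))) := by
  have hφx : φ x ≠ 0 := φ_ne hx
  have hΦ : HasFDerivAt (φ (d := d))
      (∑ j, (2 * x j) • EuclideanSpace.proj (𝕜 := ℝ) j) x := by
    apply HasFDerivAt.fun_sum
    intro j _
    have hp : HasFDerivAt (fun y : EuclideanSpace ℝ (Fin d) => y j)
        (EuclideanSpace.proj (𝕜 := ℝ) j) x := (EuclideanSpace.proj (𝕜 := ℝ) j).hasFDerivAt
    have h2 := hp.mul hp
    have hfun : (fun y : EuclideanSpace ℝ (Fin d) => y j ^ 2)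
        = fun y : EuclideanSpace ℝ (Fin d) => y j * y j := by funext y; ring
    rw [hfun, show ((2 * x j) • EuclideanSpace.proj (𝕜 := ℝ) j :
        EuclideanSpace ℝ (Fin d) →L[ℝ] ℝ)
      = x j • EuclideanSpace.proj (𝕜 := ℝ) j + x j • EuclideanSpace.proj (𝕜 := ℝ) j from by
        rw [two_mul, add_smul]]
    exact h2
  have hinv : HasFDerivAt (fun y => (φ y)⁻¹)
      ((ContinuousLinearMap.smulRight (1 : ℝ →L[ℝ] ℝ) (-(φ x ^ 2)⁻¹)).comp
        (∑ j, (2 * x j) • EuclideanSpace.proj (𝕜 := ℝ) j)) x :=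
    (hasFDerivAt_inv hφx).comp x hΦ
  have hp : HasFDerivAt (fun y : EuclideanSpace ℝ (Fin d) => y i)
      (EuclideanSpace.proj (𝕜 := ℝ) i) x := (EuclideanSpace.proj (𝕜 := ℝ) i).hasFDerivAt
  have hvi := hinv.fun_mul hp
  have hq := ((hud x).hasFDerivAt).fun_mul ((hud x).hasFDerivAt)
  have H := hq.fun_mul hvi
  rw [H.fderiv]
  simp only [ContinuousLinearMap.add_apply, ContinuousLinearMap.smul_apply,
    ContinuousLinearMap.comp_apply, ContinuousLinearMap.smulRight_apply,
    ContinuousLinearMap.one_apply, ContinuousLinearMap.sum_apply,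
    PiLp.proj_apply, EuclideanSpace.single_apply, smul_eq_mul, mul_ite, mul_one, mul_zero,
    Finset.sum_ite_eq', Finset.mem_univ, if_true]
  ring

end HardyAuxNS

open HardyAuxNS

/-- Hardy's inequality on ℝᵈ for smooth compactly supported functions away from 0. -/
theorem hardy_inequality (d : ℕ) (hd : 1 ≤ d)
    (u : EuclideanSpace ℝ (Fin d) → ℝ)
    (hu : ContDiff ℝ (⊤ : ℕ∞) u) (hsupp : HasCompactSupport u)
    (h0 : tsupport u ⊆ {x : EuclideanSpace ℝ (Fin d) | x ≠ 0}) :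
    ∫ x, ((d - 2 : ℝ)^2 / (4 * ‖x‖^2)) * |u x|^2
      ≤ ∫ x, ‖fderiv ℝ u x‖^2 := by
  classical
  have hud : Differentiable ℝ u := hu.differentiable (by simp)
  have hfc : Continuous (fderiv ℝ u) :=
    (contDiff_infty_iff_fderiv.mp (hu.of_le (by simp))).2.continuous
  have hs_open : IsOpen (tsupport u)ᶜ := (isClosed_tsupport u).isOpen_compl
  -- the vector field components
  set g : Fin d → EuclideanSpace ℝ (Fin d) → ℝ :=
    fun i y => (u y * u y) * ((φ y)⁻¹ * y i) with hgdef
  have hg0 : ∀ i, ∀ y ∉ tsupport u, g i y = 0 := by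
    intro i y hy
    simp [hgdef, image_eq_zero_of_notMem_tsupport hy]
  -- smoothness of g
  have hgsm : ∀ i, ContDiff ℝ ((⊤ : ℕ∞) : WithTop ℕ∞) (g i) := by
    intro i
    rw [contDiff_iff_contDiffAt]
    intro x
    by_cases hx : x ∈ tsupport u
    · have hxne : x ≠ 0 := h0 hx
      have hu' : ContDiffAt ℝ ((⊤ : ℕ∞) : WithTop ℕ∞) u x := (hu.of_le (by simp)).contDiffAt
      have hproj : ContDiffAt ℝ ((⊤ : ℕ∞) : WithTop ℕ∞)
          (fun y : EuclideanSpace ℝ (Fin d) => y i) x :=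
        ((EuclideanSpace.proj (𝕜 := ℝ) i).contDiff).contDiffAt
      exact (hu'.mul hu').mul (((φ_contDiff.contDiffAt).inv (φ_ne hxne)).mul hproj)
    · apply (contDiffAt_const (c := (0:ℝ))).congr_of_eventuallyEq
      filter_upwards [hs_open.mem_nhds hx] with y hy
      exact hg0 i y hy
  have hgdiff : ∀ i, Differentiable ℝ (g i) := fun i => (hgsm i).differentiable (by simp)
  have hgfc : ∀ i, Continuous (fderiv ℝ (g i)) := fun i =>
    (contDiff_infty_iff_fderiv.mp (hgsm i)).2.continuous
  have hgcs : ∀ i, HasCompactSupport (g i) := by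
    intro i
    apply hsupp.mono
    intro x hx
    simp only [Function.mem_support] at hx ⊢
    intro h
    exact hx (by simp [hgdef, h])
  -- divergence sums to zero
  have hint_i : ∀ i, Integrable (fun x => fderiv ℝ (g i) x (EuclideanSpace.single i 1)) :=
    fun i => integrable_fderiv_apply (g i) (hgfc i) (hgcs i) _
  have hdiv0 : ∫ x, ∑ i, fderiv ℝ (g i) x (EuclideanSpace.single i 1) = 0 := by
    rw [integral_finset_sum _ (fun i _ => hint_i i)]
    apply Finset.sum_eq_zero
    intro i _
    exact aux_int_zero (g i) (hgdiff i) (hgfc i) (hgcs i) _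
  -- the key pointwise identity, valid for every x
  have key : ∀ x, ∑ i, fderiv ℝ (g i) x (EuclideanSpace.single i 1)
      = 2 * (u x * fderiv ℝ u x ((φ x)⁻¹ • x))
        + ((d : ℝ) - 2) * ((φ x)⁻¹ * (u x * u x)) := by
    intro x
    by_cases hx : x ∈ tsupport u
    · have hxne : x ≠ 0 := h0 hx
      have hφx : φ x ≠ 0 := φ_ne hxne
      calc ∑ i, fderiv ℝ (g i) x (EuclideanSpace.single i 1)
          = ∑ i, ((u x * u x) * (φ x)⁻¹
              + ((u x * u x) * (2 * (-((φ x) ^ 2)⁻¹))) * (x i * x i)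
              + (2 * u x * (φ x)⁻¹) * (x i * fderiv ℝ u x (EuclideanSpace.single i 1))) := by
            refine Finset.sum_congr rfl fun i _ => ?_
            rw [hgdef]
            rw [fderiv_g_eval u hud x hxne i]
            ring
        _ = (d : ℝ) * ((u x * u x) * (φ x)⁻¹)
              + ((u x * u x) * (2 * (-((φ x) ^ 2)⁻¹))) * (∑ i, x i * x i)
              + (2 * u x * (φ x)⁻¹) * (∑ i, x i * fderiv ℝ u x (EuclideanSpace.single i 1)) := by
            rw [Finset.sum_add_distrib, Finset.sum_add_distrib]
            congr 1
            · congr 1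
              · rw [Finset.sum_const, Finset.card_univ, Fintype.card_fin, nsmul_eq_mul]
              · rw [← Finset.mul_sum]
            · rw [← Finset.mul_sum]
        _ = 2 * (u x * fderiv ℝ u x ((φ x)⁻¹ • x))
              + ((d : ℝ) - 2) * ((φ x)⁻¹ * (u x * u x)) := by
            have hsq : ∑ i, x i * x i = φ x := by
              rw [φ]; exact Finset.sum_congr rfl fun i _ => (sq (x i)).symm
            rw [hsq, decomp (fderiv ℝ u x) x, ContinuousLinearMap.map_smul, smul_eq_mul]
            field_simp
            ring
    · -- both sides vanish near / at x
      have hvanish : ∀ i, fderiv ℝ (g i) x = 0 := by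
        intro i
        have hev : g i =ᶠ[nhds x] (fun _ => (0:ℝ)) := by
          filter_upwards [hs_open.mem_nhds hx] with y hy
          exact hg0 i y hy
        rw [hev.fderiv_eq, fderiv_fun_const]
        rfl
      have hux : u x = 0 := image_eq_zero_of_notMem_tsupport hx
      simp [hvanish, hux]
  -- integrability of the pieces
  have hsupp_sub : ∀ f : EuclideanSpace ℝ (Fin d) → ℝ,
      (∀ x, u x = 0 → f x = 0) → HasCompactSupport f := by
    intro f hf
    apply hsupp.mono
    intro x hx
    simp only [Function.mem_support] at hx ⊢
    intro h
    exact hx (hf x h)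
  have hcont_of : ∀ f : EuclideanSpace ℝ (Fin d) → ℝ,
      (∀ x, x ≠ 0 → ContinuousAt f x) → (∀ x, x ∉ tsupport u → f x = 0) → Continuous f := by
    intro f hf hf0
    rw [continuous_iff_continuousAt]
    intro x
    by_cases hx : x ∈ tsupport u
    · exact hf x (h0 hx)
    · apply ContinuousAt.congr (continuousAt_const (y := (0:ℝ)))
      filter_upwards [hs_open.mem_nhds hx] with y hy
      exact (hf0 y hy).symm
  have hI2int : Integrable (fun x => (φ x)⁻¹ * (u x * u x)) := by
    apply Continuous.integrable_of_hasCompactSupport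
    · apply hcont_of
      · intro x hx
        exact ((φ_cont.continuousAt).inv₀ (φ_ne hx)).mul
          ((hud.continuous.continuousAt).mul (hud.continuous.continuousAt))
      · intro x hx
        simp [image_eq_zero_of_notMem_tsupport hx]
    · exact hsupp_sub _ (fun x h => by simp [h])
  have hCint : Integrable (fun x => u x * fderiv ℝ u x ((φ x)⁻¹ • x)) := by
    apply Continuous.integrable_of_hasCompactSupport
    · apply hcont_of
      · intro x hx
        apply (hud.continuous.continuousAt).mul
        exact ContinuousAt.comp (isBoundedBilinearMap_apply.continuous.continuousAt)
          ((hfc.continuousAt).prodMk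
            (((φ_cont.continuousAt).inv₀ (φ_ne hx)).smul continuousAt_id))
      · intro x hx
        simp [image_eq_zero_of_notMem_tsupport hx]
    · exact hsupp_sub _ (fun x h => by simp [h])
  have hI1int : Integrable (fun x => ‖fderiv ℝ u x‖^2) := by
    apply Continuous.integrable_of_hasCompactSupport
    · exact (hfc.norm).pow 2
    · exact (hsupp.fderiv ℝ).comp_left (g := fun L : _ →L[ℝ] ℝ => ‖L‖^2) (by simp)
  set C : ℝ := ∫ x, u x * fderiv ℝ u x ((φ x)⁻¹ • x) with hCdef
  set I2 : ℝ := ∫ x, (φ x)⁻¹ * (u x * u x) with hI2def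
  set I1 : ℝ := ∫ x, ‖fderiv ℝ u x‖^2 with hI1def
  set c : ℝ := ((d : ℝ) - 2) / 2 with hcdef
  -- the divergence identity in integrated form
  have hA : 2 * C + ((d : ℝ) - 2) * I2 = 0 := by
    have h1 : ∫ x, (2 * (u x * fderiv ℝ u x ((φ x)⁻¹ • x))
        + ((d : ℝ) - 2) * ((φ x)⁻¹ * (u x * u x))) = 2 * C + ((d : ℝ) - 2) * I2 := by
      rw [integral_add (hCint.const_mul 2) (hI2int.const_mul _),
        integral_const_mul, integral_const_mul]
    rw [← h1, ← hdiv0]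
    exact integral_congr_ae (Filter.Eventually.of_forall fun x => (key x).symm)
  -- pointwise inequality
  have hB : ∀ x, 0 ≤ ‖fderiv ℝ u x‖^2 + (2 * c) * (u x * fderiv ℝ u x ((φ x)⁻¹ • x))
      + c^2 * ((φ x)⁻¹ * (u x * u x)) := by
    intro x
    by_cases hx : x = 0
    · subst hx
      have hφ0 : φ (0 : EuclideanSpace ℝ (Fin d)) = 0 := by
        rw [φ_eq]; simp
      simp [hφ0]
    · have hnx : ‖x‖ ≠ 0 := norm_ne_zero_iff.mpr hx
      have hw : ‖(φ x)⁻¹ • x‖ = ‖x‖⁻¹ := by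
        rw [norm_smul, Real.norm_eq_abs, abs_of_nonneg (inv_nonneg.mpr (φ_nonneg x)), φ_eq,
          sq, mul_inv, mul_assoc, inv_mul_cancel₀ hnx, mul_one]
      have h1 : |fderiv ℝ u x ((φ x)⁻¹ • x)| ≤ ‖fderiv ℝ u x‖ * ‖x‖⁻¹ := by
        calc |fderiv ℝ u x ((φ x)⁻¹ • x)| = ‖fderiv ℝ u x ((φ x)⁻¹ • x)‖ :=
              (Real.norm_eq_abs _).symm
          _ ≤ ‖fderiv ℝ u x‖ * ‖(φ x)⁻¹ • x‖ := (fderiv ℝ u x).le_opNorm _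
          _ = ‖fderiv ℝ u x‖ * ‖x‖⁻¹ := by rw [hw]
      have h2 : -(|c| * |u x| * (‖fderiv ℝ u x‖ * ‖x‖⁻¹)) ≤ c * (u x * fderiv ℝ u x ((φ x)⁻¹ • x)) := by
        have habs : |c * (u x * fderiv ℝ u x ((φ x)⁻¹ • x))|
            ≤ |c| * |u x| * (‖fderiv ℝ u x‖ * ‖x‖⁻¹) := by
          rw [abs_mul, abs_mul, ← mul_assoc]
          apply mul_le_mul_of_nonneg_left h1 (by positivity)
        linarith [neg_abs_le (c * (u x * fderiv ℝ u x ((φ x)⁻¹ • x))), habs]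
      have h3 : c^2 * ((φ x)⁻¹ * (u x * u x)) = (|c| * |u x| * ‖x‖⁻¹)^2 := by
        rw [φ_eq, show (u x * u x) = |u x|^2 from by rw [sq_abs, pow_two],
          show c^2 = |c|^2 from (sq_abs c).symm, ← inv_pow]
        ring
      rw [h3]
      nlinarith [h2, sq_nonneg (‖fderiv ℝ u x‖ - |c| * |u x| * ‖x‖⁻¹)]
  -- integrate the pointwise inequality
  have hpos : 0 ≤ I1 + (2 * c) * C + c^2 * I2 := by
    have hi12 : Integrable (fun x => ‖fderiv ℝ u x‖^2
        + (2 * c) * (u x * fderiv ℝ u x ((φ x)⁻¹ • x))) := hI1int.add (hCint.const_mul _)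
    have hsum : ∫ x, (‖fderiv ℝ u x‖^2 + (2 * c) * (u x * fderiv ℝ u x ((φ x)⁻¹ • x))
        + c^2 * ((φ x)⁻¹ * (u x * u x))) = I1 + (2 * c) * C + c^2 * I2 := by
      rw [integral_add hi12 (hI2int.const_mul _),
        integral_add hI1int (hCint.const_mul _), integral_const_mul, integral_const_mul]
    rw [← hsum]
    exact integral_nonneg hB
  -- conclude
  have h2cC : (2 * c) * C = -(2 * c^2 * I2) := by
    rw [hcdef]
    linear_combination (((d : ℝ) - 2) / 2) * hA
  have hfinal : c^2 * I2 ≤ I1 := by linarith [hpos, h2cC]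
  calc ∫ x, ((d - 2 : ℝ)^2 / (4 * ‖x‖^2)) * |u x|^2
      = ∫ x, c^2 * ((φ x)⁻¹ * (u x * u x)) := by
        apply integral_congr_ae
        apply Filter.Eventually.of_forall
        intro x
        beta_reduce
        rw [φ_eq, sq_abs, hcdef, div_eq_mul_inv, mul_inv]
        ring
    _ = c^2 * I2 := integral_const_mul _ _
    _ ≤ I1 := hfinal
end

section
/- Let ρ ∈ ℝ and R > 1. If σ ≥ R^{ρ-1}((ln R)^{-1} + (1-ρ))/2, then for all u in the weighted Sobolev space H¹((R,∞), r^ρ dr), one has ∫_R^∞ ((ρ-1)²/(4r²) + 1/(4r²(ln r)²)) |u(r)|² r^ρ dr ≤ ∫_R^∞ |u'(r)|² r^ρ dr + σ |u(R)|². -/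
/-!
Ground-state substitution. With the weight `W = r ^ ρ`, the virtual ground state
`ψ r = r ^ ((1 - ρ) / 2) * √(log r)` and `F = ψ' / ψ` (`hardyLogRiccati`), the function `F W`
solves the Riccati equation `(F W)' = -(V + F²) W`, where `V` is the Hardy weight on the
left-hand side. Completing the square then gives `(u'² - V u²) W = (u' - F u)² W + (F W u²)'`.
Because `F` and `V` are bounded on `[R, ∞)`, all terms are integrable, so `F W u²` tends to zero
at infinity and integrating leaves only the boundary term
`F(R) R^ρ u(R)² = R^(ρ-1) ((log R)⁻¹ + 1 - ρ) / 2 · u(R)²`.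
-/

open MeasureTheory Set Real

section RiccatiHardy

variable {R C : ℝ} {V F W u : ℝ → ℝ}

lemma integrableOn_of_continuousOn_of_abs_le {s : Set ℝ} {f g : ℝ → ℝ}
    (hg : IntegrableOn g s) (hs : MeasurableSet s) (hf : ContinuousOn f s)
    (hfg : ∀ x ∈ s, |f x| ≤ g x) :
    IntegrableOn f s :=
  hg.mono' (hf.aestronglyMeasurable hs) ((ae_restrict_iff' hs).2 (ae_of_all _ hfg))

lemma abs_mul_sq_mul_le {c a w : ℝ} (hc : |c| ≤ C) (hw : 0 ≤ w) :
    |c * a ^ 2 * w| ≤ C * (a ^ 2 * w) := by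
  rw [abs_mul, abs_mul, abs_sq, abs_of_nonneg hw, mul_assoc]
  exact mul_le_mul_of_nonneg_right hc (by positivity)

lemma abs_riccati_derivative_le {v f w a b : ℝ} (hv : |v| ≤ C) (hf : |f| ≤ C) (hw : 0 ≤ w) :
    |-(v + f ^ 2) * w * a ^ 2 + f * w * (2 * a * b)|
      ≤ (2 * C + C ^ 2) * (a ^ 2 * w) + C * (b ^ 2 * w) := by
  have hC : 0 ≤ C := (abs_nonneg f).trans hf
  have hf2 : f ^ 2 ≤ C ^ 2 := sq_le_sq' (abs_le.1 hf).1 (abs_le.1 hf).2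
  have hab : |2 * a * b| ≤ a ^ 2 + b ^ 2 := by
    rw [abs_le]; constructor <;> nlinarith [sq_nonneg (a + b), sq_nonneg (a - b)]
  calc _ ≤ |v + f ^ 2| * w * a ^ 2 + |f| * w * |2 * a * b| := by
        refine (abs_add_le _ _).trans_eq ?_
        rw [abs_mul, abs_mul, abs_mul, abs_mul, abs_neg, abs_of_nonneg hw, abs_sq]
    _ ≤ (C + C ^ 2) * w * a ^ 2 + C * w * (a ^ 2 + b ^ 2) := by
        gcongr
        exact (abs_add_le _ _).trans (by rw [abs_of_nonneg (sq_nonneg f)]; linarith)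
    _ = _ := by ring

theorem integral_mul_sq_le_of_hasDerivAt_riccati (hu : ContDiffOn ℝ 1 u (Ici R))
    (hV : ContinuousOn V (Ici R)) (hF : ContinuousOn F (Ici R)) (hW : ContinuousOn W (Ici R))
    (hVC : ∀ x ∈ Ioi R, |V x| ≤ C) (hFC : ∀ x ∈ Ioi R, |F x| ≤ C)
    (hW0 : ∀ x ∈ Ioi R, 0 ≤ W x)
    (hRic : ∀ x ∈ Ioi R, HasDerivAt (fun y => F y * W y) (-(V x + F x ^ 2) * W x) x)
    (hu2 : IntegrableOn (fun x => u x ^ 2 * W x) (Ioi R))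
    (hu'2 : IntegrableOn (fun x => deriv u x ^ 2 * W x) (Ioi R)) :
    ∫ x in Ioi R, V x * u x ^ 2 * W x
      ≤ (∫ x in Ioi R, deriv u x ^ 2 * W x) + F R * W R * u R ^ 2 := by
  set g : ℝ → ℝ := fun x => F x * W x * u x ^ 2
  set g' : ℝ → ℝ := fun x =>
    -(V x + F x ^ 2) * W x * u x ^ 2 + F x * W x * (2 * u x * deriv u x)
  have hIoi : Ioi R ⊆ Ici R := Ioi_subset_Ici_self
  have hu_cont : ContinuousOn u (Ici R) := hu.continuousOn
  have hu'_cont : ContinuousOn (deriv u) (Ioi R) :=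
    (hu.mono hIoi).continuousOn_deriv_of_isOpen isOpen_Ioi le_rfl
  have hV' := hV.mono hIoi
  have hF' := hF.mono hIoi
  have hW' := hW.mono hIoi
  have hu' := hu_cont.mono hIoi
  have hg : ∀ x ∈ Ioi R, HasDerivAt g (g' x) x := by
    intro x hx
    have hux : HasDerivAt u (deriv u x) x :=
      ((hu.differentiableOn one_ne_zero).differentiableAt (Ici_mem_nhds hx)).hasDerivAt
    exact ((hRic x hx).mul (hux.pow 2)).congr_deriv (by simp only [g']; norm_num)
  have hg'_int : IntegrableOn g' (Ioi R) :=
    integrableOn_of_continuousOn_of_abs_le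
      ((hu2.const_mul (2 * C + C ^ 2)).add (hu'2.const_mul C)) measurableSet_Ioi
      (by simp only [g']; fun_prop)
      fun x hx => abs_riccati_derivative_le (hVC x hx) (hFC x hx) (hW0 x hx)
  have hg_int : IntegrableOn g (Ioi R) :=
    integrableOn_of_continuousOn_of_abs_le (hu2.const_mul C) measurableSet_Ioi
      (by simp only [g]; fun_prop)
      fun x hx => by
        simpa only [g, mul_right_comm _ (u x ^ 2)] using
          abs_mul_sq_mul_le (a := u x) (hFC x hx) (hW0 x hx)
  have hV_int : IntegrableOn (fun x => V x * u x ^ 2 * W x) (Ioi R) :=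
    integrableOn_of_continuousOn_of_abs_le (hu2.const_mul C) measurableSet_Ioi (by fun_prop)
      fun x hx => abs_mul_sq_mul_le (hVC x hx) (hW0 x hx)
  have hboundary : ∫ x in Ioi R, g' x = 0 - g R :=
    integral_Ioi_of_hasDerivAt_of_tendsto
      (((hF.mul hW).mul (hu_cont.pow 2)) R self_mem_Ici) hg hg'_int
      (tendsto_zero_of_hasDerivAt_of_integrableOn_Ioi hg hg'_int hg_int)
  have hpointwise : ∀ x ∈ Ioi R, V x * u x ^ 2 * W x ≤ deriv u x ^ 2 * W x - g' x := by
    intro x hx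
    have : 0 ≤ (deriv u x - F x * u x) ^ 2 * W x := mul_nonneg (sq_nonneg _) (hW0 x hx)
    simp only [g']
    nlinarith
  calc ∫ x in Ioi R, V x * u x ^ 2 * W x
      ≤ ∫ x in Ioi R, (deriv u x ^ 2 * W x - g' x) :=
        setIntegral_mono_on hV_int (hu'2.sub hg'_int) measurableSet_Ioi hpointwise
    _ = (∫ x in Ioi R, deriv u x ^ 2 * W x) + g R := by
        rw [integral_sub hu'2 hg'_int, hboundary]; ring

end RiccatiHardy

noncomputable def hardyLogPotential (ρ x : ℝ) : ℝ :=
  (ρ - 1) ^ 2 / (4 * x ^ 2) + 1 / (4 * x ^ 2 * Real.log x ^ 2)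

noncomputable def hardyLogRiccati (ρ x : ℝ) : ℝ :=
  (1 - ρ) / (2 * x) + 1 / (2 * x * Real.log x)

section HardyLog

variable {ρ R x : ℝ}

lemma continuousOn_hardyLogPotential : ContinuousOn (hardyLogPotential ρ) (Ioi 1) := by
  intro x hx
  have hx0 : x ≠ 0 := by linarith [mem_Ioi.1 hx]
  have hlog : Real.log x ≠ 0 := (Real.log_pos hx).ne'
  unfold hardyLogPotential
  fun_prop (disch := simp [hx0, hlog])

lemma continuousOn_hardyLogRiccati : ContinuousOn (hardyLogRiccati ρ) (Ioi 1) := by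
  intro x hx
  have hx0 : x ≠ 0 := by linarith [mem_Ioi.1 hx]
  have hlog : Real.log x ≠ 0 := (Real.log_pos hx).ne'
  unfold hardyLogRiccati
  fun_prop (disch := simp [hx0, hlog])

lemma hasDerivAt_hardyLogRiccati_mul_rpow (hx : 1 < x) :
    HasDerivAt (fun y => hardyLogRiccati ρ y * y ^ ρ)
      (-(hardyLogPotential ρ x + hardyLogRiccati ρ x ^ 2) * x ^ ρ) x := by
  have hx0 : 0 < x := zero_lt_one.trans hx
  have hlog : Real.log x ≠ 0 := (Real.log_pos hx).ne'
  have hlin : HasDerivAt (fun y : ℝ => 2 * y) 2 x := by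
    simpa using (hasDerivAt_id x).const_mul 2
  have hF : HasDerivAt (hardyLogRiccati ρ) _ x :=
    ((hasDerivAt_const x (1 - ρ)).div hlin (by positivity)).add
      ((hasDerivAt_const x 1).div (hlin.mul (Real.hasDerivAt_log hx0.ne'))
        (mul_ne_zero (by positivity) hlog))
  refine (hF.mul (Real.hasDerivAt_rpow_const (Or.inl hx0.ne'))).congr_deriv ?_
  rw [Real.rpow_sub hx0, Real.rpow_one]
  unfold hardyLogPotential hardyLogRiccati
  field_simp
  ring

lemma hardyLogRiccati_mul_rpow (hR : 0 < R) :
    hardyLogRiccati ρ R * R ^ ρ = R ^ (ρ - 1) * ((Real.log R)⁻¹ + (1 - ρ)) / 2 := by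
  rw [Real.rpow_sub hR, Real.rpow_one]
  unfold hardyLogRiccati
  field_simp
  ring

lemma abs_hardyLogRiccati_le (hR : 1 < R) (hx : R ≤ x) :
    |hardyLogRiccati ρ x| ≤ |1 - ρ| / 2 + 1 / (2 * Real.log R) := by
  have hx1 : 1 ≤ x := hR.le.trans hx
  have hlogR : 0 < Real.log R := Real.log_pos hR
  have hlog : Real.log R ≤ Real.log x := Real.log_le_log (by linarith) hx
  unfold hardyLogRiccati
  refine (abs_add_le _ _).trans (add_le_add ?_ ?_)
  · rw [abs_div, abs_of_pos (by positivity : (0 : ℝ) < 2 * x)]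
    gcongr
    linarith
  · have hlogx : 0 < Real.log x := hlogR.trans_le hlog
    rw [abs_of_pos (by positivity)]
    gcongr
    nlinarith

lemma abs_hardyLogPotential_le (hR : 1 < R) (hx : R ≤ x) :
    |hardyLogPotential ρ x| ≤ (ρ - 1) ^ 2 / 4 + 1 / (4 * Real.log R ^ 2) := by
  have hx1 : 1 ≤ x := hR.le.trans hx
  have hlogR : 0 < Real.log R := Real.log_pos hR
  have hlog : Real.log R ≤ Real.log x := Real.log_le_log (by linarith) hx
  unfold hardyLogPotential
  rw [abs_of_nonneg (by positivity)]
  gcongr <;> nlinarith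

end HardyLog

/-- Robin–Hardy inequality with logarithmic refinement on the weighted half-line. -/
theorem robin_hardy_log (ρ : ℝ) (R : ℝ) (hR : 1 < R) (σ : ℝ)
    (hσ : R ^ (ρ - 1) * ((Real.log R)⁻¹ + (1 - ρ)) / 2 ≤ σ)
    (u : ℝ → ℝ) (hu : ContDiffOn ℝ 1 u (Ici R))
    (hu2 : IntegrableOn (fun r => |u r|^2 * r ^ ρ) (Ioi R))
    (hu'2 : IntegrableOn (fun r => |deriv u r|^2 * r ^ ρ) (Ioi R)) :
    ∫ r in Ioi R, ((ρ - 1)^2 / (4 * r^2) + 1 / (4 * r^2 * (Real.log r)^2)) * |u r|^2 * r ^ ρ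
      ≤ (∫ r in Ioi R, |deriv u r|^2 * r ^ ρ) + σ * |u R|^2 := by
  have hR0 : 0 < R := zero_lt_one.trans hR
  have hIci : Ici R ⊆ Ioi 1 := fun x hx => hR.trans_le hx
  have key := integral_mul_sq_le_of_hasDerivAt_riccati (W := fun x => x ^ ρ) hu
    (continuousOn_hardyLogPotential.mono hIci) (continuousOn_hardyLogRiccati.mono hIci)
    (continuousOn_id.rpow_const fun x hx => Or.inl (hR0.trans_le hx).ne')
    (fun x hx => (abs_hardyLogPotential_le (ρ := ρ) hR hx.le).trans (le_max_right _ _))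
    (fun x hx => (abs_hardyLogRiccati_le hR hx.le).trans (le_max_left _ _))
    (fun x hx => rpow_nonneg (hR0.trans hx).le ρ)
    (fun x hx => hasDerivAt_hardyLogRiccati_mul_rpow (hR.trans hx))
    (by simpa only [sq_abs] using hu2) (by simpa only [sq_abs] using hu'2)
  rw [hardyLogRiccati_mul_rpow hR0] at key
  simp only [sq_abs]
  calc _ ≤ _ := key
    _ ≤ _ := by gcongr
end

section
/- For every ε > 0 there exists a Lipschitz, compactly supported function v : (0,∞) → ℝ, not identically zero, such that ∫_0^∞ (1+ε)|v(t)|²/(4t²) dt > ∫_0^∞ |v'(t)|² dt. -/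
/-!
On `[η, 1]` the function `v t = √t` makes Hardy's inequality an equality pointwise:
`v' t ^ 2 = 1 / (4 t) = v t ^ 2 / (4 t ^ 2)`, and both integrals equal `log (1 / η) / 4`.
Cutting `√t` off linearly to `0` at `η / 2` and at `2` adds only `2 + 1` to `∫ v' ^ 2`, while
the weighted side gains `ε log (1 / η) / 4`; this wins once `ε log (1 / η) > 12`.
-/

open MeasureTheory Set Real

theorem intervalIntegral.integral_deriv_sq_congr_Ioo {f g : ℝ → ℝ} {a b : ℝ} (hab : a ≤ b)
    (h : EqOn f g (Ioo a b)) : ∫ x in a..b, deriv f x ^ 2 = ∫ x in a..b, deriv g x ^ 2 :=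
  integral_congr_Ioo_of_le hab fun _ hx => by rw [h.deriv isOpen_Ioo hx]

theorem LipschitzWith.integrable_deriv_sq {f : ℝ → ℝ} {K : NNReal} (hf : LipschitzWith K f)
    (hc : HasCompactSupport f) : Integrable fun x => deriv f x ^ 2 := by
  have hbound : ∀ x, ‖deriv f x ^ 2‖ ≤ (K : ℝ) ^ 2 := fun x => by
    rw [norm_pow]
    exact pow_le_pow_left₀ (norm_nonneg _) (norm_deriv_le_of_lipschitz hf) 2
  refine IntegrableOn.integrable_of_forall_notMem_eq_zero (s := tsupport f) ?_ fun x hx => ?_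
  · exact Measure.integrableOn_of_bounded hc.measure_lt_top.ne
      ((measurable_deriv f).pow_const 2).aestronglyMeasurable (ae_of_all _ hbound)
  · rw [deriv_of_notMem_tsupport hx, zero_pow two_ne_zero]

theorem Continuous.div_id_of_zero_notMem_tsupport {v : ℝ → ℝ} (hv : Continuous v)
    (h0 : 0 ∉ tsupport v) : Continuous fun t => v t / t := by
  refine continuous_iff_continuousAt.mpr fun t => ?_
  rcases eq_or_ne t 0 with rfl | ht
  · have hzero : (fun t => v t / t) =ᶠ[nhds 0] fun _ => 0 :=
      (notMem_tsupport_iff_eventuallyEq.mp h0).mono fun t ht => by simp [ht]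
    exact continuousAt_const.congr hzero.symm
  · exact hv.continuousAt.div continuousAt_id ht

theorem integrable_div_id_sq_of_zero_notMem_tsupport {v : ℝ → ℝ} (hv : Continuous v)
    (hc : HasCompactSupport v) (h0 : 0 ∉ tsupport v) : Integrable fun t => (v t / t) ^ 2 :=
  ((hv.div_id_of_zero_notMem_tsupport h0).pow 2).integrable_of_hasCompactSupport
    (hc.mono <| Function.support_subset_iff'.mpr fun t ht => by
      simp [Function.notMem_support.mp ht])

theorem Real.lipschitzOnWith_sqrt_Ici {η : ℝ} (hη : 0 < η) :
    LipschitzOnWith ‖1 / (2 * √η)‖₊ (√·) (Ici η) := by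
  refine (convex_Ici η).lipschitzOnWith_of_nnnorm_deriv_le
    (fun x hx => (hasDerivAt_sqrt (hη.trans_le hx).ne').differentiableAt) fun x hx => ?_
  have hx0 : 0 < x := hη.trans_le hx
  rw [(hasDerivAt_sqrt hx0.ne').deriv, ← NNReal.coe_le_coe, coe_nnnorm, coe_nnnorm,
    Real.norm_of_nonneg (by positivity), Real.norm_of_nonneg (by positivity)]
  gcongr
  exact hx

/-- `√t` on `[η, 1]`, joined linearly to `0` at `η / 2` and at `2`. -/
noncomputable def hardyTestFunction (η t : ℝ) : ℝ :=
  max 0 (min (min (2 / √η * (t - η / 2)) √(max t η)) (2 - t))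

namespace hardyTestFunction

variable {η t : ℝ}

theorem sqrt_le_ramp (hη : 0 < η) (ht : η ≤ t) : √t ≤ 2 / √η * (t - η / 2) := by
  have hsη : 0 < √η := sqrt_pos.mpr hη
  have hprod : √t * √η ≤ t := by
    calc √t * √η ≤ √t * √t := by gcongr
      _ = t := mul_self_sqrt (hη.le.trans ht)
  rw [div_mul_eq_mul_div, le_div_iff₀ hsη]
  linarith

theorem eq_zero_of_le_half (ht : t ≤ η / 2) : hardyTestFunction η t = 0 := by
  have hramp : 2 / √η * (t - η / 2) ≤ 0 :=
    mul_nonpos_of_nonneg_of_nonpos (by positivity) (by linarith)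
  exact max_eq_left ((min_le_left _ _).trans ((min_le_left _ _).trans hramp))

theorem eq_zero_of_two_le (ht : 2 ≤ t) : hardyTestFunction η t = 0 :=
  max_eq_left ((min_le_right _ _).trans (by linarith))

theorem eqOn_ramp (hη : 0 < η) (hη1 : η ≤ 1) :
    EqOn (hardyTestFunction η) (fun t => 2 / √η * (t - η / 2)) (Icc (η / 2) η) := by
  rintro t ⟨ht₁, ht₂⟩
  have hsη : 0 < √η := sqrt_pos.mpr hη
  have hramp_nonneg : 0 ≤ 2 / √η * (t - η / 2) := mul_nonneg (by positivity) (by linarith)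
  have hramp_le : 2 / √η * (t - η / 2) ≤ √η := by
    rw [div_mul_eq_mul_div, div_le_iff₀ hsη, mul_self_sqrt hη.le]
    linarith
  have hsη1 : √η ≤ 1 := sqrt_le_one.mpr hη1
  simp only [hardyTestFunction, max_eq_right ht₂, min_eq_left hramp_le,
    min_eq_left (show 2 / √η * (t - η / 2) ≤ 2 - t by linarith), max_eq_right hramp_nonneg]

theorem eqOn_sqrt (hη : 0 < η) : EqOn (hardyTestFunction η) (√·) (Icc η 1) := by
  rintro t ⟨ht₁, ht₂⟩
  have hst1 : √t ≤ 1 := sqrt_le_one.mpr ht₂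
  simp only [hardyTestFunction, max_eq_left ht₁, min_eq_right (sqrt_le_ramp hη ht₁),
    min_eq_left (show √t ≤ 2 - t by linarith), max_eq_right (sqrt_nonneg t)]

theorem eqOn_two_sub (hη : 0 < η) (hη1 : η ≤ 1) :
    EqOn (hardyTestFunction η) (fun t => 2 - t) (Icc 1 2) := by
  rintro t ⟨ht₁, ht₂⟩
  have hst1 : 1 ≤ √t := one_le_sqrt.mpr ht₁
  simp only [hardyTestFunction, max_eq_left (hη1.trans ht₁),
    min_eq_right (sqrt_le_ramp hη (hη1.trans ht₁)),
    min_eq_right (show 2 - t ≤ √t by linarith),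
    max_eq_right (show (0 : ℝ) ≤ 2 - t by linarith)]

theorem tsupport_subset : tsupport (hardyTestFunction η) ⊆ Icc (η / 2) 2 := by
  refine closure_minimal (Function.support_subset_iff'.mpr fun t ht => ?_) isClosed_Icc
  rcases not_and_or.mp ht with ht | ht
  · exact eq_zero_of_le_half (not_le.mp ht).le
  · exact eq_zero_of_two_le (not_le.mp ht).le

theorem lipschitzWith (hη : 0 < η) : ∃ K, LipschitzWith K (hardyTestFunction η) := by
  have hramp : LipschitzWith _ fun t => 2 / √η * (t - η / 2) :=
    (lipschitzWith_smul (2 / √η)).comp (LipschitzWith.id.sub (LipschitzWith.const _))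
  have hsqrt : LipschitzWith _ fun t => √(max t η) :=
    lipschitzOnWith_univ.mp <| (lipschitzOnWith_sqrt_Ici hη).comp
      (lipschitzOnWith_univ.mpr (LipschitzWith.id.max_const η)) fun t _ => le_max_right t η
  have hsub : LipschitzWith _ fun t : ℝ => 2 - t := (LipschitzWith.const 2).sub LipschitzWith.id
  exact ⟨_, ((hramp.min hsqrt).min hsub).const_max 0⟩

theorem hasCompactSupport : HasCompactSupport (hardyTestFunction η) :=
  isCompact_Icc.of_isClosed_subset (isClosed_tsupport _) tsupport_subset

theorem integral_deriv_sq (hη : 0 < η) (hη1 : η ≤ 1) :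
    ∫ t in Ioi 0, deriv (hardyTestFunction η) t ^ 2 = 3 + log (1 / η) / 4 := by
  set v := hardyTestFunction η
  obtain ⟨K, hK⟩ := lipschitzWith hη
  have hint (a b : ℝ) : IntervalIntegrable (fun t => deriv v t ^ 2) volume a b :=
    (hK.integrable_deriv_sq hasCompactSupport).intervalIntegrable
  have hvanish : ∀ t ∈ Ioi 0 \ Ioc 0 2, deriv v t ^ 2 = 0 := fun t ht => by
    have htsupp : t ∉ tsupport v := fun h => ht.2 ⟨ht.1, (tsupport_subset h).2⟩
    rw [deriv_of_notMem_tsupport htsupp, zero_pow two_ne_zero]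
  have h₁ : ∫ t in 0..η / 2, deriv v t ^ 2 = 0 := by
    rw [intervalIntegral.integral_deriv_sq_congr_Ioo (g := fun _ => 0) (by positivity)
      fun t ht => eq_zero_of_le_half ht.2.le]
    simp
  have h₂ : ∫ t in η / 2..η, deriv v t ^ 2 = 2 := by
    rw [intervalIntegral.integral_deriv_sq_congr_Ioo (by linarith)
      ((eqOn_ramp hη hη1).mono Ioo_subset_Icc_self)]
    simp only [deriv_const_mul_field', deriv_sub_const, deriv_id'', mul_one, div_pow,
      sq_sqrt hη.le, intervalIntegral.integral_const, smul_eq_mul]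
    field_simp
    ring
  have h₃ : ∫ t in η..1, deriv v t ^ 2 = log (1 / η) / 4 := by
    have hderiv : EqOn (fun t => deriv (√·) t ^ 2) (fun t => 4⁻¹ * t⁻¹) (uIcc η 1) := by
      intro t ht
      have ht0 : 0 < t := hη.trans_le (uIcc_of_le hη1 ▸ ht).1
      simp only [(hasDerivAt_sqrt ht0.ne').deriv, div_pow, mul_pow, sq_sqrt ht0.le]
      ring
    rw [intervalIntegral.integral_deriv_sq_congr_Ioo hη1
        ((eqOn_sqrt hη).mono Ioo_subset_Icc_self),
      intervalIntegral.integral_congr hderiv, intervalIntegral.integral_const_mul,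
      integral_inv (by rw [uIcc_of_le hη1]; exact fun h => hη.not_ge h.1)]
    ring
  have h₄ : ∫ t in (1 : ℝ)..2, deriv v t ^ 2 = 1 := by
    rw [intervalIntegral.integral_deriv_sq_congr_Ioo one_le_two
      ((eqOn_two_sub hη hη1).mono Ioo_subset_Icc_self)]
    norm_num
  rw [setIntegral_eq_of_subset_of_forall_sdiff_eq_zero measurableSet_Ioi Ioc_subset_Ioi_self
      hvanish, ← intervalIntegral.integral_of_le zero_le_two,
    ← intervalIntegral.integral_add_adjacent_intervals (hint 0 (η / 2)) (hint _ 2),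
    ← intervalIntegral.integral_add_adjacent_intervals (hint (η / 2) η) (hint _ 2),
    ← intervalIntegral.integral_add_adjacent_intervals (hint η 1) (hint _ 2), h₁, h₂, h₃, h₄]
  ring

theorem continuous (hη : 0 < η) : Continuous (hardyTestFunction η) :=
  (lipschitzWith hη).choose_spec.continuous

theorem tsupport_subset_Ioi (hη : 0 < η) : tsupport (hardyTestFunction η) ⊆ Ioi 0 :=
  fun _ ht => (half_pos hη).trans_le (tsupport_subset ht).1

theorem ne_zero (hη : 0 < η) (hη1 : η ≤ 1) : hardyTestFunction η ≠ 0 := fun h => by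
  simpa [h] using eqOn_sqrt hη ⟨hη1, le_rfl⟩

theorem log_le_integral_div_id_sq (hη : 0 < η) (hη1 : η ≤ 1) :
    log (1 / η) ≤ ∫ t in Ioi 0, (hardyTestFunction η t / t) ^ 2 := by
  have hint := integrable_div_id_sq_of_zero_notMem_tsupport (continuous hη) hasCompactSupport
    fun h => (mem_Ioi.mp (tsupport_subset_Ioi hη h)).false
  have hsqrt : EqOn (fun t => (hardyTestFunction η t / t) ^ 2) (fun t => t⁻¹) (uIcc η 1) := by
    intro t ht
    rw [uIcc_of_le hη1] at ht
    have ht0 : 0 < t := hη.trans_le ht.1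
    simp only [eqOn_sqrt hη ht, div_pow, sq_sqrt ht0.le]
    field_simp
  calc log (1 / η) = ∫ t in Ioc η 1, (hardyTestFunction η t / t) ^ 2 := by
        rw [← intervalIntegral.integral_of_le hη1, intervalIntegral.integral_congr hsqrt,
          integral_inv (by rw [uIcc_of_le hη1]; exact fun h => hη.not_ge h.1)]
    _ ≤ ∫ t in Ioi 0, (hardyTestFunction η t / t) ^ 2 :=
        setIntegral_mono_set hint.integrableOn (ae_of_all _ fun _ => sq_nonneg _)
          (Filter.Eventually.of_forall fun t ht => hη.trans ht.1)

end hardyTestFunction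

/-- Sharpness of the constant 1/4 in the one-dimensional Hardy inequality. -/
theorem hardy_constant_sharp (ε : ℝ) (hε : 0 < ε) :
    ∃ v : ℝ → ℝ, (∃ K : NNReal, LipschitzWith K v) ∧ HasCompactSupport v ∧
      tsupport v ⊆ Ioi 0 ∧ v ≠ 0 ∧
      (∫ t in Ioi (0:ℝ), (deriv v t)^2)
        < ∫ t in Ioi (0:ℝ), (1 + ε) * |v t|^2 / (4 * t^2) := by
  set η := exp (-(13 / ε))
  have hη : 0 < η := exp_pos _
  have hη1 : η ≤ 1 := exp_le_one_iff.mpr (neg_nonpos.mpr (by positivity))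
  have hlog : log (1 / η) = 13 / ε := by simp [η]
  refine ⟨hardyTestFunction η, hardyTestFunction.lipschitzWith hη,
    hardyTestFunction.hasCompactSupport, hardyTestFunction.tsupport_subset_Ioi hη,
    hardyTestFunction.ne_zero hη hη1, ?_⟩
  have hweight : (fun t => (1 + ε) * |hardyTestFunction η t| ^ 2 / (4 * t ^ 2)) =
      fun t => (1 + ε) / 4 * (hardyTestFunction η t / t) ^ 2 := by
    funext t
    rw [sq_abs]
    ring
  rw [hardyTestFunction.integral_deriv_sq hη hη1, hweight, integral_const_mul]
  calc 3 + log (1 / η) / 4 < (1 + ε) / 4 * log (1 / η) := by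
        rw [hlog]
        field_simp
        linarith
    _ ≤ (1 + ε) / 4 * ∫ t in Ioi 0, (hardyTestFunction η t / t) ^ 2 := by
        gcongr
        exact hardyTestFunction.log_le_integral_div_id_sq hη hη1
end

section
/- Let ρ ∈ ℝ, R ≥ 1 and ε > 0. Then there exists an infinite sequence {u_k} of functions in H¹_0((R,∞), r^ρ dr), pairwise orthonormal in L²((R,∞), r^ρ dr), such that for every k: ∫_R^∞ ((ρ-1)²/(4r²) + (1+ε)/(4r²(ln r)²)) |u_k(r)|² r^ρ dr > ∫_R^∞ |u_k'(r)|² r^ρ dr. -/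
/-!
Substitute `r = exp (exp s)` and `u r = r ^ ((1 - ρ) / 2) * √(log r) * Z (log (log r))`. The
weighted Dirichlet integral becomes `∫ ((ρ - 1)² / 4 · e^{2s} + 1/4) Z² + Z'² ds` (the cross
terms are an exact derivative), while the right-hand side becomes
`∫ ((ρ - 1)² / 4 · e^{2s} + (1 + ε) / 4) Z² ds`. So `u` violates the inequality as soon as
`∫ Z'² < ε / 4 · ∫ Z²`, and dilating a fixed bump to an interval of length `M` scales
`∫ Z'² / ∫ Z²` by `M⁻²`. Translates of one dilated bump by multiples of `M` give test
functions with disjoint supports; normalizing them gives the orthonormal sequence.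
-/

open MeasureTheory Set Real Function

noncomputable section

namespace ReverseHardy

def expExp (s : ℝ) : ℝ := exp (exp s)

lemma one_lt_expExp (s : ℝ) : 1 < expExp s := one_lt_exp_iff.mpr (exp_pos s)

lemma expExp_pos (s : ℝ) : 0 < expExp s := exp_pos _

lemma strictMono_expExp : StrictMono expExp := exp_strictMono.comp exp_strictMono

lemma continuous_expExp : Continuous expExp := continuous_exp.comp continuous_exp

lemma hasDerivAt_expExp (s : ℝ) : HasDerivAt expExp (expExp s * exp s) s :=
  (hasDerivAt_exp (exp s)).comp s (hasDerivAt_exp s)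

lemma log_expExp (s : ℝ) : log (expExp s) = exp s := log_exp _

lemma log_log_expExp (s : ℝ) : log (log (expExp s)) = s := by rw [log_expExp, log_exp]

lemma expExp_log_log {r : ℝ} (hr : 1 < r) : expExp (log (log r)) = r := by
  rw [expExp, exp_log (log_pos hr), exp_log (by linarith)]

lemma log_log_mem_Ioo_iff {r a b : ℝ} (hr : 1 < r) :
    log (log r) ∈ Ioo a b ↔ r ∈ Ioo (expExp a) (expExp b) := by
  conv_rhs => rw [← expExp_log_log hr]
  simp only [mem_Ioo, strictMono_expExp.lt_iff_lt]

lemma one_lt_of_mem_Icc_expExp {r a b : ℝ} (hr : r ∈ Icc (expExp a) (expExp b)) : 1 < r :=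
  (one_lt_expExp a).trans_le hr.1

lemma lt_expExp_self (s : ℝ) : s < expExp s := by
  linarith [add_one_le_exp s, add_one_le_exp (exp s), show expExp s = exp (exp s) from rfl]

theorem setIntegral_Ioi_eq_integral_expExp {R a b : ℝ} (hab : a ≤ b) (hRa : R < expExp a)
    {G : ℝ → ℝ} (hG : ContinuousOn G (Icc (expExp a) (expExp b)))
    (hG0 : ∀ r ∉ Icc (expExp a) (expExp b), G r = 0) :
    ∫ r in Ioi R, G r = ∫ s in a..b, expExp s * exp s * G (expExp s) := by
  have hsub : Icc (expExp a) (expExp b) ⊆ Ioi R := fun r hr => hRa.trans_le hr.1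
  rw [setIntegral_eq_of_subset_of_forall_sdiff_eq_zero measurableSet_Ioi hsub
      (fun r hr => hG0 r hr.2), integral_Icc_eq_integral_Ioc,
    ← intervalIntegral.integral_of_le (strictMono_expExp.monotone hab),
    ← intervalIntegral.integral_deriv_smul_comp' (fun s _ => hasDerivAt_expExp s)
      ((continuous_expExp.mul continuous_exp).continuousOn)
      (hG.mono (by rw [uIcc_of_le hab]; exact strictMono_expExp.monotone.image_Icc_subset))]
  rfl

-- The cut-off at `r = 1` avoids the junk values of `log` and `rpow`; it does not break smoothness
-- because for `Z` supported in `(a, b)` the formula vanishes on `(1, exp (exp a))`.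
def testFunction (ρ : ℝ) (Z : ℝ → ℝ) (r : ℝ) : ℝ :=
  if 1 < r then r ^ ((1 - ρ) / 2) * √(log r) * Z (log (log r)) else 0

section testFunction

variable {ρ : ℝ} {Z : ℝ → ℝ} {a b : ℝ}

lemma testFunction_eq_zero (hZ : support Z ⊆ Ioo a b) {r : ℝ}
    (hr : r ∉ Ioo (expExp a) (expExp b)) : testFunction ρ Z r = 0 := by
  unfold testFunction
  split_ifs with h1
  · rw [notMem_support.mp (fun h => hr ((log_log_mem_Ioo_iff h1).mp (hZ h))), mul_zero]
  · rfl

lemma support_testFunction_subset (hZ : support Z ⊆ Ioo a b) :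
    support (testFunction ρ Z) ⊆ Ioo (expExp a) (expExp b) :=
  fun _ hr => by_contra fun h => hr (testFunction_eq_zero hZ h)

lemma testFunction_eventuallyEq_zero (hZ : support Z ⊆ Ioo a b) {r : ℝ}
    (hr : r ∉ Icc (expExp a) (expExp b)) : testFunction ρ Z =ᶠ[nhds r] 0 := by
  filter_upwards [isClosed_Icc.isOpen_compl.mem_nhds hr] with x hx
  exact testFunction_eq_zero hZ (fun h => hx (Ioo_subset_Icc_self h))

lemma deriv_testFunction_eq_zero (hZ : support Z ⊆ Ioo a b) {r : ℝ}
    (hr : r ∉ Icc (expExp a) (expExp b)) : deriv (testFunction ρ Z) r = 0 := by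
  rw [(testFunction_eventuallyEq_zero hZ hr).deriv_eq, Pi.zero_def, deriv_const]

lemma testFunction_eventuallyEq {r : ℝ} (hr : 1 < r) :
    testFunction ρ Z =ᶠ[nhds r] fun x => x ^ ((1 - ρ) / 2) * √(log x) * Z (log (log x)) := by
  filter_upwards [Ioi_mem_nhds hr] with x hx
  exact if_pos hx

lemma contDiff_testFunction (hZ : ContDiff ℝ 1 Z) (hsupp : support Z ⊆ Ioo a b) :
    ContDiff ℝ 1 (testFunction ρ Z) := by
  refine contDiff_iff_contDiffAt.mpr fun r => ?_
  rcases lt_or_ge 1 r with hr | hr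
  · have hr0 : r ≠ 0 := by positivity
    have hlog : ContDiffAt ℝ 1 log r := contDiffAt_log.mpr hr0
    refine ContDiffAt.congr_of_eventuallyEq ?_ (testFunction_eventuallyEq hr)
    exact ((contDiffAt_id.rpow_const_of_ne hr0).mul (hlog.sqrt (log_pos hr).ne')).mul
      (hZ.contDiffAt.comp r (hlog.log (log_pos hr).ne'))
  · exact contDiffAt_const.congr_of_eventuallyEq
      (testFunction_eventuallyEq_zero hsupp fun h => (one_lt_of_mem_Icc_expExp h).not_ge hr)

lemma hasDerivAt_testFunction (hZ : Differentiable ℝ Z) {r : ℝ} (hr : 1 < r) :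
    HasDerivAt (testFunction ρ Z)
      (r ^ ((1 - ρ) / 2) / (r * √(log r)) *
        ((1 - ρ) / 2 * log r * Z (log (log r)) + Z (log (log r)) / 2
          + deriv Z (log (log r)))) r := by
  have hr0 : r ≠ 0 := by positivity
  have hL : 0 < log r := log_pos hr
  have h1 := hasDerivAt_rpow_const (p := (1 - ρ) / 2) (Or.inl hr0)
  have h2 := (hasDerivAt_sqrt hL.ne').comp r (hasDerivAt_log hr0)
  have h3 := (hZ _).hasDerivAt.comp r ((hasDerivAt_log hL.ne').comp r (hasDerivAt_log hr0))
  refine (((h1.mul h2).mul h3).congr_of_eventuallyEq (testFunction_eventuallyEq hr)).congr_deriv ?_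
  simp only [comp_apply, Pi.mul_apply]
  rw [rpow_sub_one hr0]
  field_simp
  have hs := sq_sqrt hL.le
  generalize log (log r) = ℓ
  generalize √(log r) = S at hs ⊢
  rw [← hs]
  ring

lemma tsupport_testFunction_subset (hZ : support Z ⊆ Ioo a b) :
    tsupport (testFunction ρ Z) ⊆ Icc (expExp a) (expExp b) :=
  closure_minimal ((support_testFunction_subset hZ).trans Ioo_subset_Icc_self) isClosed_Icc

lemma hasCompactSupport_testFunction (hZ : support Z ⊆ Ioo a b) :
    HasCompactSupport (testFunction ρ Z) :=
  isCompact_Icc.of_isClosed_subset (isClosed_tsupport _) (tsupport_testFunction_subset hZ)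

lemma exists_lipschitzWith_testFunction (hZ : ContDiff ℝ 1 Z) (hsupp : support Z ⊆ Ioo a b) :
    ∃ K, LipschitzWith K (testFunction ρ Z) :=
  (contDiff_testFunction hZ hsupp).lipschitzWith_of_hasCompactSupport
    (hasCompactSupport_testFunction hsupp) one_ne_zero

end testFunction

lemma rpow_sq_mul_rpow {r : ℝ} (hr : 0 < r) (ρ : ℝ) :
    (r ^ ((1 - ρ) / 2)) ^ 2 * r ^ ρ = r := by
  rw [← rpow_natCast, ← rpow_mul hr.le, ← rpow_add hr]
  norm_num

section substitution

variable {ρ : ℝ} {Z : ℝ → ℝ}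

lemma testFunction_expExp (s : ℝ) :
    testFunction ρ Z (expExp s) = expExp s ^ ((1 - ρ) / 2) * √(exp s) * Z s := by
  rw [testFunction, if_pos (one_lt_expExp s), log_expExp, log_exp]

lemma expExp_mul_testFunction_sq (s : ℝ) :
    expExp s * exp s * (testFunction ρ Z (expExp s) * testFunction ρ Z (expExp s) * expExp s ^ ρ)
      = (expExp s * exp s) ^ 2 * Z s ^ 2 := by
  rw [testFunction_expExp]
  calc _ = expExp s * exp s * ((expExp s ^ ((1 - ρ) / 2)) ^ 2 * expExp s ^ ρ)
        * √(exp s) ^ 2 * Z s ^ 2 := by ring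
    _ = _ := by rw [rpow_sq_mul_rpow (expExp_pos s), sq_sqrt (exp_pos s).le]; ring

lemma expExp_mul_hardyWeight_testFunction_sq (ε s : ℝ) :
    expExp s * exp s * (((ρ - 1) ^ 2 / (4 * expExp s ^ 2)
        + (1 + ε) / (4 * expExp s ^ 2 * log (expExp s) ^ 2))
        * |testFunction ρ Z (expExp s)| ^ 2 * expExp s ^ ρ)
      = ((ρ - 1) ^ 2 / 4 * exp s ^ 2 + (1 + ε) / 4) * Z s ^ 2 := by
  have hr := expExp_pos s
  rw [sq_abs, testFunction_expExp, log_expExp]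
  calc _ = expExp s * exp s * ((expExp s ^ ((1 - ρ) / 2)) ^ 2 * expExp s ^ ρ) * √(exp s) ^ 2
        * ((ρ - 1) ^ 2 / (4 * expExp s ^ 2) + (1 + ε) / (4 * expExp s ^ 2 * exp s ^ 2))
        * Z s ^ 2 := by ring
    _ = _ := by
      rw [rpow_sq_mul_rpow hr, sq_sqrt (exp_pos s).le]
      field_simp

lemma expExp_mul_deriv_testFunction_sq (hZ : Differentiable ℝ Z) (s : ℝ) :
    expExp s * exp s * (|deriv (testFunction ρ Z) (expExp s)| ^ 2 * expExp s ^ ρ)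
      = ((1 - ρ) / 2 * exp s * Z s + Z s / 2 + deriv Z s) ^ 2 := by
  have hr := expExp_pos s
  rw [(hasDerivAt_testFunction hZ (one_lt_expExp s)).deriv, log_log_expExp, log_expExp, sq_abs]
  calc _ = expExp s * exp s * ((expExp s ^ ((1 - ρ) / 2)) ^ 2 * expExp s ^ ρ)
        / (expExp s ^ 2 * √(exp s) ^ 2)
        * ((1 - ρ) / 2 * exp s * Z s + Z s / 2 + deriv Z s) ^ 2 := by ring
    _ = _ := by
      rw [rpow_sq_mul_rpow hr, sq_sqrt (exp_pos s).le]
      field_simp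

end substitution

lemma integral_sq_add_deriv_sq {Z : ℝ → ℝ} (hZ : ContDiff ℝ 1 Z) {a b : ℝ} (ha : Z a = 0)
    (hb : Z b = 0) (A : ℝ) :
    ∫ s in a..b, (A * exp s * Z s + Z s / 2 + deriv Z s) ^ 2
      = ∫ s in a..b, ((A ^ 2 * exp s ^ 2 + 1 / 4) * Z s ^ 2 + deriv Z s ^ 2) := by
  have hZ' := hZ.continuous_deriv le_rfl
  have hZc := hZ.continuous
  -- the cross terms form the derivative of `(A e^s + 1/2) Z²`, which vanishes at both ends
  have hcross : ∀ s, HasDerivAt (fun s => (A * exp s + 1 / 2) * Z s ^ 2)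
      ((A * exp s * Z s + Z s / 2 + deriv Z s) ^ 2
        - ((A ^ 2 * exp s ^ 2 + 1 / 4) * Z s ^ 2 + deriv Z s ^ 2)) s := fun s => by
    refine ((((hasDerivAt_exp s).const_mul A).add_const (1 / 2)).fun_mul
      (((hZ.differentiable one_ne_zero) s).hasDerivAt.fun_pow 2)).congr_deriv ?_
    push_cast
    ring
  have hint := intervalIntegral.integral_eq_sub_of_hasDerivAt (fun s _ => hcross s)
    (Continuous.intervalIntegrable (by fun_prop) a b)
  rw [intervalIntegral.integral_sub (Continuous.intervalIntegrable (by fun_prop) a b)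
    (Continuous.intervalIntegrable (by fun_prop) a b)] at hint
  simp only [ha, hb] at hint
  linarith

section integrals

variable {ρ : ℝ} {Z : ℝ → ℝ} {a b R : ℝ}

lemma continuousOn_rpow_const_Icc_expExp (ρ : ℝ) :
    ContinuousOn (fun r : ℝ => r ^ ρ) (Icc (expExp a) (expExp b)) :=
  continuousOn_id.rpow_const fun _ hr =>
    Or.inl (zero_lt_one.trans (one_lt_of_mem_Icc_expExp hr)).ne'

lemma integral_deriv_testFunction_sq (hZ : ContDiff ℝ 1 Z) (hsupp : support Z ⊆ Ioo a b)
    (hab : a ≤ b) (hRa : R < expExp a) :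
    ∫ r in Ioi R, |deriv (testFunction ρ Z) r| ^ 2 * r ^ ρ
      = ∫ s in a..b, ((1 - ρ) / 2 * exp s * Z s + Z s / 2 + deriv Z s) ^ 2 := by
  rw [setIntegral_Ioi_eq_integral_expExp hab hRa]
  · exact intervalIntegral.integral_congr fun s _ =>
      expExp_mul_deriv_testFunction_sq (hZ.differentiable one_ne_zero) s
  · exact (((contDiff_testFunction hZ hsupp).continuous_deriv le_rfl).abs.pow 2).continuousOn.mul
      (continuousOn_rpow_const_Icc_expExp ρ)
  · intro r hr
    simp [deriv_testFunction_eq_zero hsupp hr]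

lemma integral_hardyWeight_testFunction_sq (hZ : ContDiff ℝ 1 Z) (hsupp : support Z ⊆ Ioo a b)
    (hab : a ≤ b) (hRa : R < expExp a) (ε : ℝ) :
    ∫ r in Ioi R, ((ρ - 1) ^ 2 / (4 * r ^ 2) + (1 + ε) / (4 * r ^ 2 * log r ^ 2))
        * |testFunction ρ Z r| ^ 2 * r ^ ρ
      = ∫ s in a..b, ((ρ - 1) ^ 2 / 4 * exp s ^ 2 + (1 + ε) / 4) * Z s ^ 2 := by
  rw [setIntegral_Ioi_eq_integral_expExp hab hRa]
  · exact intervalIntegral.integral_congr fun s _ => expExp_mul_hardyWeight_testFunction_sq ε s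
  · have hV := (contDiff_testFunction (ρ := ρ) hZ hsupp).continuous
    refine ((ContinuousOn.mul ?_ (hV.abs.pow 2).continuousOn).mul
      (continuousOn_rpow_const_Icc_expExp ρ))
    have h1 : ∀ r ∈ Icc (expExp a) (expExp b), 1 < r := fun _ hr => one_lt_of_mem_Icc_expExp hr
    fun_prop (disch := intro r hr; have := h1 r hr; have := log_pos this; positivity)
  · intro r hr
    simp [testFunction_eq_zero hsupp (fun h => hr (Ioo_subset_Icc_self h))]

lemma integral_testFunction_mul_self (hZ : ContDiff ℝ 1 Z) (hsupp : support Z ⊆ Ioo a b)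
    (hab : a ≤ b) (hRa : R < expExp a) :
    ∫ r in Ioi R, testFunction ρ Z r * testFunction ρ Z r * r ^ ρ
      = ∫ s in a..b, (expExp s * exp s) ^ 2 * Z s ^ 2 := by
  have hV := (contDiff_testFunction (ρ := ρ) hZ hsupp).continuous
  rw [setIntegral_Ioi_eq_integral_expExp hab hRa]
  · exact intervalIntegral.integral_congr fun s _ => expExp_mul_testFunction_sq s
  · exact (hV.mul hV).continuousOn.mul (continuousOn_rpow_const_Icc_expExp ρ)
  · intro r hr
    simp [testFunction_eq_zero hsupp (fun h => hr (Ioo_subset_Icc_self h))]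

lemma integral_deriv_testFunction_sq_lt (hZ : ContDiff ℝ 1 Z) (hsupp : support Z ⊆ Ioo a b)
    (hab : a ≤ b) (hRa : R < expExp a) {ε : ℝ}
    (hgap : ∫ s in a..b, deriv Z s ^ 2 < ε / 4 * ∫ s in a..b, Z s ^ 2) :
    ∫ r in Ioi R, |deriv (testFunction ρ Z) r| ^ 2 * r ^ ρ
      < ∫ r in Ioi R, ((ρ - 1) ^ 2 / (4 * r ^ 2) + (1 + ε) / (4 * r ^ 2 * log r ^ 2))
          * |testFunction ρ Z r| ^ 2 * r ^ ρ := by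
  have ha : Z a = 0 := notMem_support.mp fun h => (hsupp h).1.false
  have hb : Z b = 0 := notMem_support.mp fun h => (hsupp h).2.false
  have hZc := hZ.continuous
  have hZ' := hZ.continuous_deriv le_rfl
  rw [integral_deriv_testFunction_sq hZ hsupp hab hRa, integral_sq_add_deriv_sq hZ ha hb,
    integral_hardyWeight_testFunction_sq hZ hsupp hab hRa]
  have hdiff : (∫ s in a..b, ((ρ - 1) ^ 2 / 4 * exp s ^ 2 + (1 + ε) / 4) * Z s ^ 2)
      - ∫ s in a..b, ((((1 - ρ) / 2) ^ 2 * exp s ^ 2 + 1 / 4) * Z s ^ 2 + deriv Z s ^ 2)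
      = ε / 4 * (∫ s in a..b, Z s ^ 2) - ∫ s in a..b, deriv Z s ^ 2 := by
    rw [← intervalIntegral.integral_sub, ← intervalIntegral.integral_const_mul,
      ← intervalIntegral.integral_sub]
    · exact intervalIntegral.integral_congr fun s _ => by ring
    all_goals exact Continuous.intervalIntegrable (by fun_prop) a b
  linarith

end integrals

lemma testFunction_mul_testFunction_eq_zero {ρ : ℝ} {Z₁ Z₂ : ℝ → ℝ} {a₁ b₁ a₂ b₂ : ℝ}
    (h₁ : support Z₁ ⊆ Ioo a₁ b₁) (h₂ : support Z₂ ⊆ Ioo a₂ b₂) (h : b₁ ≤ a₂) (r : ℝ) :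
    testFunction ρ Z₁ r * testFunction ρ Z₂ r = 0 := by
  by_contra hne
  obtain ⟨hr₁, hr₂⟩ := mul_ne_zero_iff.mp hne
  linarith [(support_testFunction_subset h₁ hr₁).2, (support_testFunction_subset h₂ hr₂).1,
    strictMono_expExp.monotone h]

lemma testFunction_mul_testFunction_eq_zero_of_ne {ρ R M : ℝ} (hM : 0 < M) {Z : ℕ → ℝ → ℝ}
    (hsupp : ∀ k : ℕ, support (Z k) ⊆ Ioo (R + k * M) (R + k * M + M)) {j k : ℕ} (hjk : j ≠ k)
    (r : ℝ) : testFunction ρ (Z j) r * testFunction ρ (Z k) r = 0 := by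
  have hdisj : ∀ {i l : ℕ}, i < l → R + i * M + M ≤ R + l * M := fun {i l} h => by
    have : (i : ℝ) + 1 ≤ l := by exact_mod_cast h
    nlinarith
  rcases lt_or_gt_of_ne hjk with h | h
  · exact testFunction_mul_testFunction_eq_zero (hsupp j) (hsupp k) (hdisj h) r
  · rw [mul_comm]
    exact testFunction_mul_testFunction_eq_zero (hsupp k) (hsupp j) (hdisj h) r

def bump : ContDiffBump (1 / 2 : ℝ) := ⟨1 / 4, 1 / 2, by norm_num, by norm_num⟩

lemma support_bump : support bump = Ioo 0 1 := by
  rw [bump.support_eq, Real.ball_eq_Ioo]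
  norm_num [bump]

lemma bump_pos {t : ℝ} (ht : t ∈ Ioo 0 1) : 0 < bump t :=
  bump.nonneg.lt_of_ne (Ne.symm (by rwa [← support_bump] at ht))

lemma integral_comp_sub_div_eq {a M : ℝ} (hM : M ≠ 0) (f : ℝ → ℝ) :
    ∫ s in a..a + M, f ((s - a) / M) = M * ∫ t in 0..1, f t := by
  rw [intervalIntegral.integral_comp_sub_right (fun x => f (x / M)),
    intervalIntegral.integral_comp_div _ hM]
  simp [hM]

def profile (c a M : ℝ) (s : ℝ) : ℝ := c * bump ((s - a) / M)

section profile

variable {c a M : ℝ}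

lemma contDiff_profile : ContDiff ℝ 1 (profile c a M) := by
  have := bump.contDiff (n := 1)
  unfold profile
  fun_prop

lemma support_profile_subset (hM : 0 < M) : support (profile c a M) ⊆ Ioo a (a + M) := by
  intro s hs
  obtain ⟨h0, h1⟩ : (s - a) / M ∈ Ioo 0 1 := by
    rw [← support_bump]
    exact right_ne_zero_of_mul hs
  rw [div_pos_iff_of_pos_right hM] at h0
  rw [div_lt_one hM] at h1
  constructor <;> linarith

lemma profile_pos (hc : 0 < c) (hM : 0 < M) {s : ℝ} (hs : s ∈ Ioo a (a + M)) :
    0 < profile c a M s := by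
  refine mul_pos hc (bump_pos ⟨div_pos (by linarith [hs.1]) hM, ?_⟩)
  rw [div_lt_one hM]
  linarith [hs.2]

lemma deriv_profile (s : ℝ) :
    deriv (profile c a M) s = c * (deriv bump ((s - a) / M) / M) := by
  have hlin : HasDerivAt (fun s => (s - a) / M) (1 / M) s :=
    ((hasDerivAt_id s).sub_const a).div_const M
  have := ((bump.contDiff (n := 1).differentiable one_ne_zero _).hasDerivAt.comp s hlin).const_mul c
  rw [show profile c a M = fun y => c * (bump ∘ fun s => (s - a) / M) y from rfl, this.deriv]
  ring

lemma integral_profile_sq (hM : M ≠ 0) :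
    ∫ s in a..a + M, profile c a M s ^ 2 = c ^ 2 * M * ∫ t in 0..1, bump t ^ 2 := by
  simp only [profile, mul_pow]
  rw [intervalIntegral.integral_const_mul, integral_comp_sub_div_eq hM (fun t => bump t ^ 2)]
  ring

lemma integral_deriv_profile_sq (hM : M ≠ 0) :
    ∫ s in a..a + M, deriv (profile c a M) s ^ 2
      = c ^ 2 / M * ∫ t in 0..1, deriv bump t ^ 2 := by
  simp only [deriv_profile, mul_pow, div_pow]
  rw [intervalIntegral.integral_const_mul, intervalIntegral.integral_div,
    integral_comp_sub_div_eq hM (fun t => deriv bump t ^ 2)]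
  field_simp

end profile

lemma exists_profile {ε : ℝ} (hε : 0 < ε) :
    ∃ M > 0, ∀ a, ∃ Z : ℝ → ℝ, ContDiff ℝ 1 Z ∧ support Z ⊆ Ioo a (a + M) ∧
      ∫ s in a..a + M, deriv Z s ^ 2 < ε / 4 * ∫ s in a..a + M, Z s ^ 2 ∧
      ∫ s in a..a + M, (expExp s * exp s) ^ 2 * Z s ^ 2 = 1 := by
  set I := ∫ t in 0..1, bump t ^ 2
  set C := ∫ t in 0..1, deriv bump t ^ 2
  have hbump := bump.contDiff (n := 1).continuous
  have hI : 0 < I := intervalIntegral.intervalIntegral_pos_of_pos_on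
    (Continuous.intervalIntegrable (by fun_prop) 0 1) (fun t ht => pow_pos (bump_pos ht) 2) one_pos
  have hC : 0 ≤ C := intervalIntegral.integral_nonneg zero_le_one fun t _ => sq_nonneg _
  -- dilating the bump by `M` multiplies `∫ Z'² / ∫ Z²` by `M⁻²`
  set M := 1 + 4 * C / (ε * I)
  have hM : 0 < M := by positivity
  have hCM : C < ε / 4 * M * I * M := by
    have h4C : 4 * C < ε * I * M := by
      rw [← div_lt_iff₀' (by positivity)]
      linarith
    have hM1 : 1 ≤ M := le_add_of_nonneg_right (by positivity)
    nlinarith [le_mul_of_one_le_right (by positivity : 0 ≤ ε * I * M) hM1]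
  refine ⟨M, hM, fun a => ?_⟩
  set N := ∫ s in a..a + M, (expExp s * exp s) ^ 2 * profile 1 a M s ^ 2
  have hN : 0 < N := intervalIntegral.intervalIntegral_pos_of_pos_on
    (Continuous.intervalIntegrable (by
      have := (contDiff_profile (c := 1) (a := a) (M := M)).continuous
      have := continuous_expExp
      fun_prop) _ _)
    (fun s hs => by have := profile_pos one_pos hM hs; have := expExp_pos s; positivity)
    (by linarith)
  set c := (√N)⁻¹
  refine ⟨profile c a M, contDiff_profile, support_profile_subset hM, ?_, ?_⟩
  · rw [integral_deriv_profile_sq hM.ne', integral_profile_sq hM.ne']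
    calc c ^ 2 / M * C < c ^ 2 / M * (ε / 4 * M * I * M) := by gcongr
      _ = ε / 4 * (c ^ 2 * M * I) := by field_simp
  · have : ∀ s, profile c a M s = c * profile 1 a M s := fun s => by simp [profile]
    simp only [this, mul_pow c, mul_left_comm _ (c ^ 2)]
    rw [intervalIntegral.integral_const_mul, inv_pow, sq_sqrt hN.le, inv_mul_cancel₀ hN.ne']

end ReverseHardy

open ReverseHardy

theorem reverse_hardy_orthonormal_sequence_general (ρ : ℝ) (R : ℝ)
    (ε : ℝ) (hε : 0 < ε) :
    ∃ u : ℕ → ℝ → ℝ,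
      (∀ k, ∃ K : NNReal, LipschitzWith K (u k)) ∧
      (∀ k, HasCompactSupport (u k)) ∧
      (∀ k, tsupport (u k) ⊆ Ioi R) ∧
      (∀ j k, (∫ r in Ioi R, u j r * u k r * r ^ ρ) = if j = k then 1 else 0) ∧
      (∀ k, (∫ r in Ioi R, |deriv (u k) r|^2 * r ^ ρ)
        < ∫ r in Ioi R,
            ((ρ - 1)^2 / (4 * r^2) + (1 + ε) / (4 * r^2 * (Real.log r)^2))
              * |u k r|^2 * r ^ ρ) := by
  obtain ⟨M, hM, hprofile⟩ := exists_profile hε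
  choose Z hZ hsupp hgap hnorm using fun k : ℕ => hprofile (R + k * M)
  have hab : ∀ k : ℕ, R + k * M ≤ R + k * M + M := fun k => by linarith
  have hRa : ∀ k : ℕ, R < expExp (R + k * M) := fun k =>
    (lt_expExp_self R).trans_le
      (strictMono_expExp.monotone (le_add_of_nonneg_right (by positivity)))
  refine ⟨fun k => testFunction ρ (Z k),
    fun k => exists_lipschitzWith_testFunction (hZ k) (hsupp k),
    fun k => hasCompactSupport_testFunction (hsupp k),
    fun k => (tsupport_testFunction_subset (hsupp k)).trans fun r hr => (hRa k).trans_le hr.1,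
    fun j k => ?_,
    fun k => integral_deriv_testFunction_sq_lt (hZ k) (hsupp k) (hab k) (hRa k) (hgap k)⟩
  split_ifs with hjk
  · subst hjk
    rw [integral_testFunction_mul_self (hZ j) (hsupp j) (hab j) (hRa j), hnorm j]
  · simp [testFunction_mul_testFunction_eq_zero_of_ne hM hsupp hjk]

/-- Infinitely many orthonormal counterexamples to any enlargement of the
logarithmic constant in the weighted Hardy inequality. -/
theorem reverse_hardy_orthonormal_sequence (ρ : ℝ) (R : ℝ) (hR : 1 ≤ R)
    (ε : ℝ) (hε : 0 < ε) :
    ∃ u : ℕ → ℝ → ℝ,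
      (∀ k, ∃ K : NNReal, LipschitzWith K (u k)) ∧
      (∀ k, HasCompactSupport (u k)) ∧
      (∀ k, tsupport (u k) ⊆ Ioi R) ∧
      (∀ j k, (∫ r in Ioi R, u j r * u k r * r ^ ρ) = if j = k then 1 else 0) ∧
      (∀ k, (∫ r in Ioi R, |deriv (u k) r|^2 * r ^ ρ)
        < ∫ r in Ioi R,
            ((ρ - 1)^2 / (4 * r^2) + (1 + ε) / (4 * r^2 * (Real.log r)^2))
              * |u k r|^2 * r ^ ρ) :=
  reverse_hardy_orthonormal_sequence_general ρ R ε hε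
end
end

section
/- For every α > 0 and every u ∈ C_0^∞(0,∞): ∫_0^∞ r^{α-2} sin(r^α) |u(r)|² dr ≤ (4/α) ∫_0^∞ |u'(r)|² dr. -/
open MeasureTheory Set Real

lemma gamma_integrable {p c : ℝ} (hp : 0 < p) (hc : 0 < c) :
    IntegrableOn (fun l : ℝ => l ^ (p-1) * Real.exp (-(c*l))) (Ioi 0) := by
  have h := Real.GammaIntegral_convergent hp
  have h2 : IntegrableOn (fun x : ℝ => Real.exp (-(c*x)) * (c*x) ^ (p-1)) (Ioi 0) := by
    have := (integrableOn_Ioi_comp_mul_left_iff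
      (fun x : ℝ => Real.exp (-x) * x ^ (p-1)) 0 hc).2 (by simpa using h)
    simpa using this
  have h3 : IntegrableOn (fun x : ℝ =>
      ((c : ℝ) ^ (p-1))⁻¹ * (Real.exp (-(c*x)) * (c*x) ^ (p-1))) (Ioi 0) := h2.const_mul _
  apply IntegrableOn.congr_fun h3 ?_ measurableSet_Ioi
  intro x hx
  have hx0 : (0:ℝ) < x := hx
  simp only []
  rw [Real.mul_rpow hc.le hx0.le]
  have : (c:ℝ) ^ (p-1) ≠ 0 := (Real.rpow_pos_of_pos hc _).ne'
  field_simp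

lemma gamma_value {p c : ℝ} (hp : 0 < p) (hc : 0 < c) :
    ∫ l in Ioi (0:ℝ), l ^ (p-1) * Real.exp (-(c*l)) = Real.Gamma p * c ^ (-p) := by
  rw [Real.integral_rpow_mul_exp_neg_mul_Ioi hp hc, one_div, ← Real.rpow_neg_one,
    ← Real.rpow_mul hc.le, neg_one_mul, mul_comm]

noncomputable def oscKer (p T l : ℝ) : ℝ :=
  (l ^ (p-1) / (1 + l^2)) * (Real.exp (-(T*l)) * (Real.cos T + l * Real.sin T))

lemma oscKer_abs_le {p T : ℝ} {l : ℝ} (hl : 0 < l) :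
    |oscKer p T l| ≤ l ^ (p-1) * Real.exp (-(T*l)) := by
  have h1 : (0:ℝ) < 1 + l^2 := by positivity
  have hnum : |Real.cos T + l * Real.sin T| ≤ 1 + l^2 := by
    rw [abs_le]
    constructor <;>
      nlinarith [Real.sin_sq_add_cos_sq T, sq_nonneg (l * Real.cos T - Real.sin T),
        sq_nonneg (Real.cos T + l * Real.sin T - 1), sq_nonneg (Real.cos T + l * Real.sin T + 1)]
  have hrp : (0:ℝ) ≤ l ^ (p-1) := (Real.rpow_pos_of_pos hl _).le
  have he : (0:ℝ) < Real.exp (-(T*l)) := Real.exp_pos _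
  rw [oscKer, abs_mul, abs_mul, abs_of_nonneg (by positivity : (0:ℝ) ≤ l ^ (p-1) / (1+l^2)),
    abs_of_pos he]
  calc l ^ (p-1) / (1+l^2) * (Real.exp (-(T*l)) * |Real.cos T + l * Real.sin T|)
      ≤ l ^ (p-1) / (1+l^2) * (Real.exp (-(T*l)) * (1 + l^2)) := by
        apply mul_le_mul_of_nonneg_left (by apply mul_le_mul_of_nonneg_left hnum he.le)
        positivity
    _ = l ^ (p-1) * Real.exp (-(T*l)) := by field_simp

lemma oscKer_meas (p T : ℝ) :
    AEStronglyMeasurable (oscKer p T) (volume.restrict (Ioi 0)) := by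
  apply Measurable.aestronglyMeasurable
  unfold oscKer
  fun_prop

lemma oscKer_integrable {p T : ℝ} (hp : 0 < p) (hT : 0 < T) :
    IntegrableOn (oscKer p T) (Ioi 0) := by
  apply Integrable.mono' (gamma_integrable hp hT) (oscKer_meas p T)
  filter_upwards [ae_restrict_mem measurableSet_Ioi] with l hl
  simpa [Real.norm_eq_abs] using oscKer_abs_le (p := p) (T := T) hl

lemma oscKer_hasDerivAt (p : ℝ) {l : ℝ} (hl : 0 < l) (x : ℝ) :
    HasDerivAt (fun T => oscKer p T l)
      (-(l ^ (p-1) * Real.exp (-(x*l)) * Real.sin x)) x := by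
  have h1 : HasDerivAt (fun T : ℝ => -(T*l)) (-l) x := by
    exact (hasDerivAt_mul_const l).neg
  have h2 := h1.exp
  have h3 : HasDerivAt (fun T : ℝ => Real.cos T + l * Real.sin T)
      (-Real.sin x + l * Real.cos x) x :=
    (Real.hasDerivAt_cos x).add ((Real.hasDerivAt_sin x).const_mul l)
  have h4 := (h2.mul h3).const_mul (l ^ (p-1) / (1 + l^2))
  refine h4.congr_deriv ?_
  have hq : (1:ℝ) + l^2 ≠ 0 := by positivity
  field_simp
  ring

noncomputable def oscF (p T : ℝ) : ℝ := ∫ l in Ioi (0:ℝ), oscKer p T l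

lemma oscF_hasDerivAt {p T : ℝ} (hp : 0 < p) (hT : 0 < T) :
    HasDerivAt (oscF p) (-(Real.Gamma p * T ^ (-p) * Real.sin T)) T := by
  have key := hasDerivAt_integral_of_dominated_loc_of_deriv_le
    (μ := volume.restrict (Ioi 0)) (x₀ := T)
    (F := fun T l => oscKer p T l)
    (F' := fun T l => -(l ^ (p-1) * Real.exp (-(T*l)) * Real.sin T))
    (bound := fun l => l ^ (p-1) * Real.exp (-((T/2)*l)))
    (Metric.ball_mem_nhds T (half_pos hT))
    (Filter.Eventually.of_forall fun x => oscKer_meas p x)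
    (oscKer_integrable hp hT)
    (by apply Measurable.aestronglyMeasurable; fun_prop)
    ?_ (gamma_integrable hp (half_pos hT)) ?_
  · have h2 : (∫ l in Ioi (0:ℝ), -(l ^ (p-1) * Real.exp (-(T*l)) * Real.sin T))
        = -(Real.Gamma p * T ^ (-p) * Real.sin T) := by
      rw [integral_neg]
      congr 1
      rw [show (fun l : ℝ => l ^ (p-1) * Real.exp (-(T*l)) * Real.sin T)
          = (fun l : ℝ => (l ^ (p-1) * Real.exp (-(T*l))) * Real.sin T) from rfl,
        integral_mul_const, gamma_value hp hT]
    rw [← h2]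
    exact key.2
  · filter_upwards [ae_restrict_mem measurableSet_Ioi] with l hl
    intro x hx
    have hl0 : (0:ℝ) < l := hl
    have hx2 : T/2 ≤ x := by
      have hd := Metric.mem_ball.1 hx
      rw [Real.dist_eq] at hd
      have := abs_lt.1 hd
      linarith [this.1]
    have : Real.exp (-(x*l)) ≤ Real.exp (-((T/2)*l)) := by
      apply Real.exp_le_exp.2
      nlinarith
    rw [Real.norm_eq_abs, abs_neg, abs_mul, abs_mul,
      abs_of_nonneg (Real.rpow_pos_of_pos hl0 _).le, abs_of_pos (Real.exp_pos _)]
    calc l ^ (p-1) * Real.exp (-(x*l)) * |Real.sin x|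
        ≤ l ^ (p-1) * Real.exp (-(x*l)) * 1 := by
          apply mul_le_mul_of_nonneg_left (Real.abs_sin_le_one x); positivity
      _ ≤ l ^ (p-1) * Real.exp (-((T/2)*l)) := by
          rw [mul_one]
          exact mul_le_mul_of_nonneg_left this (Real.rpow_pos_of_pos hl0 _).le
  · filter_upwards [ae_restrict_mem measurableSet_Ioi] with l hl
    intro x _
    exact oscKer_hasDerivAt p hl x

lemma oscF_abs_le {p T : ℝ} (hp : 0 < p) (hT : 0 < T) :
    |oscF p T| ≤ Real.Gamma p * T ^ (-p) := by
  rw [← gamma_value hp hT]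
  rw [show |oscF p T| = ‖oscF p T‖ from rfl]
  apply norm_integral_le_of_norm_le (gamma_integrable hp hT)
  filter_upwards [ae_restrict_mem measurableSet_Ioi] with l hl
  simpa [Real.norm_eq_abs] using oscKer_abs_le (p := p) (T := T) hl

/-- The antiderivative: `Ffun α t = oscF (1/α) (t^α) / (α * Γ(1/α))`. -/
noncomputable def Ffun (α t : ℝ) : ℝ := oscF (1/α) (t ^ α) / (α * Real.Gamma (1/α))

lemma Ffun_hasDerivAt {α t : ℝ} (hα : 0 < α) (ht : 0 < t) :
    HasDerivAt (Ffun α) (-(t ^ (α - 2) * Real.sin (t ^ α))) t := by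
  have hp : (0:ℝ) < 1/α := by positivity
  have hT : (0:ℝ) < t ^ α := Real.rpow_pos_of_pos ht α
  have h1 : HasDerivAt (fun t : ℝ => t ^ α) (α * t ^ (α - 1)) t :=
    Real.hasDerivAt_rpow_const (Or.inl ht.ne')
  have h2 := ((oscF_hasDerivAt hp hT).comp t h1).div_const (α * Real.Gamma (1/α))
  refine h2.congr_deriv ?_
  have hG : (0:ℝ) < Real.Gamma (1/α) := Real.Gamma_pos_of_pos hp
  have hTp : (t ^ α) ^ (-(1/α)) = t⁻¹ := by
    rw [← Real.rpow_mul ht.le, mul_neg, mul_one_div, div_self hα.ne',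
      Real.rpow_neg_one]
  rw [hTp]
  have ht2 : t ^ (α - 2) = t ^ (α - 1) * t⁻¹ := by
    rw [← Real.rpow_neg_one t, ← Real.rpow_add ht]
    ring_nf
  rw [ht2]
  field_simp

lemma Ffun_abs_le {α t : ℝ} (hα : 0 < α) (ht : 0 < t) :
    |Ffun α t| ≤ 1 / (α * t) := by
  have hp : (0:ℝ) < 1/α := by positivity
  have hT : (0:ℝ) < t ^ α := Real.rpow_pos_of_pos ht α
  have hG : (0:ℝ) < Real.Gamma (1/α) := Real.Gamma_pos_of_pos hp
  have hTp : (t ^ α) ^ (-(1/α)) = t⁻¹ := by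
    rw [← Real.rpow_mul ht.le, mul_neg, mul_one_div, div_self hα.ne', Real.rpow_neg_one]
  rw [Ffun, abs_div, abs_of_pos (by positivity : (0:ℝ) < α * Real.Gamma (1/α))]
  rw [div_le_div_iff₀ (by positivity) (by positivity)]
  calc |oscF (1/α) (t ^ α)| * (α * t)
      ≤ (Real.Gamma (1/α) * (t ^ α) ^ (-(1/α))) * (α * t) := by
        apply mul_le_mul_of_nonneg_right (oscF_abs_le hp hT) (by positivity)
    _ = 1 * (α * Real.Gamma (1/α)) := by rw [hTp]; field_simp

lemma integral_Ioi_eq_intervalIntegral {f : ℝ → ℝ} {c d : ℝ} (hc : 0 < c) (hcd : c ≤ d)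
    (h0 : ∀ x, x ∉ Ioc c d → f x = 0) :
    ∫ x in Ioi (0:ℝ), f x = ∫ x in c..d, f x := by
  rw [intervalIntegral.integral_of_le hcd]
  have h1 : ∫ x in Ioi (0:ℝ), f x = ∫ x, f x :=
    setIntegral_eq_integral_of_forall_compl_eq_zero (fun x hx =>
      h0 x (fun hmem => hx (lt_trans hc hmem.1 : (0:ℝ) < x)))
  have h2 : ∫ x in Ioc c d, f x = ∫ x, f x :=
    setIntegral_eq_integral_of_forall_compl_eq_zero (fun x hx => h0 x hx)
  rw [h1, ← h2]

lemma pointwise_amgm {α x F U W : ℝ} (hα : 0 < α) (hx : 0 < x) (hF : |F| ≤ 1/(α*x)) :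
    2 * F * U * W ≤ 1/(2*α) * (U^2/x^2) + 2/α * W^2 := by
  have h1 : 2 * F * U * W ≤ 2 * |F| * |U| * |W| := by
    calc 2*F*U*W ≤ |2*F*U*W| := le_abs_self _
    _ = 2 * |F| * |U| * |W| := by rw [abs_mul, abs_mul, abs_mul, abs_two]
  have h2 : 2 * |F| * |U| * |W| ≤ 2*(1/(α*x)) * |U| * |W| := by
    have : 2 * |F| ≤ 2*(1/(α*x)) := by linarith
    exact mul_le_mul_of_nonneg_right (mul_le_mul_of_nonneg_right this (abs_nonneg U)) (abs_nonneg W)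
  have P : 2*x * |U| * |W| ≤ (1/2)*U^2 + 2*x^2*W^2 := by
    nlinarith [sq_nonneg (|U| - 2*x * |W|), sq_abs U, sq_abs W]
  have h3 : 2*(1/(α*x)) * |U| * |W| = (1/(α*x^2)) * (2*x * |U| * |W|) := by field_simp
  have h4 : (1/(α*x^2)) * ((1/2)*U^2 + 2*x^2*W^2) = 1/(2*α)*(U^2/x^2) + 2/α*W^2 := by
    field_simp
  calc 2*F*U*W ≤ 2*(1/(α*x)) * |U| * |W| := le_trans h1 h2
    _ = (1/(α*x^2)) * (2*x * |U| * |W|) := h3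
    _ ≤ (1/(α*x^2)) * ((1/2)*U^2 + 2*x^2*W^2) :=
        mul_le_mul_of_nonneg_left P (by positivity)
    _ = 1/(2*α)*(U^2/x^2) + 2/α*W^2 := h4

lemma pointwise_hardy {x U W : ℝ} (hx : 0 < x) :
    2*U*W/x ≤ (1/2)*(U^2/x^2) + 2*W^2 := by
  have h := pointwise_amgm (α := 1) (x := x) (F := 1/x) (U := U) (W := W) one_pos hx
    (by rw [one_mul, abs_of_pos (show (0:ℝ) < 1/x by positivity)])
  calc 2*U*W/x = 2*(1/x)*U*W := by field_simp
    _ ≤ 1/(2*1) * (U^2/x^2) + 2/1 * W^2 := h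
    _ = (1/2)*(U^2/x^2) + 2*W^2 := by norm_num

/-- Hardy-type inequality for the oscillating potential r^{α-2} sin(r^α). -/
theorem oscillating_hardy (α : ℝ) (hα : 0 < α)
    (u : ℝ → ℝ) (hu : ContDiff ℝ (⊤ : ℕ∞) u) (hsupp : HasCompactSupport u)
    (hsupp0 : tsupport u ⊆ Ioi 0) :
    (∫ r in Ioi (0:ℝ), r ^ (α - 2) * Real.sin (r ^ α) * |u r|^2)
      ≤ (4 / α) * ∫ r in Ioi (0:ℝ), |deriv u r|^2 := by
  simp_rw [sq_abs]
  by_cases hK : tsupport u = ∅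
  · have hu0 : u = 0 := tsupport_eq_empty_iff.mp hK
    subst hu0
    have hd : deriv (0 : ℝ → ℝ) = fun _ => 0 := by ext x; exact deriv_const x 0
    simp [hd]
  -- setup of the interval [c, d]
  have hKne : (tsupport u).Nonempty := nonempty_iff_ne_empty.mpr hK
  have hKcpt : IsCompact (tsupport u) := hsupp
  set a := sInf (tsupport u) with ha_def
  set b := sSup (tsupport u) with hb_def
  have haK : a ∈ tsupport u := hKcpt.sInf_mem hKne
  have hbK : b ∈ tsupport u := hKcpt.sSup_mem hKne
  have ha : 0 < a := hsupp0 haK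
  have hab : a ≤ b := csInf_le_csSup hKne hKcpt.isBounded.bddBelow hKcpt.isBounded.bddAbove
  have hKsub : tsupport u ⊆ Icc a b := hKcpt.isBounded.subset_Icc_sInf_sSup
  set c := a/2 with hc_def
  set d := b+1 with hd_def
  have hc : 0 < c := by positivity
  have hcd : c ≤ d := by simp only [hc_def, hd_def]; linarith
  have hKsub' : tsupport u ⊆ Ioc c d := by
    intro x hx
    have := hKsub hx
    exact ⟨by simp only [hc_def]; linarith [this.1], by simp only [hd_def]; linarith [this.2]⟩
  have hu0 : ∀ x, x ∉ Ioc c d → u x = 0 := fun x hx =>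
    image_eq_zero_of_notMem_tsupport (fun hmem => hx (hKsub' hmem))
  have hu'0 : ∀ x, x ∉ Ioc c d → deriv u x = 0 := fun x hx => by
    by_contra h
    exact hx (hKsub' (support_deriv_subset (by simpa using h)))
  have hucd : ∀ x ∈ Icc c d, (0:ℝ) < x := fun x hx => lt_of_lt_of_le hc hx.1
  -- continuity facts
  have hcu : Continuous u := hu.continuous
  have hcu' : Continuous (deriv u) := hu.continuous_deriv (by simp)
  have hFcont : ContinuousOn (Ffun α) (Icc c d) := fun x hx =>
    ((Ffun_hasDerivAt hα (hucd x hx)).differentiableAt.continuousAt).continuousWithinAt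
  have hVcont : ContinuousOn (fun r : ℝ => r ^ (α-2) * Real.sin (r ^ α)) (Icc c d) := by
    intro x hx
    have hx0 : x ≠ 0 := (hucd x hx).ne'
    exact (((Real.continuousAt_rpow_const x (α-2) (Or.inl hx0)).mul
      (Real.continuous_sin.continuousAt.comp
        (Real.continuousAt_rpow_const x α (Or.inl hx0))))).continuousWithinAt
  have hxinv : ContinuousOn (fun x : ℝ => u x^2 / x^2) (Icc c d) :=
    ((hcu.pow 2).continuousOn).div (continuous_pow 2).continuousOn
      (fun x hx => pow_ne_zero 2 (hucd x hx).ne')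
  have hIcc : uIcc c d = Icc c d := uIcc_of_le hcd
  -- endpoint values
  have huc0 : u c = 0 := hu0 c (fun h => absurd h.1 (lt_irrefl c))
  have hud0 : u d = 0 := image_eq_zero_of_notMem_tsupport (fun h => by
    have h2 := (hKsub h).2
    simp only [hd_def] at h2 ⊢
    linarith)
  -- interval integrability
  have hintV : IntervalIntegrable (fun x => x ^ (α-2) * Real.sin (x^α) * u x^2) volume c d := by
    apply ContinuousOn.intervalIntegrable; rw [hIcc]
    exact hVcont.mul ((hcu.pow 2).continuousOn)
  have hintB : IntervalIntegrable (fun x => Ffun α x * (2 * u x * deriv u x)) volume c d := by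
    apply ContinuousOn.intervalIntegrable; rw [hIcc]
    exact hFcont.mul (((continuous_const.mul hcu).mul hcu').continuousOn)
  have hint2 : IntervalIntegrable (fun x => 2 * Ffun α x * u x * deriv u x) volume c d := by
    apply ContinuousOn.intervalIntegrable; rw [hIcc]
    exact (((continuous_const.continuousOn.mul hFcont).mul hcu.continuousOn).mul hcu'.continuousOn)
  have hint3 : IntervalIntegrable (fun x => u x^2/x^2) volume c d := by
    apply ContinuousOn.intervalIntegrable; rw [hIcc]; exact hxinv
  have hint4 : IntervalIntegrable (fun x => (deriv u x)^2) volume c d :=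
    ((hcu'.pow 2)).continuousOn.intervalIntegrable
  have hint5 : IntervalIntegrable (fun x => 2*u x*deriv u x/x) volume c d := by
    apply ContinuousOn.intervalIntegrable; rw [hIcc]
    exact (((continuous_const.mul hcu).mul hcu').continuousOn).div
      continuous_id.continuousOn (fun x hx => (hucd x hx).ne')
  have hintA : IntervalIntegrable (fun x => -(x ^ (α-2) * Real.sin (x^α) * u x^2)) volume c d := by
    apply ContinuousOn.intervalIntegrable; rw [hIcc]
    exact (hVcont.mul ((hcu.pow 2).continuousOn)).neg
  have hint6 : IntervalIntegrable (fun x => 1/(2*α) * (u x^2/x^2) + 2/α * (deriv u x)^2)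
      volume c d := (hint3.const_mul _).add (hint4.const_mul _)
  have hint7 : IntervalIntegrable (fun x => (1/2) * (u x^2/x^2) + 2 * (deriv u x)^2)
      volume c d := (hint3.const_mul _).add (hint4.const_mul _)
  -- integration by parts 1
  have hu2der : ∀ x : ℝ, HasDerivAt (fun t => u t^2) (2 * u x * deriv u x) x := by
    intro x
    have hud : HasDerivAt u (deriv u x) x := (hu.differentiable (by simp) x).hasDerivAt
    have := hud.pow 2
    refine this.congr_deriv ?_
    push_cast
    ring
  have ibp1 : ∫ x in c..d, (-(x ^ (α-2) * Real.sin (x^α)) * u x^2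
      + Ffun α x * (2 * u x * deriv u x)) = 0 := by
    have hder : ∀ x ∈ uIcc c d, HasDerivAt (fun t => Ffun α t * u t^2)
        (-(x ^ (α-2) * Real.sin (x^α)) * u x^2 + Ffun α x * (2 * u x * deriv u x)) x := by
      intro x hx
      rw [hIcc] at hx
      exact (Ffun_hasDerivAt hα (hucd x hx)).mul (hu2der x)
    have hcont : IntervalIntegrable (fun x => -(x ^ (α-2) * Real.sin (x^α)) * u x^2
        + Ffun α x * (2 * u x * deriv u x)) volume c d := by
      have : (fun x => -(x ^ (α-2) * Real.sin (x^α)) * u x^2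
          + Ffun α x * (2 * u x * deriv u x))
          = fun x => -(x ^ (α-2) * Real.sin (x^α) * u x^2)
          + Ffun α x * (2 * u x * deriv u x) := by funext x; ring
      rw [this]
      exact hintA.add hintB
    rw [intervalIntegral.integral_eq_sub_of_hasDerivAt hder hcont, huc0, hud0]
    ring
  have eq1 : ∫ x in c..d, x ^ (α-2) * Real.sin (x^α) * u x^2
      = ∫ x in c..d, 2 * Ffun α x * u x * deriv u x := by
    have hsplit : ∫ x in c..d, (-(x ^ (α-2) * Real.sin (x^α)) * u x^2
        + Ffun α x * (2 * u x * deriv u x))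
        = (∫ x in c..d, -(x ^ (α-2) * Real.sin (x^α) * u x^2))
          + ∫ x in c..d, Ffun α x * (2 * u x * deriv u x) := by
      rw [← intervalIntegral.integral_add hintA hintB]
      apply intervalIntegral.integral_congr
      intro x _
      ring
    rw [hsplit] at ibp1
    have hnegV : ∫ x in c..d, -(x ^ (α-2) * Real.sin (x^α) * u x^2)
        = -∫ x in c..d, x ^ (α-2) * Real.sin (x^α) * u x^2 :=
      intervalIntegral.integral_neg
    rw [hnegV] at ibp1
    have : ∫ x in c..d, Ffun α x * (2 * u x * deriv u x)
        = ∫ x in c..d, 2 * Ffun α x * u x * deriv u x := by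
      apply intervalIntegral.integral_congr
      intro x _
      ring
    linarith [ibp1, this]
  -- integration by parts 2 (Hardy)
  have ibp2 : ∫ x in c..d, (u x^2/x^2 - 2*u x*deriv u x/x) = 0 := by
    have hder : ∀ x ∈ uIcc c d, HasDerivAt (fun t => -(u t^2/t))
        (u x^2/x^2 - 2*u x*deriv u x/x) x := by
      intro x hx
      rw [hIcc] at hx
      have hx0 := hucd x hx
      have h := ((hu2der x).div (hasDerivAt_id x) hx0.ne').neg
      refine h.congr_deriv ?_
      simp only [id]
      field_simp
      ring
    have hcont : IntervalIntegrable (fun x => u x^2/x^2 - 2*u x*deriv u x/x) volume c d :=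
      hint3.sub hint5
    rw [intervalIntegral.integral_eq_sub_of_hasDerivAt hder hcont, huc0, hud0]
    ring
  have eq2 : ∫ x in c..d, u x^2/x^2 = ∫ x in c..d, 2*u x*deriv u x/x := by
    rw [intervalIntegral.integral_sub hint3 hint5] at ibp2
    linarith [ibp2]
  -- monotonicity steps
  have mono1 : ∫ x in c..d, 2 * Ffun α x * u x * deriv u x
      ≤ ∫ x in c..d, (1/(2*α) * (u x^2/x^2) + 2/α * (deriv u x)^2) := by
    apply intervalIntegral.integral_mono_on hcd hint2 hint6
    intro x hx
    exact pointwise_amgm hα (hucd x hx) (Ffun_abs_le hα (hucd x hx))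
  have mono2 : ∫ x in c..d, 2*u x*deriv u x/x
      ≤ ∫ x in c..d, ((1/2) * (u x^2/x^2) + 2 * (deriv u x)^2) := by
    apply intervalIntegral.integral_mono_on hcd hint5 hint7
    intro x hx
    exact pointwise_hardy (hucd x hx)
  -- assemble
  set H := ∫ x in c..d, u x^2/x^2 with hH
  set D := ∫ x in c..d, (deriv u x)^2 with hD
  have hsum6 : ∫ x in c..d, (1/(2*α) * (u x^2/x^2) + 2/α * (deriv u x)^2)
      = 1/(2*α) * H + 2/α * D := by
    rw [intervalIntegral.integral_add (hint3.const_mul _) (hint4.const_mul _),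
      intervalIntegral.integral_const_mul, intervalIntegral.integral_const_mul]
  have hsum7 : ∫ x in c..d, ((1/2) * (u x^2/x^2) + 2 * (deriv u x)^2)
      = (1/2) * H + 2 * D := by
    rw [intervalIntegral.integral_add (hint3.const_mul _) (hint4.const_mul _),
      intervalIntegral.integral_const_mul, intervalIntegral.integral_const_mul]
  have hHardy : H ≤ 4 * D := by
    rw [hsum7] at mono2
    rw [← eq2] at mono2
    linarith
  have hDpos : 0 ≤ D := intervalIntegral.integral_nonneg hcd (fun x _ => sq_nonneg _)
  -- convert the Ioi integrals to interval integrals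
  have hLHS : ∫ r in Ioi (0:ℝ), r ^ (α - 2) * Real.sin (r ^ α) * u r^2
      = ∫ x in c..d, x ^ (α-2) * Real.sin (x^α) * u x^2 := by
    apply integral_Ioi_eq_intervalIntegral hc hcd
    intro x hx
    rw [hu0 x hx]
    ring
  have hRHS : ∫ r in Ioi (0:ℝ), (deriv u r)^2 = D := by
    apply integral_Ioi_eq_intervalIntegral hc hcd
    intro x hx
    rw [hu'0 x hx]
    ring
  rw [hLHS, hRHS, eq1]
  calc ∫ x in c..d, 2 * Ffun α x * u x * deriv u x
      ≤ 1/(2*α) * H + 2/α * D := by rw [← hsum6]; exact mono1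
    _ ≤ 1/(2*α) * (4*D) + 2/α * D := by
        have := mul_le_mul_of_nonneg_left hHardy (by positivity : (0:ℝ) ≤ 1/(2*α))
        linarith
    _ = 4/α * D := by field_simp; ring
end

section
/- Let α > 0, β ∈ ℝ with α - β > 1 and 2α - β > 2, λ ∈ ℝ, and W(r) = ∫_r^∞ λ s^β sin(s^α) ds. Then as r → ∞, ∫_r^∞ W(s) ds converges and -∫_r^∞ W(s) ds = (λ sin(r^α))/(α² r^{2α-β-2}) + O(r^{2+β-3α}). -/
/-!
Integration by parts, `∫ s^γ g(s^α) ds = α⁻¹ s^(γ+1-α) G(s^α) - (γ+1-α)/α ∫ s^(γ-α) G(s^α) ds`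
with `G' = g`, lowers the power by `α` at the price of a boundary term. Hence
`∫_r^∞ s^γ g(s^α) ds = O(r^(γ+1-α))`, and the remaining tail converges absolutely as soon as
`γ - α < -1`. Two such steps write `W(s)` as `λ/α s^(β+1-α) cos(s^α)` plus a combination of
`s^(β+1-2α) sin(s^α)` and `∫_s^∞ t^(β-2α) sin(t^α) dt`. One more step on the first term gives the
main term `λ/α² r^(β+2-2α) sin(r^α)`, while the other two integrate to `O(r^(β+2-3α))`, the last
one through `∫_r^∞ ∫_s^∞ f = ∫_r^∞ t f(t) dt - r ∫_r^∞ f`.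
-/

open MeasureTheory Set Real Filter Asymptotics
open Topology

section Tail

variable {f : ℝ → ℝ} {γ r : ℝ}

theorem abs_setIntegral_Ioi_le_of_abs_le_rpow (hγ : γ < -1) (hr : 0 < r)
    (hf : ∀ s > 0, |f s| ≤ s ^ γ) : |∫ s in Ioi r, f s| ≤ r ^ (γ + 1) / -(γ + 1) :=
  calc |∫ s in Ioi r, f s| ≤ ∫ s in Ioi r, s ^ γ :=
        norm_integral_le_of_norm_le (f := f) (integrableOn_Ioi_rpow_of_lt hγ hr)
          ((ae_restrict_mem measurableSet_Ioi).mono fun s hs => hf s (hr.trans hs))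
    _ = r ^ (γ + 1) / -(γ + 1) := by rw [integral_Ioi_rpow_of_lt hγ hr, div_neg, neg_div]

theorem integrableOn_Ioi_of_abs_le_rpow (hγ : γ < -1) (hr : 0 < r)
    (hfc : ContinuousOn f (Ioi 0)) (hf : ∀ s > 0, |f s| ≤ s ^ γ) : IntegrableOn f (Ioi r) :=
  (integrableOn_Ioi_rpow_of_lt hγ hr).mono'
    ((hfc.mono (Ioi_subset_Ioi hr.le)).aestronglyMeasurable measurableSet_Ioi)
    ((ae_restrict_mem measurableSet_Ioi).mono fun s hs => hf s (hr.trans hs))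

theorem isBigO_setIntegral_Ioi_of_abs_le_rpow (hγ : γ < -1) (hf : ∀ s > 0, |f s| ≤ s ^ γ) :
    (fun r => ∫ s in Ioi r, f s) =O[atTop] fun r => r ^ (γ + 1) := by
  refine IsBigO.of_bound (1 / -(γ + 1)) ?_
  filter_upwards [eventually_gt_atTop 0] with r hr
  rw [Real.norm_eq_abs, Real.norm_eq_abs, abs_of_nonneg (rpow_nonneg hr.le _), one_div_mul_eq_div]
  exact abs_setIntegral_Ioi_le_of_abs_le_rpow hγ hr hf

theorem hasDerivAt_setIntegral_Ioi {a x : ℝ} (hfc : ContinuousOn f (Ioi a))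
    (hfi : ∀ c > a, IntegrableOn f (Ioi c)) (hx : a < x) :
    HasDerivAt (fun s => ∫ t in Ioi s, f t) (-f x) x := by
  set c := (a + x) / 2
  have hac : a < c := by simp only [c]; linarith
  have hcx : c < x := by simp only [c]; linarith
  have hsplit : ∀ y > c, ∫ t in Ioi y, f t = (∫ t in Ioi c, f t) - ∫ t in c..y, f t := by
    intro y hy
    rw [intervalIntegral.integral_of_le hy.le, ← Ioc_union_Ioi_eq_Ioi hy.le,
      setIntegral_union (Ioc_disjoint_Ioi le_rfl) measurableSet_Ioi
        ((hfi c hac).mono_set Ioc_subset_Ioi_self) ((hfi c hac).mono_set (Ioi_subset_Ioi hy.le))]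
    ring
  have hprim := intervalIntegral.integral_hasDerivAt_right
    ((intervalIntegrable_iff_integrableOn_Ioc_of_le hcx.le).2
      ((hfi c hac).mono_set Ioc_subset_Ioi_self))
    (hfc.stronglyMeasurableAtFilter isOpen_Ioi x hx) (hfc.continuousAt (Ioi_mem_nhds hx))
  exact (hprim.const_sub _).congr_of_eventuallyEq
    (eventually_of_mem (Ioi_mem_nhds hcx) hsplit)

theorem tendsto_intervalIntegral_setIntegral_Ioi (hγ : γ < -2) (hr : 0 < r)
    (hfc : ContinuousOn f (Ioi 0)) (hf : ∀ s > 0, |f s| ≤ s ^ γ) :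
    Tendsto (fun b => ∫ s in r..b, ∫ t in Ioi s, f t) atTop
      (𝓝 ((∫ t in Ioi r, t * f t) - r * ∫ t in Ioi r, f t)) := by
  set T := fun s => ∫ t in Ioi s, f t
  have hT : ∀ x > 0, HasDerivAt T (-f x) x := fun x hx =>
    hasDerivAt_setIntegral_Ioi hfc
      (fun c hc => integrableOn_Ioi_of_abs_le_rpow (by linarith) hc hfc hf) hx
  have htf : ∀ t > 0, |t * f t| ≤ t ^ (γ + 1) := fun t ht => by
    rw [abs_mul, abs_of_pos ht, rpow_add_one ht.ne', mul_comm (t ^ γ)]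
    exact mul_le_mul_of_nonneg_left (hf t ht) ht.le
  have hibp : ∀ b ≥ r, ∫ s in r..b, T s = b * T b - r * T r + ∫ s in r..b, s * f s := by
    intro b hb
    have hpos : ∀ x ∈ uIcc r b, 0 < x := fun x hx => hr.trans_le (uIcc_of_le hb ▸ hx).1
    have hparts := intervalIntegral.integral_mul_deriv_eq_deriv_mul (u := id) (v := T)
      (fun x _ => hasDerivAt_id x) (fun x hx => hT x (hpos x hx)) intervalIntegrable_const
      (ContinuousOn.intervalIntegrable fun x hx =>
        (hfc.continuousAt (Ioi_mem_nhds (hpos x hx))).neg.continuousWithinAt)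
    simp only [id, mul_neg, intervalIntegral.integral_neg, one_mul] at hparts
    linarith
  have hbT : Tendsto (fun b => b * T b) atTop (𝓝 0) := by
    refine ((isBigO_refl id atTop).mul (isBigO_setIntegral_Ioi_of_abs_le_rpow
      (by linarith) hf)).trans_tendsto ?_
    have hdecay : Tendsto (fun b : ℝ => b ^ (γ + 2)) atTop (𝓝 0) := by
      simpa using tendsto_rpow_neg_atTop (y := -(γ + 2)) (by linarith)
    refine hdecay.congr' ?_
    filter_upwards [eventually_gt_atTop 0] with b hb
    rw [id, show γ + 2 = γ + 1 + 1 by ring, rpow_add_one hb.ne', mul_comm]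
  have hsf := intervalIntegral_tendsto_integral_Ioi r (integrableOn_Ioi_of_abs_le_rpow
    (by linarith) hr (continuousOn_id.mul hfc) htf) tendsto_id
  have hlim := (hbT.sub_const (r * T r)).add hsf
  rw [zero_sub, ← sub_eq_neg_add] at hlim
  exact hlim.congr' ((eventually_ge_atTop r).mono fun b hb => (hibp b hb).symm)

end Tail

/-- `∫_r^∞ s^γ g(s^α) ds` as a Lebesgue integral: `0` when the integrand is not integrable. -/
noncomputable def oscTail (α γ : ℝ) (g : ℝ → ℝ) (r : ℝ) : ℝ :=
  ∫ s in Ioi r, s ^ γ * g (s ^ α)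

section Oscillatory

variable {α γ r : ℝ} {g G : ℝ → ℝ}

theorem continuousAt_rpow_mul_comp_rpow (hgc : Continuous g) {x : ℝ} (hx : 0 < x) :
    ContinuousAt (fun s => s ^ γ * g (s ^ α)) x := by
  fun_prop (disch := simp [hx.ne'])

theorem continuousOn_rpow_mul_comp_rpow (hgc : Continuous g) :
    ContinuousOn (fun s => s ^ γ * g (s ^ α)) (Ioi 0) := fun _ hx =>
  (continuousAt_rpow_mul_comp_rpow hgc hx).continuousWithinAt

theorem abs_rpow_mul_comp_rpow_le (hgb : ∀ x, |g x| ≤ 1) {s : ℝ} (hs : 0 < s) :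
    |s ^ γ * g (s ^ α)| ≤ s ^ γ := by
  rw [abs_mul, abs_of_pos (rpow_pos_of_pos hs γ)]
  exact mul_le_of_le_one_right (rpow_nonneg hs.le γ) (hgb _)

theorem integrableOn_Ioi_rpow_mul_comp_rpow (hgc : Continuous g) (hgb : ∀ x, |g x| ≤ 1)
    (hγ : γ < -1) (hr : 0 < r) : IntegrableOn (fun s => s ^ γ * g (s ^ α)) (Ioi r) :=
  integrableOn_Ioi_of_abs_le_rpow hγ hr (continuousOn_rpow_mul_comp_rpow hgc)
    fun _ => abs_rpow_mul_comp_rpow_le hgb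

theorem oscTail_neg : oscTail α γ (fun x => -g x) r = -oscTail α γ g r := by
  simp [oscTail, integral_neg]

theorem intervalIntegral_rpow_mul_comp_rpow (hα : 0 < α) (hgc : Continuous g)
    (hG : ∀ x, HasDerivAt G (g x) x) {b : ℝ} (hr : 0 < r) (hrb : r ≤ b) :
    ∫ s in r..b, s ^ γ * g (s ^ α) =
      α⁻¹ * (b ^ (γ + 1 - α) * G (b ^ α) - r ^ (γ + 1 - α) * G (r ^ α))
        - (γ + 1 - α) / α * ∫ s in r..b, s ^ (γ - α) * G (s ^ α) := by
  have hpos : ∀ x ∈ uIcc r b, 0 < x := fun x hx => hr.trans_le (uIcc_of_le hrb ▸ hx).1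
  have hu : ∀ x ∈ uIcc r b, HasDerivAt (fun s => α⁻¹ * s ^ (γ + 1 - α))
      ((γ + 1 - α) / α * x ^ (γ - α)) x := fun x hx => by
    refine ((hasDerivAt_rpow_const (Or.inl (hpos x hx).ne')).const_mul α⁻¹).congr_deriv ?_
    rw [show γ + 1 - α - 1 = γ - α by ring]; ring
  have hv : ∀ x ∈ uIcc r b, HasDerivAt (fun s => G (s ^ α)) (g (x ^ α) * (α * x ^ (α - 1))) x :=
    fun x hx => (hG _).comp x (hasDerivAt_rpow_const (Or.inl (hpos x hx).ne'))
  have hibp := intervalIntegral.integral_mul_deriv_eq_deriv_mul hu hv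
    (ContinuousOn.intervalIntegrable fun x hx => ContinuousAt.continuousWithinAt <| by
      have := (hpos x hx).ne'; fun_prop (disch := simp [this]))
    (ContinuousOn.intervalIntegrable fun x hx => ContinuousAt.continuousWithinAt <| by
      have := (hpos x hx).ne'; fun_prop (disch := simp [this]))
  have hlhs : ∫ x in r..b, α⁻¹ * x ^ (γ + 1 - α) * (g (x ^ α) * (α * x ^ (α - 1))) =
      ∫ s in r..b, s ^ γ * g (s ^ α) := by
    refine intervalIntegral.integral_congr fun x hx => ?_
    have hx := hpos x hx
    have hpow : x ^ (γ + 1 - α) * x ^ (α - 1) = x ^ γ := by rw [← rpow_add hx]; ring_nf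
    rw [← hpow]
    field_simp
  simp_rw [mul_assoc ((γ + 1 - α) / α)] at hibp
  rw [← hlhs, hibp, intervalIntegral.integral_const_mul]
  ring

theorem tendsto_intervalIntegral_rpow_mul_comp_rpow (hα : 0 < α) (hγ : γ + 1 < α)
    (hgc : Continuous g) (hG : ∀ x, HasDerivAt G (g x) x) (hGb : ∀ x, |G x| ≤ 1) (hr : 0 < r) :
    Tendsto (fun b => ∫ s in r..b, s ^ γ * g (s ^ α)) atTop
      (𝓝 (-α⁻¹ * (r ^ (γ + 1 - α) * G (r ^ α)) - (γ + 1 - α) / α * oscTail α (γ - α) G r)) := by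
  have hGc : Continuous G := continuous_iff_continuousAt.2 fun x => (hG x).continuousAt
  have hbdry : Tendsto (fun b => b ^ (γ + 1 - α) * G (b ^ α)) atTop (𝓝 0) := by
    have hdecay : Tendsto (fun b : ℝ => b ^ (γ + 1 - α)) atTop (𝓝 0) := by
      simpa using tendsto_rpow_neg_atTop (y := -(γ + 1 - α)) (by linarith)
    refine squeeze_zero_norm' ?_ hdecay
    filter_upwards [eventually_gt_atTop 0] with b hb
    exact abs_rpow_mul_comp_rpow_le hGb hb
  have htail := intervalIntegral_tendsto_integral_Ioi r
    (integrableOn_Ioi_rpow_mul_comp_rpow (α := α) (γ := γ - α) hGc hGb (by linarith) hr) tendsto_id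
  have hlim := ((hbdry.sub_const (r ^ (γ + 1 - α) * G (r ^ α))).const_mul α⁻¹).sub
    (htail.const_mul ((γ + 1 - α) / α))
  rw [zero_sub, mul_neg, ← neg_mul] at hlim
  exact hlim.congr' ((eventually_ge_atTop r).mono fun b hb =>
    (intervalIntegral_rpow_mul_comp_rpow hα hgc hG hr hb).symm)

theorem oscTail_eq (hα : 0 < α) (hγ : γ < -1) (hgc : Continuous g) (hgb : ∀ x, |g x| ≤ 1)
    (hG : ∀ x, HasDerivAt G (g x) x) (hGb : ∀ x, |G x| ≤ 1) (hr : 0 < r) :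
    oscTail α γ g r =
      -α⁻¹ * (r ^ (γ + 1 - α) * G (r ^ α)) - (γ + 1 - α) / α * oscTail α (γ - α) G r :=
  tendsto_nhds_unique
    (intervalIntegral_tendsto_integral_Ioi r (integrableOn_Ioi_rpow_mul_comp_rpow hgc hgb hγ hr)
      tendsto_id)
    (tendsto_intervalIntegral_rpow_mul_comp_rpow hα (by linarith) hgc hG hGb hr)

theorem isBigO_oscTail (hα : 0 < α) (hγ : γ < -1) (hgc : Continuous g) (hgb : ∀ x, |g x| ≤ 1)
    (hG : ∀ x, HasDerivAt G (g x) x) (hGb : ∀ x, |G x| ≤ 1) :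
    oscTail α γ g =O[atTop] fun r => r ^ (γ + 1 - α) := by
  have hbdry : (fun r => r ^ (γ + 1 - α) * G (r ^ α)) =O[atTop] fun r => r ^ (γ + 1 - α) :=
    IsBigO.of_bound 1 <| (eventually_gt_atTop 0).mono fun r hr => by
      rw [one_mul, Real.norm_eq_abs, Real.norm_eq_abs, abs_of_pos (rpow_pos_of_pos hr _)]
      exact abs_rpow_mul_comp_rpow_le hGb hr
  have htail : oscTail α (γ - α) G =O[atTop] fun r => r ^ (γ + 1 - α) := by
    rw [show γ + 1 - α = γ - α + 1 by ring]
    exact isBigO_setIntegral_Ioi_of_abs_le_rpow (by linarith) fun _ => abs_rpow_mul_comp_rpow_le hGb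
  refine ((hbdry.const_mul_left (-α⁻¹)).sub
    (htail.const_mul_left ((γ + 1 - α) / α))).congr' ?_ EventuallyEq.rfl
  filter_upwards [eventually_gt_atTop 0] with r hr
  exact (oscTail_eq hα hγ hgc hgb hG hGb hr).symm

theorem isBigO_oscTail_sin (hα : 0 < α) (hγ : γ < -1) :
    oscTail α γ sin =O[atTop] fun r => r ^ (γ + 1 - α) :=
  isBigO_oscTail hα hγ continuous_sin abs_sin_le_one
    (fun x => (hasDerivAt_cos x).neg.congr_deriv (neg_neg _)) (by simpa using abs_cos_le_one)

theorem isBigO_mul_oscTail_sin (hα : 0 < α) (hγ : γ < -1) :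
    (fun r => r * oscTail α γ sin r) =O[atTop] fun r => r ^ (γ + 2 - α) := by
  refine ((isBigO_refl id atTop).mul (isBigO_oscTail_sin hα hγ)).congr' EventuallyEq.rfl ?_
  filter_upwards [eventually_gt_atTop 0] with r hr
  rw [id, show γ + 2 - α = γ + 1 - α + 1 by ring, rpow_add_one hr.ne', mul_comm]

theorem hasDerivAt_oscTail (hgc : Continuous g) (hgb : ∀ x, |g x| ≤ 1) (hγ : γ < -1)
    (hr : 0 < r) : HasDerivAt (oscTail α γ g) (-(r ^ γ * g (r ^ α))) r :=
  hasDerivAt_setIntegral_Ioi (continuousOn_rpow_mul_comp_rpow hgc)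
    (fun _ hc => integrableOn_Ioi_rpow_mul_comp_rpow hgc hgb hγ hc) hr

theorem tendsto_intervalIntegral_oscTail (hgc : Continuous g) (hgb : ∀ x, |g x| ≤ 1)
    (hγ : γ < -2) (hr : 0 < r) :
    Tendsto (fun b => ∫ s in r..b, oscTail α γ g s) atTop
      (𝓝 (oscTail α (γ + 1) g r - r * oscTail α γ g r)) := by
  have h := tendsto_intervalIntegral_setIntegral_Ioi hγ hr
    (continuousOn_rpow_mul_comp_rpow (α := α) hgc) fun _ => abs_rpow_mul_comp_rpow_le hgb
  have hmoment : ∫ t in Ioi r, t * (t ^ γ * g (t ^ α)) = oscTail α (γ + 1) g r :=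
    setIntegral_congr_fun measurableSet_Ioi fun t (ht : r < t) => by
      rw [← mul_assoc, rpow_add_one (hr.trans ht).ne', mul_comm t]
  rwa [hmoment] at h

end Oscillatory

section SecondTail

variable {α β lam r : ℝ}

theorem eq_of_tendsto_intervalIntegral_rpow_mul_sin (hα : 0 < α) (hαβ : 1 < α - β) {w : ℝ}
    (hr : 0 < r) (hw : Tendsto (fun b => ∫ s in r..b, lam * s ^ β * sin (s ^ α)) atTop (𝓝 w)) :
    w = lam / α * (r ^ (β + 1 - α) * cos (r ^ α))
      - lam * (β + 1 - α) / α ^ 2 * (r ^ (β + 1 - 2 * α) * sin (r ^ α))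
      - lam * (β + 1 - α) * (β + 1 - 2 * α) / α ^ 2 * oscTail α (β - 2 * α) sin r := by
  have hsin := (tendsto_intervalIntegral_rpow_mul_comp_rpow (γ := β) (G := fun x => -cos x)
    hα (by linarith) continuous_sin (fun x => (hasDerivAt_cos x).neg.congr_deriv (neg_neg _))
    (by simpa using abs_cos_le_one) hr).const_mul lam
  simp_rw [← intervalIntegral.integral_const_mul, ← mul_assoc] at hsin
  rw [tendsto_nhds_unique hw hsin, oscTail_neg, oscTail_eq hα (by linarith) continuous_cos
    abs_cos_le_one hasDerivAt_sin abs_sin_le_one hr, show β - α + 1 - α = β + 1 - 2 * α by ring,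
    show β - α - α = β - 2 * α by ring]
  field_simp
  ring

theorem tendsto_intervalIntegral_second_tail (hα : 0 < α) (hαβ : 2 < 2 * α - β) (hr : 0 < r)
    (a b c : ℝ) :
    Tendsto (fun B => ∫ s in r..B, (a * (s ^ (β + 1 - α) * cos (s ^ α))
        - b * (s ^ (β + 1 - 2 * α) * sin (s ^ α)) - c * oscTail α (β - 2 * α) sin s)) atTop
      (𝓝 (a * (-α⁻¹ * (r ^ (β + 2 - 2 * α) * sin (r ^ α))
          - (β + 2 - 2 * α) / α * oscTail α (β + 1 - 2 * α) sin r)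
        - b * oscTail α (β + 1 - 2 * α) sin r
        - c * (oscTail α (β + 1 - 2 * α) sin r - r * oscTail α (β - 2 * α) sin r))) := by
  have hcos := tendsto_intervalIntegral_rpow_mul_comp_rpow (γ := β + 1 - α) hα (by linarith)
    continuous_cos hasDerivAt_sin abs_sin_le_one hr
  rw [show β + 1 - α + 1 - α = β + 2 - 2 * α by ring,
    show β + 1 - α - α = β + 1 - 2 * α by ring] at hcos
  have hsin := intervalIntegral_tendsto_integral_Ioi r (integrableOn_Ioi_rpow_mul_comp_rpow
    (α := α) (γ := β + 1 - 2 * α) continuous_sin abs_sin_le_one (by linarith) hr) tendsto_id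
  have htail := tendsto_intervalIntegral_oscTail (α := α) (γ := β - 2 * α) continuous_sin
    abs_sin_le_one (by linarith) hr
  rw [show β - 2 * α + 1 = β + 1 - 2 * α by ring] at htail
  refine (((hcos.const_mul a).sub (hsin.const_mul b)).sub (htail.const_mul c)).congr' ?_
  filter_upwards [eventually_ge_atTop r] with B hB
  have hpos : uIcc r B ⊆ Ioi 0 := fun x hx => hr.trans_le (uIcc_of_le hB ▸ hx).1
  have hosc : ∀ {γ : ℝ} {g : ℝ → ℝ}, Continuous g →
      IntervalIntegrable (fun s => s ^ γ * g (s ^ α)) volume r B := fun hgc =>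
    ((continuousOn_rpow_mul_comp_rpow hgc).mono hpos).intervalIntegrable
  have htailc : IntervalIntegrable (oscTail α (β - 2 * α) sin) volume r B :=
    ContinuousOn.intervalIntegrable fun x hx => (hasDerivAt_oscTail continuous_sin
      abs_sin_le_one (by linarith) (hpos hx)).continuousAt.continuousWithinAt
  rw [intervalIntegral.integral_sub (((hosc continuous_cos).const_mul a).sub
      ((hosc continuous_sin).const_mul b)) (htailc.const_mul c),
    intervalIntegral.integral_sub ((hosc continuous_cos).const_mul a)
      ((hosc continuous_sin).const_mul b)]
  simp only [intervalIntegral.integral_const_mul, id]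

end SecondTail

/-- Asymptotics of the second tail integral U(r) = -∫_r^∞ W(s) ds, where W is
the tail antiderivative of the oscillating potential λ r^β sin(r^α). -/
theorem second_tail_asymptotics (α β lam : ℝ) (hα : 0 < α) (hαβ : 1 < α - β)
    (hαβ2 : 2 < 2 * α - β) (W : ℝ → ℝ)
    (hW : ∀ r : ℝ, 0 < r →
      Tendsto (fun b => ∫ s in r..b, lam * s ^ β * Real.sin (s ^ α)) atTop (nhds (W r))) :
    ∃ U : ℝ → ℝ,
      (∀ r : ℝ, 0 < r →
        Tendsto (fun b => ∫ s in r..b, W s) atTop (nhds (-U r)))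
      ∧ (fun r => U r - lam * Real.sin (r ^ α) / (α^2 * r ^ (2 * α - β - 2)))
          =O[atTop] fun r => r ^ (2 + β - 3 * α) := by
  set J := oscTail α (β + 1 - 2 * α) sin
  set M := oscTail α (β - 2 * α) sin
  set a := lam / α
  set b := lam * (β + 1 - α) / α ^ 2
  set c := lam * (β + 1 - α) * (β + 1 - 2 * α) / α ^ 2
  refine ⟨fun r => -(a * (-α⁻¹ * (r ^ (β + 2 - 2 * α) * sin (r ^ α))
      - (β + 2 - 2 * α) / α * J r) - b * J r - c * (J r - r * M r)), fun r hr => ?_, ?_⟩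
  · rw [neg_neg]
    refine (tendsto_intervalIntegral_second_tail hα hαβ2 hr a b c).congr' ?_
    filter_upwards [eventually_ge_atTop r] with B hB
    refine intervalIntegral.integral_congr fun s hs => ?_
    have hs : 0 < s := hr.trans_le (uIcc_of_le hB ▸ hs).1
    exact (eq_of_tendsto_intervalIntegral_rpow_mul_sin hα hαβ hs (hW s hs)).symm
  · have hJ := isBigO_oscTail_sin (γ := β + 1 - 2 * α) hα (by linarith)
    have hM := isBigO_mul_oscTail_sin (γ := β - 2 * α) hα (by linarith)
    rw [show β + 1 - 2 * α + 1 - α = 2 + β - 3 * α by ring] at hJ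
    rw [show β - 2 * α + 2 - α = 2 + β - 3 * α by ring] at hM
    refine ((hJ.const_mul_left (a * (β + 2 - 2 * α) / α + b + c)).add
      (hM.const_mul_left (-c))).congr' ?_ EventuallyEq.rfl
    filter_upwards [eventually_gt_atTop 0] with r hr
    rw [show β + 2 - 2 * α = -(2 * α - β - 2) by ring, rpow_neg hr.le]
    simp only [a, J, M]
    field_simp
    ring
end

section
/- Let α > 0, λ ∈ ℝ, and R > 0. Then as r → ∞, ∫_r^∞ (λ² cos(s^α)²)/(α² s²) ds = λ²/(2α² r) + O(r^{-(α+1)}). -/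
open MeasureTheory Set Real Filter Asymptotics Topology

/-! Writing `cos² x = (1 + cos 2x) / 2`, the tail integral is `λ²/(2α²)` times
`1/r + ∫_r^∞ cos(2 s^α) s⁻² ds`. Since `cos(ω s^α) s⁻²` is, up to the factor `ω α`, the
derivative of `sin(ω s^α) s^{-(α+1)}` plus `(α+1) sin(ω s^α) s^{-(α+2)}`, integrating by parts
bounds the oscillatory integral by `2 r^{-(α+1)} / (ω α)`. -/

section BoundedTimesPower

variable {f : ℝ → ℝ} {c r : ℝ}

lemma ae_restrict_Ioi_norm_mul_rpow_le (hf1 : ∀ x, |f x| ≤ 1) (hr : 0 < r) :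
    ∀ᵐ x ∂volume.restrict (Ioi r), ‖f x * x ^ c‖ ≤ x ^ c := by
  filter_upwards [self_mem_ae_restrict measurableSet_Ioi] with x hx
  rw [norm_mul, Real.norm_eq_abs, Real.norm_of_nonneg (rpow_nonneg (hr.trans hx).le _)]
  exact mul_le_of_le_one_left (rpow_nonneg (hr.trans hx).le _) (hf1 x)

lemma integrableOn_Ioi_mul_rpow_of_abs_le_one (hf : Measurable f) (hf1 : ∀ x, |f x| ≤ 1)
    (hc : c < -1) (hr : 0 < r) : IntegrableOn (fun s => f s * s ^ c) (Ioi r) :=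
  (integrableOn_Ioi_rpow_of_lt hc hr).mono' (by fun_prop) (ae_restrict_Ioi_norm_mul_rpow_le hf1 hr)

lemma abs_setIntegral_Ioi_mul_rpow_le (hf1 : ∀ x, |f x| ≤ 1) (hc : c < -1) (hr : 0 < r) :
    |∫ s in Ioi r, f s * s ^ c| ≤ r ^ (c + 1) / -(c + 1) :=
  calc |∫ s in Ioi r, f s * s ^ c| ≤ ∫ s in Ioi r, s ^ c :=
        norm_integral_le_of_norm_le (integrableOn_Ioi_rpow_of_lt hc hr)
          (ae_restrict_Ioi_norm_mul_rpow_le hf1 hr)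
    _ = r ^ (c + 1) / -(c + 1) := by rw [integral_Ioi_rpow_of_lt hc hr, div_neg, neg_div]

end BoundedTimesPower

section Oscillatory

variable {α ω : ℝ}

lemma hasDerivAt_sin_mul_rpow {s : ℝ} (hs : 0 < s) :
    HasDerivAt (fun x => sin (ω * x ^ α) * x ^ (-(α + 1)))
      (ω * α * (cos (ω * s ^ α) * s ^ (-2 : ℝ))
        - (α + 1) * (sin (ω * s ^ α) * s ^ (-(α + 2)))) s := by
  have hsin := (hasDerivAt_rpow_const (p := α) (Or.inl hs.ne')).const_mul ω |>.sin
  have hpow := hasDerivAt_rpow_const (p := -(α + 1)) (Or.inl hs.ne')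
  refine (hsin.mul hpow).congr_deriv ?_
  have h2 : s ^ (α - 1) * s ^ (-(α + 1)) = s ^ (-2 : ℝ) := by
    rw [← rpow_add hs]; ring_nf
  have hα2 : s ^ (-(α + 1) - 1) = s ^ (-(α + 2)) := by ring_nf
  rw [hα2, ← h2]; ring

lemma tendsto_sin_mul_rpow_atTop (hα : 0 < α) :
    Tendsto (fun x => sin (ω * x ^ α) * x ^ (-(α + 1))) atTop (𝓝 0) :=
  isBoundedUnder_le_mul_tendsto_zero
    (isBoundedUnder_of ⟨1, fun x => by simpa using abs_sin_le_one _⟩)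
    (tendsto_rpow_neg_atTop (by linarith))

lemma abs_setIntegral_Ioi_cos_mul_rpow_le (hα : 0 < α) (hω : 0 < ω) {r : ℝ} (hr : 0 < r) :
    |∫ s in Ioi r, cos (ω * s ^ α) * s ^ (-2 : ℝ)| ≤ 2 * r ^ (-(α + 1)) / (ω * α) := by
  set I := ∫ s in Ioi r, cos (ω * s ^ α) * s ^ (-2 : ℝ)
  set J := ∫ s in Ioi r, sin (ω * s ^ α) * s ^ (-(α + 2))
  have hcos := integrableOn_Ioi_mul_rpow_of_abs_le_one (by fun_prop)
    (fun x => abs_cos_le_one (ω * x ^ α)) (by norm_num : (-2 : ℝ) < -1) hr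
  have hsin := integrableOn_Ioi_mul_rpow_of_abs_le_one (by fun_prop)
    (fun x => abs_sin_le_one (ω * x ^ α)) (by linarith : -(α + 2) < -1) hr
  have hparts : ω * α * I - (α + 1) * J = -(sin (ω * r ^ α) * r ^ (-(α + 1))) := by
    rw [← integral_const_mul, ← integral_const_mul, ← integral_sub (hcos.const_mul _)
      (hsin.const_mul _)]
    exact (integral_Ioi_of_hasDerivAt_of_tendsto' (fun x hx => hasDerivAt_sin_mul_rpow
      (hr.trans_le hx)) ((hcos.const_mul _).sub (hsin.const_mul _))
      (tendsto_sin_mul_rpow_atTop hα)).trans (zero_sub _)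
  have hJ : (α + 1) * |J| ≤ r ^ (-(α + 1)) := by
    have := abs_setIntegral_Ioi_mul_rpow_le (fun x => abs_sin_le_one (ω * x ^ α))
      (by linarith : -(α + 2) < -1) hr
    rw [show -(α + 2) + 1 = -(α + 1) by ring, neg_neg, le_div_iff₀ (by linarith)] at this
    linarith
  have hboundary : |sin (ω * r ^ α) * r ^ (-(α + 1))| ≤ r ^ (-(α + 1)) := by
    rw [abs_mul, abs_of_pos (rpow_pos_of_pos hr _)]
    exact mul_le_of_le_one_left (rpow_pos_of_pos hr _).le (abs_sin_le_one _)
  have hI : |ω * α * I| ≤ 2 * r ^ (-(α + 1)) := by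
    rw [show ω * α * I = -(sin (ω * r ^ α) * r ^ (-(α + 1))) + (α + 1) * J by linarith]
    calc _ ≤ |sin (ω * r ^ α) * r ^ (-(α + 1))| + (α + 1) * |J| := by
          refine (abs_add_le _ _).trans_eq ?_
          rw [abs_neg, abs_mul (α + 1), abs_of_pos (by linarith : 0 < α + 1)]
      _ ≤ 2 * r ^ (-(α + 1)) := by linarith
  rw [abs_mul, abs_of_pos (by positivity : 0 < ω * α)] at hI
  rwa [le_div_iff₀ (by positivity), mul_comm]

lemma isBigO_setIntegral_Ioi_cos_mul_rpow (hα : 0 < α) (hω : 0 < ω) :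
    (fun r => ∫ s in Ioi r, cos (ω * s ^ α) * s ^ (-2 : ℝ))
      =O[atTop] fun r => r ^ (-(α + 1)) := by
  refine .of_bound (2 / (ω * α)) ?_
  filter_upwards [eventually_gt_atTop 0] with r hr
  rw [Real.norm_eq_abs, Real.norm_of_nonneg (rpow_pos_of_pos hr _).le, div_mul_eq_mul_div]
  exact abs_setIntegral_Ioi_cos_mul_rpow_le hα hω hr

end Oscillatory

lemma setIntegral_Ioi_cos_sq_rpow_div (α lam : ℝ) {r : ℝ} (hr : 0 < r) :
    ∫ s in Ioi r, lam ^ 2 * cos (s ^ α) ^ 2 / (α ^ 2 * s ^ 2)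
      = lam ^ 2 / (2 * α ^ 2) * (1 / r + ∫ s in Ioi r, cos (2 * s ^ α) * s ^ (-2 : ℝ)) := by
  have hcos := integrableOn_Ioi_mul_rpow_of_abs_le_one (by fun_prop)
    (fun x => abs_cos_le_one (2 * x ^ α)) (by norm_num : (-2 : ℝ) < -1) hr
  have hpow := integrableOn_Ioi_rpow_of_lt (by norm_num : (-2 : ℝ) < -1) hr
  have hpoint : EqOn (fun s => lam ^ 2 * cos (s ^ α) ^ 2 / (α ^ 2 * s ^ 2))
      (fun s => lam ^ 2 / (2 * α ^ 2) * (s ^ (-2 : ℝ) + cos (2 * s ^ α) * s ^ (-2 : ℝ)))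
      (Ioi r) := by
    intro s hs
    simp only [cos_sq, rpow_neg (hr.trans hs).le, rpow_two]
    ring
  rw [setIntegral_congr_fun measurableSet_Ioi hpoint, integral_const_mul, integral_add hpow hcos,
    integral_Ioi_rpow_of_lt (by norm_num) hr]
  norm_num [rpow_neg_one]

theorem effective_potential_tail_asymptotics_general (α lam : ℝ) (hα : 0 < α) :
    (fun r => (∫ s in Ioi r, lam^2 * Real.cos (s ^ α)^2 / (α^2 * s^2))
        - lam^2 / (2 * α^2 * r))
      =O[atTop] fun r => r ^ (-(α + 1)) := by
  have hdiff : (fun r => lam ^ 2 / (2 * α ^ 2) * ∫ s in Ioi r, cos (2 * s ^ α) * s ^ (-2 : ℝ))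
      =ᶠ[atTop] fun r => (∫ s in Ioi r, lam ^ 2 * cos (s ^ α) ^ 2 / (α ^ 2 * s ^ 2))
        - lam ^ 2 / (2 * α ^ 2 * r) := by
    filter_upwards [eventually_gt_atTop 0] with r hr
    rw [setIntegral_Ioi_cos_sq_rpow_div α lam hr]
    field_simp
    ring
  exact ((isBigO_setIntegral_Ioi_cos_mul_rpow hα two_pos).const_mul_left _).congr' hdiff
    .rfl

/-- Tail integral of the effective attractive potential:
∫_r^∞ λ² cos²(s^α)/(α² s²) ds = λ²/(2α² r) + O(r^{-(α+1)}). -/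
theorem effective_potential_tail_asymptotics (α lam R : ℝ) (hα : 0 < α) (hR : 0 < R) :
    (fun r => (∫ s in Ioi r, lam^2 * Real.cos (s ^ α)^2 / (α^2 * s^2))
        - lam^2 / (2 * α^2 * r))
      =O[atTop] fun r => r ^ (-(α + 1)) :=
  effective_potential_tail_asymptotics_general α lam hα
end

section
/- Let η > 0, ε ≥ 0, R > e, and for E ∈ (0,1) set Q_E(t) = η - E e^{2t} + ε/t². Let t_0(E) be the largest solution of Q_E(t) = 0 in (ln R, ∞) (which exists for all small E). Then t_0(E) = |ln E|/2 + O(1) as E ↓ 0, and ∫_{ln R}^{t_0(E)} √(max(Q_E(t),0)) dt = (√η/2)|ln E| + O(1) as E ↓ 0. -/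
/-! For `E > 0` the potential `Q_E` is strictly decreasing on `(0, ∞)`, so its zero `t₀(E)`
beyond `ln R` is unique, and `Q_E(t₀) = 0` traps `E e^{2t₀}` between `η` and `η + ε / ln² R`;
taking logarithms gives `t₀ = |ln E| / 2 + O(1)`. Since `|√x - √η| ≤ |x - η| / √η`, the phase
integral differs from `√η (t₀ - ln R)` by at most
`(∫ E e^{2t} dt + ∫ ε / t² dt) / √η ≤ (E e^{2t₀} / 2 + ε / ln R) / √η = O(1)`. -/

open MeasureTheory Set Real Filter Asymptotics

theorem abs_sqrt_sub_sqrt_le (x : ℝ) {y : ℝ} (hy : 0 < y) : |√x - √y| ≤ |x - y| / √y := by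
  rw [le_div_iff₀ (sqrt_pos.2 hy)]
  rcases le_or_gt 0 x with hx | hx
  · calc |√x - √y| * √y ≤ |√x - √y| * (√x + √y) := by
          gcongr; exact le_add_of_nonneg_left (sqrt_nonneg x)
      _ = |x - y| := by
          rw [← abs_of_nonneg (by positivity : 0 ≤ √x + √y), ← abs_mul]
          congr 1
          linear_combination sq_sqrt hx - sq_sqrt hy.le
  · rw [sqrt_eq_zero'.2 hx.le, zero_sub, abs_neg, abs_of_nonneg (sqrt_nonneg y),
      abs_of_neg (by linarith), mul_self_sqrt hy.le]
    linarith

theorem abs_integral_sqrt_add_sub_le {a b c : ℝ} {h g : ℝ → ℝ} (hab : a ≤ b) (hc : 0 < c)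
    (hh : ContinuousOn h (Icc a b)) (hg : IntervalIntegrable g volume a b)
    (hhg : ∀ t ∈ Icc a b, |h t| ≤ g t) :
    |(∫ t in a..b, √(c + h t)) - √c * (b - a)| ≤ (∫ t in a..b, g t) / √c := by
  have hint : IntervalIntegrable (fun t => √(c + h t)) volume a b :=
    (continuousOn_const.add hh).sqrt.intervalIntegrable_of_Icc hab
  have hpt : ∀ t ∈ Ioc a b, ‖√(c + h t) - √c‖ ≤ g t / √c := fun t ht => by
    calc ‖√(c + h t) - √c‖ ≤ |c + h t - c| / √c := abs_sqrt_sub_sqrt_le _ hc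
      _ ≤ g t / √c := by
          rw [add_sub_cancel_left]; gcongr; exact hhg t (Ioc_subset_Icc_self ht)
  calc |(∫ t in a..b, √(c + h t)) - √c * (b - a)| = ‖∫ t in a..b, (√(c + h t) - √c)‖ := by
        rw [intervalIntegral.integral_sub hint intervalIntegrable_const,
          intervalIntegral.integral_const, smul_eq_mul, mul_comm, Real.norm_eq_abs]
    _ ≤ ∫ t in a..b, g t / √c :=
        intervalIntegral.norm_integral_le_of_norm_le hab (ae_of_all _ hpt) (hg.div_const _)
    _ = (∫ t in a..b, g t) / √c := intervalIntegral.integral_div _ _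

theorem integral_exp_two_mul (a b : ℝ) :
    ∫ t in a..b, exp (2 * t) = (exp (2 * b) - exp (2 * a)) / 2 := by
  rw [intervalIntegral.integral_comp_mul_left (fun t => exp t) two_ne_zero, integral_exp,
    smul_eq_mul]
  ring

theorem integral_div_sq (ε : ℝ) {a b : ℝ} (ha : 0 < a) (hab : a ≤ b) :
    ∫ t in a..b, ε / t ^ 2 = ε / a - ε / b := by
  have hderiv : ∀ t ∈ uIcc a b, HasDerivAt (fun t => -ε * t⁻¹) (ε / t ^ 2) t := fun t ht =>
    ((hasDerivAt_inv (ha.trans_le (uIcc_of_le hab ▸ ht).1).ne').const_mul (-ε)).congr_deriv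
      (by ring)
  have hcont : ContinuousOn (fun t => ε / t ^ 2) (uIcc a b) :=
    continuousOn_const.div (by fun_prop) fun t ht =>
      pow_ne_zero 2 (ha.trans_le (uIcc_of_le hab ▸ ht).1).ne'
  rw [intervalIntegral.integral_eq_sub_of_hasDerivAt hderiv hcont.intervalIntegrable]
  ring

theorem sqrt_max_zero (x : ℝ) : √(max x 0) = √x := by
  rcases le_total 0 x with hx | hx
  · rw [max_eq_left hx]
  · rw [max_eq_right hx, sqrt_zero, sqrt_eq_zero'.2 hx]

theorem isBigO_one_nhdsGT_zero_of_abs_le {f : ℝ → ℝ} {E₀ C : ℝ} (hE₀ : 0 < E₀)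
    (h : ∀ E ∈ Ioo 0 E₀, |f E| ≤ C) : f =O[nhdsWithin 0 (Ioi 0)] (fun _ => (1 : ℝ)) :=
  IsBigO.of_bound C (eventually_of_mem (Ioo_mem_nhdsGT hE₀) fun E hE => by simpa using h E hE)

theorem abs_sub_half_abs_log_le {a b E t : ℝ} (ha : 0 < a) (hE : 0 < E) (hE1 : E < 1)
    (h : E * exp (2 * t) ∈ Icc a b) : |t - |log E| / 2| ≤ max |log a| |log b| / 2 := by
  have hlog : log (E * exp (2 * t)) = log E + 2 * t := by
    rw [log_mul hE.ne' (exp_pos _).ne', log_exp]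
  have hlo : log a ≤ log E + 2 * t := hlog ▸ log_le_log ha h.1
  have hhi : log E + 2 * t ≤ log b := hlog ▸ log_le_log (ha.trans_le h.1) h.2
  rw [abs_of_neg (log_neg hE hE1), show t - -log E / 2 = (log E + 2 * t) / 2 by ring, abs_div,
    abs_two]
  gcongr
  exact abs_le_max_abs_abs hlo hhi

noncomputable def phasePotential (η ε E t : ℝ) : ℝ := η - E * exp (2 * t) + ε / t ^ 2

section PhasePotential

variable {η ε E : ℝ}

theorem phasePotential_strictAntiOn (hε : 0 ≤ ε) (hE : 0 < E) :
    StrictAntiOn (phasePotential η ε E) (Ioi 0) := by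
  intro s hs t _ hst
  have hexp : E * exp (2 * s) < E * exp (2 * t) := by gcongr
  have hinv : ε / t ^ 2 ≤ ε / s ^ 2 := by have := hs.out; gcongr
  simp only [phasePotential]
  linarith

theorem phasePotential_continuousOn : ContinuousOn (phasePotential η ε E) (Ioi 0) :=
  (continuousOn_const.sub (by fun_prop)).add
    (continuousOn_const.div (by fun_prop) fun _ ht => pow_ne_zero 2 (ne_of_gt ht))

theorem exists_phasePotential_eq_zero (hε : 0 ≤ ε) (hE : 0 < E) {L : ℝ} (hL : 0 < L)
    (hQL : 0 < phasePotential η ε E L) : ∃ t ∈ Ioi L, phasePotential η ε E t = 0 := by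
  set M := η + ε / L ^ 2
  have hM : E * exp (2 * L) < M := by unfold phasePotential at hQL; linarith
  have hM0 : 0 < M := (by positivity : 0 < E * exp (2 * L)).trans hM
  -- at the point `T` where `E e^{2T} = M` the potential equals `ε / T² - ε / L² ≤ 0`
  set T := log (M / E) / 2
  have hET : E * exp (2 * T) = M := by
    rw [show 2 * T = log (M / E) by ring, exp_log (div_pos hM0 hE)]
    field_simp
  have hLT : L < T := by
    have : exp (2 * L) < exp (2 * T) := lt_of_mul_lt_mul_left (hET ▸ hM) hE.le
    linarith [exp_lt_exp.1 this]
  have hQT : phasePotential η ε E T ≤ 0 := by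
    have : ε / T ^ 2 ≤ ε / L ^ 2 := by gcongr
    simp only [phasePotential, hET, M]
    linarith
  obtain ⟨t, ht, hQt⟩ := intermediate_value_Ioc' hLT.le
    (phasePotential_continuousOn.mono fun s hs => hL.trans_le hs.1) ⟨hQT, hQL⟩
  exact ⟨t, ht.1, hQt⟩

theorem exists_largest_zero_phasePotential (hε : 0 ≤ ε) {L : ℝ} (hL : 0 < L) :
    ∃ t₀ : ℝ → ℝ, ∀ E, 0 < E → 0 < phasePotential η ε E L →
      t₀ E ∈ Ioi L ∧ phasePotential η ε E (t₀ E) = 0 ∧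
        ∀ t ∈ Ioi L, phasePotential η ε E t = 0 → t ≤ t₀ E := by
  choose! t₀ ht₀ hQt₀ using fun E (hE : 0 < E) => exists_phasePotential_eq_zero hε hE hL
  refine ⟨t₀, fun E hE hQL => ⟨ht₀ E hE hQL, hQt₀ E hE hQL, fun t ht hQt => ?_⟩⟩
  have hinj := (phasePotential_strictAntiOn (η := η) hε hE).injOn
  exact (hinj (hL.trans ht) (hL.trans (ht₀ E hE hQL)) (hQt.trans (hQt₀ E hE hQL).symm)).le

theorem exp_two_mul_mem_Icc_of_phasePotential_eq_zero (hε : 0 ≤ ε) {L t : ℝ} (hL : 0 < L)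
    (hLt : L ≤ t) (hQt : phasePotential η ε E t = 0) :
    E * exp (2 * t) ∈ Icc η (η + ε / L ^ 2) := by
  have hpos : 0 ≤ ε / t ^ 2 := by positivity
  have hle : ε / t ^ 2 ≤ ε / L ^ 2 := by gcongr
  unfold phasePotential at hQt
  constructor <;> linarith

theorem abs_integral_sqrt_phasePotential_sub_le (hη : 0 < η) (hε : 0 ≤ ε) (hE : 0 < E)
    {L b : ℝ} (hL : 0 < L) (hLb : L ≤ b) :
    |(∫ t in L..b, √(max (phasePotential η ε E t) 0)) - √η * (b - L)|
      ≤ (E * exp (2 * b) / 2 + ε / L) / √η := by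
  have hrw : (fun t => √(max (phasePotential η ε E t) 0))
      = fun t => √(η + (ε / t ^ 2 - E * exp (2 * t))) := by
    ext t
    rw [sqrt_max_zero, phasePotential]
    ring_nf
  have hcont : ContinuousOn (fun t => ε / t ^ 2) (Icc L b) :=
    continuousOn_const.div (by fun_prop) fun t ht => pow_ne_zero 2 (hL.trans_le ht.1).ne'
  have hexp : IntervalIntegrable (fun t => E * exp (2 * t)) volume L b := by
    apply Continuous.intervalIntegrable; fun_prop
  have hinv : IntervalIntegrable (fun t => ε / t ^ 2) volume L b :=
    hcont.intervalIntegrable_of_Icc hLb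
  have hbound : ∀ t ∈ Icc L b, |ε / t ^ 2 - E * exp (2 * t)| ≤ E * exp (2 * t) + ε / t ^ 2 :=
    fun t _ => (abs_sub _ _).trans (by rw [abs_of_nonneg (by positivity),
      abs_of_nonneg (by positivity), add_comm])
  calc |(∫ t in L..b, √(max (phasePotential η ε E t) 0)) - √η * (b - L)|
      ≤ (∫ t in L..b, (E * exp (2 * t) + ε / t ^ 2)) / √η := by
        rw [hrw]
        exact abs_integral_sqrt_add_sub_le hLb hη (hcont.sub (by fun_prop)) (hexp.add hinv) hbound
    _ = (E * ((exp (2 * b) - exp (2 * L)) / 2) + (ε / L - ε / b)) / √η := by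
        rw [intervalIntegral.integral_add hexp hinv, intervalIntegral.integral_const_mul,
          integral_exp_two_mul, integral_div_sq ε hL hLb]
    _ ≤ (E * exp (2 * b) / 2 + ε / L) / √η := by
        have : 0 ≤ E * exp (2 * L) := by positivity
        have : 0 ≤ ε / b := div_nonneg hε (hL.le.trans hLb)
        gcongr ?_ / _
        linarith

theorem abs_integral_sqrt_phasePotential_sub_half_abs_log_le (hη : 0 < η) (hε : 0 ≤ ε)
    (hE : 0 < E) {L b M C : ℝ} (hL : 0 < L) (hLb : L ≤ b) (hbM : E * exp (2 * b) ≤ M)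
    (hbC : |b - |log E| / 2| ≤ C) :
    |(∫ t in L..b, √(max (phasePotential η ε E t) 0)) - √η / 2 * (|log E|)|
      ≤ (M / 2 + ε / L) / √η + √η * (C + L) := by
  set I := ∫ t in L..b, √(max (phasePotential η ε E t) 0)
  have hI := abs_integral_sqrt_phasePotential_sub_le hη hε hE hL hLb
  have hsqrt : 0 < √η := sqrt_pos.2 hη
  calc |I - √η / 2 * (|log E|)|
      = |(I - √η * (b - L)) + √η * (b - |log E| / 2) + -(√η * L)| := by ring_nf
    _ ≤ |I - √η * (b - L)| + |√η * (b - |log E| / 2)| + |-(√η * L)| := abs_add_three _ _ _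
    _ = |I - √η * (b - L)| + √η * |b - |log E| / 2| + √η * L := by
        rw [abs_mul, abs_neg, abs_of_pos hsqrt, abs_of_pos (mul_pos hsqrt hL)]
    _ ≤ (M / 2 + ε / L) / √η + √η * (C + L) := by
        have : (E * exp (2 * b) / 2 + ε / L) / √η ≤ (M / 2 + ε / L) / √η := by gcongr
        nlinarith

end PhasePotential

/-- Phase integral asymptotics for Q_E(t) = η - E e^{2t} + ε/t²:
the largest zero t₀(E) satisfies t₀(E) = |ln E|/2 + O(1), and
∫_{ln R}^{t₀(E)} √(Q_E)₊ dt = (√η/2)|ln E| + O(1) as E ↓ 0. -/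
theorem phase_integral_asymptotics (η ε R : ℝ) (hη : 0 < η) (hε : 0 ≤ ε)
    (hR : Real.exp 1 < R) :
    ∃ E₀ : ℝ, 0 < E₀ ∧ E₀ < 1 ∧ ∃ t₀ : ℝ → ℝ,
      (∀ E : ℝ, E ∈ Ioo 0 E₀ →
        t₀ E ∈ Ioi (Real.log R)
        ∧ η - E * Real.exp (2 * t₀ E) + ε / (t₀ E)^2 = 0
        ∧ ∀ t ∈ Ioi (Real.log R),
            η - E * Real.exp (2 * t) + ε / t^2 = 0 → t ≤ t₀ E)
      ∧ (fun E => t₀ E - |Real.log E| / 2) =O[nhdsWithin 0 (Ioi 0)] (fun _ => (1:ℝ))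
      ∧ (fun E =>
          (∫ t in Real.log R..t₀ E,
            Real.sqrt (max (η - E * Real.exp (2 * t) + ε / t^2) 0))
          - Real.sqrt η / 2 * |Real.log E|)
          =O[nhdsWithin 0 (Ioi 0)] (fun _ => (1:ℝ)) := by
  have hL : 0 < log R := log_pos ((one_lt_exp_iff.2 one_pos).trans hR)
  set L := log R
  set M := η + ε / L ^ 2
  set E₀ := min (η / exp (2 * L)) (1 / 2)
  have hE₀ : 0 < E₀ := by positivity
  have hQL : ∀ E ∈ Ioo 0 E₀, 0 < phasePotential η ε E L := fun E hE => by
    have : E * exp (2 * L) < η := (lt_div_iff₀ (exp_pos _)).1 (hE.2.trans_le (min_le_left _ _))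
    have : 0 ≤ ε / L ^ 2 := by positivity
    unfold phasePotential
    linarith
  obtain ⟨t₀, ht₀⟩ := exists_largest_zero_phasePotential (η := η) hε hL
  have hzero (E) (hE : E ∈ Ioo 0 E₀) := ht₀ E hE.1 (hQL E hE)
  have hexp : ∀ E ∈ Ioo 0 E₀, E * exp (2 * t₀ E) ∈ Icc η M := fun E hE =>
    exp_two_mul_mem_Icc_of_phasePotential_eq_zero hε hL (hzero E hE).1.out.le (hzero E hE).2.1
  have ht₀_sub : ∀ E ∈ Ioo 0 E₀, |t₀ E - |log E| / 2| ≤ max |log η| |log M| / 2 :=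
    fun E hE => abs_sub_half_abs_log_le hη hE.1
      ((hE.2.trans_le (min_le_right _ _)).trans (by norm_num)) (hexp E hE)
  have hintegral : ∀ E ∈ Ioo 0 E₀,
      |(∫ t in L..t₀ E, √(max (phasePotential η ε E t) 0)) - √η / 2 * (|log E|)|
        ≤ (M / 2 + ε / L) / √η + √η * (max |log η| |log M| / 2 + L) := fun E hE =>
    abs_integral_sqrt_phasePotential_sub_half_abs_log_le hη hε hE.1 hL
      (hzero E hE).1.out.le (hexp E hE).2 (ht₀_sub E hE)
  exact ⟨E₀, hE₀, (min_le_right _ _).trans_lt (by norm_num), t₀, hzero,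
    isBigO_one_nhdsGT_zero_of_abs_le hE₀ ht₀_sub,
    isBigO_one_nhdsGT_zero_of_abs_le hE₀ hintegral⟩
end

section
/- Let d ≥ 1 and let V : ℝᵈ → ℝ be locally bounded and measurable, with W(rω) := ∫_r^∞ V(sω) ds well-defined for all ω ∈ S^{d-1}, r > 0, and suppose ε_R := sup_{r>R, ω∈S^{d-1}} |W(rω)| → 0 as R → ∞. Then for every δ > 0 there exists C_δ < ∞ such that for all u ∈ C_0^∞(ℝᵈ): |∫_{ℝᵈ} V|u|² dx| ≤ δ ∫_{ℝᵈ} |∇u|² dx + C_δ ∫_{ℝᵈ} |u|² dx. -/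
open MeasureTheory Set Real Filter

open Metric

set_option maxHeartbeats 1000000

noncomputable section



lemma key1d (R₀ T ε C₂ : ℝ) (hRT : R₀ < T) (hε : 0 ≤ ε) (φ g g' : ℝ → ℝ)
    (hφm : Measurable φ) (hφb : ∀ s ∈ Ioc R₀ T, |φ s| ≤ C₂)
    (hg : ∀ t, HasDerivAt g (g' t) t) (hg'c : Continuous g')
    (hgT : g T = 0)
    (hΦ : ∀ t ∈ Ioc R₀ T, |∫ s in Ioc R₀ t, φ s| ≤ ε) :
    |∫ s in Ioc R₀ T, φ s * g s| ≤ ε * ∫ t in Ioc R₀ T, |g' t| := by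
  set ν : Measure ℝ := volume.restrict (Ioc R₀ T) with hν
  haveI : IsFiniteMeasure ν := by
    constructor
    rw [hν, Measure.restrict_apply_univ]
    exact measure_Ioc_lt_top
  set K : ℝ × ℝ → ℝ := fun p => if p.1 ≤ p.2 then φ p.1 * g' p.2 else 0 with hK
  have hKm : Measurable K := by
    refine Measurable.ite (measurableSet_le measurable_fst measurable_snd) ?_ measurable_const
    exact (hφm.comp measurable_fst).mul (hg'c.measurable.comp measurable_snd)
  obtain ⟨M', hM'⟩ := (isCompact_Icc (a := R₀) (b := T)).exists_bound_of_continuousOn hg'c.continuousOn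
  have hKi : Integrable K (ν.prod ν) := by
    refine (integrable_const (C₂ * M')).mono' hKm.aestronglyMeasurable ?_
    rw [hν, Measure.prod_restrict]
    filter_upwards [ae_restrict_mem (measurableSet_Ioc.prod measurableSet_Ioc)] with p hp
    simp only [hK]
    split_ifs with h
    · rw [Real.norm_eq_abs, abs_mul]
      have h1 := hφb p.1 hp.1
      have h2 := hM' p.2 ⟨le_of_lt hp.2.1, hp.2.2⟩
      rw [Real.norm_eq_abs] at h2
      have h1' : (0:ℝ) ≤ |φ p.1| := abs_nonneg _
      have h2' : (0:ℝ) ≤ |g' p.2| := abs_nonneg _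
      exact mul_le_mul h1 h2 h2' (le_trans h1' h1)
    · simp only [norm_zero]
      have h1 := hφb p.1 hp.1
      have h2 := hM' p.2 ⟨le_of_lt hp.2.1, hp.2.2⟩
      rw [Real.norm_eq_abs] at h2
      exact mul_nonneg (le_trans (abs_nonneg _) h1) (le_trans (abs_nonneg _) h2)
  have hswap : ∫ s, ∫ t, K (s, t) ∂ν ∂ν = ∫ t, ∫ s, K (s, t) ∂ν ∂ν := by
    have := integral_integral_swap (μ := ν) (ν := ν) (f := fun s t => K (s, t)) ?_
    · exact this
    · exact hKi
  -- LHS : inner integral equals -(φ s * g s)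
  have hLHS : ∀ s ∈ Ioc R₀ T, ∫ t, K (s, t) ∂ν = -(φ s * g s) := by
    intro s hs
    have h1 : ∀ t : ℝ, K (s, t) = (Ici s).indicator (fun t => φ s * g' t) t := by
      intro t
      simp only [hK, indicator, mem_Ici]
    calc ∫ t, K (s, t) ∂ν = ∫ t in Ioc R₀ T, (Ici s).indicator (fun t => φ s * g' t) t := by
          rw [hν]; exact integral_congr_ae (Eventually.of_forall fun t => h1 t)
      _ = ∫ t in Ioc R₀ T ∩ Ici s, φ s * g' t := setIntegral_indicator measurableSet_Ici
      _ = ∫ t in Icc s T, φ s * g' t := by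
          have hset : Ioc R₀ T ∩ Ici s = Icc s T := by
            ext t
            simp only [mem_inter_iff, mem_Ioc, mem_Ici, mem_Icc]
            constructor
            · rintro ⟨⟨_, h2⟩, h3⟩; exact ⟨h3, h2⟩
            · rintro ⟨h1', h2⟩; exact ⟨⟨lt_of_lt_of_le hs.1 h1', h2⟩, h1'⟩
          rw [hset]
      _ = φ s * ∫ t in Icc s T, g' t := integral_const_mul _ _
      _ = -(φ s * g s) := by
          rw [integral_Icc_eq_integral_Ioc, ← intervalIntegral.integral_of_le hs.2,
            intervalIntegral.integral_eq_sub_of_hasDerivAt (fun t _ => hg t)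
              ((hg'c.intervalIntegrable s T)), hgT]
          ring
  -- RHS : inner integral equals Φ t * g' t
  have hRHS : ∀ t ∈ Ioc R₀ T, ∫ s, K (s, t) ∂ν = (∫ s in Ioc R₀ t, φ s) * g' t := by
    intro t ht
    have h1 : ∀ s : ℝ, K (s, t) = (Iic t).indicator (fun s => φ s) s * g' t := by
      intro s
      simp only [hK, indicator, mem_Iic]
      split_ifs <;> simp
    calc ∫ s, K (s, t) ∂ν = ∫ s in Ioc R₀ T, (Iic t).indicator (fun s => φ s) s * g' t := by
          rw [hν]; exact integral_congr_ae (Eventually.of_forall fun s => h1 s)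
      _ = (∫ s in Ioc R₀ T, (Iic t).indicator (fun s => φ s) s) * g' t := integral_mul_const _ _
      _ = (∫ s in Ioc R₀ T ∩ Iic t, φ s) * g' t := by rw [setIntegral_indicator measurableSet_Iic]
      _ = (∫ s in Ioc R₀ t, φ s) * g' t := by
          have hset : Ioc R₀ T ∩ Iic t = Ioc R₀ t := by
            ext s
            simp only [mem_inter_iff, mem_Ioc, mem_Iic]
            constructor
            · rintro ⟨⟨h1', _⟩, h3⟩; exact ⟨h1', h3⟩
            · rintro ⟨h1', h2⟩; exact ⟨⟨h1', le_trans h2 ht.2⟩, h2⟩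
          rw [hset]
  have hmain : ∫ s in Ioc R₀ T, φ s * g s = -∫ t, (∫ s in Ioc R₀ t, φ s) * g' t ∂ν := by
    have e1 : ∫ s, ∫ t, K (s, t) ∂ν ∂ν = -∫ s in Ioc R₀ T, φ s * g s := by
      rw [hν]
      rw [setIntegral_congr_fun measurableSet_Ioc (fun s hs => hLHS s hs)]
      exact integral_neg _
    have e2 : ∫ t, ∫ s, K (s, t) ∂ν ∂ν = ∫ t, (∫ s in Ioc R₀ t, φ s) * g' t ∂ν := by
      rw [hν]
      exact setIntegral_congr_fun measurableSet_Ioc (fun t ht => hRHS t ht)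
    have := hswap
    rw [e1, e2] at this
    linarith
  rw [hmain, abs_neg]
  calc |∫ t, (∫ s in Ioc R₀ t, φ s) * g' t ∂ν| ≤ ∫ t, |(∫ s in Ioc R₀ t, φ s) * g' t| ∂ν := by
        simpa only [Real.norm_eq_abs] using
          norm_integral_le_integral_norm (fun t => (∫ s in Ioc R₀ t, φ s) * g' t) (μ := ν)
    _ ≤ ∫ t, ε * |g' t| ∂ν := by
        refine integral_mono_of_nonneg (Eventually.of_forall fun t => abs_nonneg _) ?_ ?_
        · exact (((continuous_const.mul hg'c.abs : Continuous fun t => ε * |g' t|).continuousOn.integrableOn_compact isCompact_Icc)).mono_set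
            Ioc_subset_Icc_self
        · rw [hν]
          filter_upwards [ae_restrict_mem measurableSet_Ioc] with t ht
          rw [abs_mul]
          exact mul_le_mul_of_nonneg_right (hΦ t ht) (abs_nonneg _)
    _ = ε * ∫ t in Ioc R₀ T, |g' t| := by rw [hν, integral_const_mul]

-- helper: integrable on Ioi a given bound on (a,T] and vanishing beyond T
lemma integrableOn_Ioi_of_bound (h : ℝ → ℝ) (a T M : ℝ) (haT : a ≤ T)
    (hm : AEStronglyMeasurable h (volume.restrict (Ioi a)))
    (hb : ∀ r ∈ Ioc a T, |h r| ≤ M) (h0 : ∀ r, T < r → h r = 0) :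
    IntegrableOn h (Ioi a) := by
  rw [← Ioc_union_Ioi_eq_Ioi haT]
  apply IntegrableOn.union
  · haveI : IsFiniteMeasure (volume.restrict (Ioc a T)) :=
      ⟨by rw [Measure.restrict_apply_univ]; exact measure_Ioc_lt_top⟩
    refine (integrable_const M).mono'
      (hm.mono_measure (Measure.restrict_mono_set _ Ioc_subset_Ioi_self)) ?_
    filter_upwards [ae_restrict_mem measurableSet_Ioc] with r hr
    rw [Real.norm_eq_abs]; exact hb r hr
  · exact (integrableOn_congr_fun (fun r hr => h0 r hr) measurableSet_Ioi).mpr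
      (integrableOn_zero)

variable {d : ℕ}

local notation "E" => EuclideanSpace ℝ (Fin d)

lemma per_omega (n : ℕ) (hdn : n + 1 = d)
    (V : E → ℝ) (hVmeas : Measurable V)
    (hVloc : ∀ K : Set E, IsCompact K → ∃ C : ℝ, ∀ x ∈ K, |V x| ≤ C)
    (u : E → ℝ) (hu : ContDiff ℝ (⊤ : ℕ∞) u)
    (δ C R₀ T Mu MD : ℝ) (hδ : 0 < δ) (hC : 0 ≤ C) (hR₀ : 1 < R₀) (hT : R₀ < T)
    (hMu : ∀ x : E, |u x| ≤ Mu) (hMD : ∀ x : E, ‖fderiv ℝ u x‖ ≤ MD)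
    (hCb : ∀ x ∈ closedBall (0:E) R₀, |V x| ≤ C)
    (hTu : ∀ x : E, T ≤ ‖x‖ → u x = 0 ∧ fderiv ℝ u x = 0)
    (ω : E) (hω : ‖ω‖ = 1)
    (hΦ : ∀ t ∈ Ioc R₀ T, |∫ s in Ioc R₀ t, V (s • ω)| ≤ δ / 2) :
    |∫ r in Ioi (0:ℝ), r ^ n * (V (r • ω) * u (r • ω) ^ 2)|
      ≤ ∫ r in Ioi (0:ℝ), r ^ n *
          (C * (closedBall (0:E) R₀).indicator (fun y => u y ^ 2) (r • ω)
            + (δ / 2) * (‖fderiv ℝ u (r • ω)‖ ^ 2 + d * u (r • ω) ^ 2)) := by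
  have hu_cont : Continuous u := hu.continuous
  have hDu_cont : Continuous (fderiv ℝ u) := (hu.fderiv_right (m := (⊤ : ℕ∞)) (by simp)).continuous
  have hc_cont : Continuous (fun r : ℝ => r • ω) := continuous_id.smul continuous_const
  have hc_meas : Measurable (fun r : ℝ => r • ω) := hc_cont.measurable
  have hnorm : ∀ r : ℝ, 0 ≤ r → ‖r • ω‖ = r := fun r hr => by
    rw [norm_smul, hω, mul_one, Real.norm_eq_abs, abs_of_nonneg hr]
  have hR₀0 : (0:ℝ) < R₀ := lt_trans one_pos hR₀
  have hT1 : (1:ℝ) < T := lt_trans hR₀ hT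
  have hT0 : (0:ℝ) < T := lt_trans one_pos hT1
  have hMu0 : 0 ≤ Mu := le_trans (abs_nonneg _) (hMu 0)
  have hMD0 : 0 ≤ MD := le_trans (norm_nonneg _) (hMD 0)
  -- the functions
  set φ : ℝ → ℝ := fun s => V (s • ω) with hφdef
  set g : ℝ → ℝ := fun t => t ^ n * u (t • ω) ^ 2 with hgdef
  set g' : ℝ → ℝ := fun t =>
      ↑n * t ^ (n - 1) * u (t • ω) ^ 2
        + t ^ n * (↑(2:ℕ) * u (t • ω) ^ (2 - 1) * ((fderiv ℝ u (t • ω)) ω)) with hg'def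
  have hφm : Measurable φ := hVmeas.comp hc_meas
  have hucω : Continuous fun t : ℝ => u (t • ω) := hu_cont.comp hc_cont
  have hDucω : Continuous fun t : ℝ => (fderiv ℝ u (t • ω)) ω :=
    Continuous.clm_apply (hDu_cont.comp hc_cont) continuous_const
  have hg : ∀ t : ℝ, HasDerivAt g (g' t) t := by
    intro t
    have hsm : HasDerivAt (fun s : ℝ => s • ω) ω t := by
      simpa using (hasDerivAt_id t).smul_const ω
    have hu1 : HasDerivAt (fun s : ℝ => u (s • ω)) ((fderiv ℝ u (t • ω)) ω) t :=
      ((hu.differentiable (by simp) (t • ω)).hasFDerivAt).comp_hasDerivAt t hsm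
    exact (hasDerivAt_pow n t).mul (hu1.pow 2)
  have hg'c : Continuous g' := by
    apply Continuous.add
    · exact (continuous_const.mul (continuous_pow (n-1))).mul (hucω.pow 2)
    · exact (continuous_pow n).mul ((continuous_const.mul (hucω.pow (2-1))).mul hDucω)
  -- pointwise bound for |g'| on Ioc R₀ T
  have hg'bound : ∀ t ∈ Ioc R₀ T, |g' t|
      ≤ t ^ n * (‖fderiv ℝ u (t • ω)‖ ^ 2 + d * u (t • ω) ^ 2) := by
    intro t ht
    have ht1 : (1:ℝ) ≤ t := le_of_lt (lt_trans hR₀ ht.1)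
    have ht0 : (0:ℝ) ≤ t := le_trans zero_le_one ht1
    have htn : t ^ (n-1) ≤ t ^ n := pow_le_pow_right₀ ht1 (Nat.sub_le n 1)
    have habs : |g' t| ≤ ↑n * t ^ (n - 1) * u (t • ω) ^ 2
        + t ^ n * (2 * |u (t • ω)| * ‖fderiv ℝ u (t • ω)‖) := by
      rw [hg'def]
      refine le_trans (abs_add_le _ _) (add_le_add ?_ ?_)
      · rw [abs_mul, abs_mul]
        have : |u (t • ω) ^ 2| = u (t • ω) ^ 2 := abs_of_nonneg (sq_nonneg _)
        rw [this, abs_of_nonneg (by positivity : (0:ℝ) ≤ (n:ℝ)),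
          abs_of_nonneg (pow_nonneg ht0 _)]
      · rw [abs_mul, abs_of_nonneg (pow_nonneg ht0 n)]
        refine mul_le_mul_of_nonneg_left ?_ (pow_nonneg ht0 n)
        have h1 : |((fderiv ℝ u (t • ω)) ω)| ≤ ‖fderiv ℝ u (t • ω)‖ := by
          have h := (fderiv ℝ u (t • ω)).le_opNorm ω
          rw [hω, mul_one] at h
          exact le_trans (le_of_eq (Real.norm_eq_abs _).symm) h
        have hn2 : (0:ℝ) ≤ 2 * |u (t • ω)| := by positivity
        calc |↑(2:ℕ) * u (t • ω) ^ (2 - 1) * ((fderiv ℝ u (t • ω)) ω)|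
            = 2 * |u (t • ω)| * |((fderiv ℝ u (t • ω)) ω)| := by
              simp [abs_mul]
          _ ≤ 2 * |u (t • ω)| * ‖fderiv ℝ u (t • ω)‖ :=
              mul_le_mul_of_nonneg_left h1 hn2
    have h2ab : 2 * |u (t • ω)| * ‖fderiv ℝ u (t • ω)‖
        ≤ u (t • ω) ^ 2 + ‖fderiv ℝ u (t • ω)‖ ^ 2 := by
      have := sq_nonneg (|u (t • ω)| - ‖fderiv ℝ u (t • ω)‖)
      have habs2 : |u (t • ω)| ^ 2 = u (t • ω) ^ 2 := sq_abs _
      nlinarith [abs_nonneg (u (t • ω)), norm_nonneg (fderiv ℝ u (t • ω))]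
    have hterm1 : ↑n * t ^ (n - 1) * u (t • ω) ^ 2 ≤ ↑n * t ^ n * u (t • ω) ^ 2 := by
      have hn0 : (0:ℝ) ≤ (n:ℝ) := by positivity
      have h2 := mul_le_mul_of_nonneg_right htn (sq_nonneg (u (t • ω)))
      calc (↑n : ℝ) * t ^ (n - 1) * u (t • ω) ^ 2 = ↑n * (t ^ (n-1) * u (t • ω) ^ 2) := by ring
        _ ≤ ↑n * (t ^ n * u (t • ω) ^ 2) := mul_le_mul_of_nonneg_left h2 hn0
        _ = ↑n * t ^ n * u (t • ω) ^ 2 := by ring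
    calc |g' t| ≤ ↑n * t ^ (n - 1) * u (t • ω) ^ 2
          + t ^ n * (2 * |u (t • ω)| * ‖fderiv ℝ u (t • ω)‖) := habs
      _ ≤ ↑n * t ^ n * u (t • ω) ^ 2
          + t ^ n * (u (t • ω) ^ 2 + ‖fderiv ℝ u (t • ω)‖ ^ 2) := by
          refine add_le_add hterm1 (mul_le_mul_of_nonneg_left h2ab (pow_nonneg ht0 n))
      _ = t ^ n * (‖fderiv ℝ u (t • ω)‖ ^ 2 + (↑n + 1) * u (t • ω) ^ 2) := by ring
      _ = t ^ n * (‖fderiv ℝ u (t • ω)‖ ^ 2 + ↑d * u (t • ω) ^ 2) := by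
          have : ((n:ℝ) + 1) = (d:ℝ) := by
            rw [← hdn]; push_cast; ring
          rw [this]
  -- V bounds from local boundedness
  obtain ⟨C₂, hC₂⟩ := hVloc ((fun s : ℝ => s • ω) '' Icc R₀ T) (isCompact_Icc.image hc_cont)
  obtain ⟨C₃, hC₃⟩ := hVloc ((fun s : ℝ => s • ω) '' Icc 0 T) (isCompact_Icc.image hc_cont)
  have hC₃0 : 0 ≤ C₃ := le_trans (abs_nonneg _)
    (hC₃ _ ⟨0, ⟨le_rfl, hT0.le⟩, rfl⟩)
  have hφb : ∀ s ∈ Ioc R₀ T, |φ s| ≤ C₂ := fun s hs => hC₂ _ ⟨s, ⟨hs.1.le, hs.2⟩, rfl⟩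
  have hgT : g T = 0 := by
    have := (hTu (T • ω) (by rw [hnorm T hT0.le])).1
    simp only [hgdef, this]
    ring
  have key := key1d R₀ T (δ/2) C₂ hT (by linarith) φ g g' hφm hφb hg hg'c hgT hΦ
  -- bounds on u
  have hMub : ∀ x : E, u x ^ 2 ≤ Mu ^ 2 := fun x => by
    have := hMu x
    nlinarith [abs_nonneg (u x), sq_abs (u x)]
  have hMDb : ∀ x : E, ‖fderiv ℝ u x‖ ^ 2 ≤ MD ^ 2 := fun x => by
    have := hMD x
    nlinarith [norm_nonneg (fderiv ℝ u x)]
  -- the two majorant pieces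
  set F1 : ℝ → ℝ := fun r =>
    r ^ n * (C * (closedBall (0:E) R₀).indicator (fun y => u y ^ 2) (r • ω)) with hF1def
  set F2 : ℝ → ℝ := fun r =>
    r ^ n * ((δ / 2) * (‖fderiv ℝ u (r • ω)‖ ^ 2 + d * u (r • ω) ^ 2)) with hF2def
  have hind_cases : ∀ x : E,
      (closedBall (0:E) R₀).indicator (fun y => u y ^ 2) x = u x ^ 2 ∨
      (closedBall (0:E) R₀).indicator (fun y => u y ^ 2) x = 0 := by
    intro x
    by_cases h : x ∈ closedBall (0:E) R₀
    · left; simp [h]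
    · right; simp [h]
  have hind_nonneg : ∀ x : E, 0 ≤ (closedBall (0:E) R₀).indicator (fun y => u y ^ 2) x := by
    intro x; rcases hind_cases x with h | h <;> rw [h]
    exact sq_nonneg _
  have hind_le : ∀ x : E, (closedBall (0:E) R₀).indicator (fun y => u y ^ 2) x ≤ Mu ^ 2 := by
    intro x; rcases hind_cases x with h | h <;> rw [h]
    · exact hMub x
    · positivity
  have hgm : Measurable g := (measurable_id.pow_const n).mul ((hucω.pow 2).measurable)
  have hzero_tail : ∀ r : ℝ, T < r → u (r • ω) = 0 ∧ fderiv ℝ u (r • ω) = 0 := by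
    intro r hr
    exact hTu (r • ω) (by rw [hnorm r (le_trans hT0.le hr.le)]; exact hr.le)
  -- integrability of φ*g on (0,∞)
  have iφg : IntegrableOn (fun r => φ r * g r) (Ioi (0:ℝ)) := by
    apply integrableOn_Ioi_of_bound _ 0 T (C₃ * (T ^ n * Mu ^ 2)) hT0.le
      ((hφm.mul hgm).aestronglyMeasurable)
    · intro r hr
      have hr0 : (0:ℝ) ≤ r := hr.1.le
      have hgr : |g r| = r ^ n * u (r • ω) ^ 2 := by
        rw [hgdef]
        exact abs_of_nonneg (mul_nonneg (pow_nonneg hr0 n) (sq_nonneg _))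
      rw [Pi.mul_apply, abs_mul, hgr]
      have h1 : |φ r| ≤ C₃ := hC₃ _ ⟨r, ⟨hr0, hr.2⟩, rfl⟩
      have h2 : r ^ n * u (r • ω) ^ 2 ≤ T ^ n * Mu ^ 2 := by
        have := pow_le_pow_left₀ hr0 hr.2 n
        have := hMub (r • ω)
        nlinarith [pow_nonneg hr0 n, sq_nonneg (u (r • ω)), pow_nonneg hT0.le n]
      exact mul_le_mul h1 h2 (mul_nonneg (pow_nonneg hr0 n) (sq_nonneg _)) hC₃0
    · intro r hr
      have := (hzero_tail r hr).1
      simp only [Pi.mul_apply, hgdef, this]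
      ring
  -- integrability of F1 on (0,∞)
  have iF1 : IntegrableOn F1 (Ioi (0:ℝ)) := by
    apply integrableOn_Ioi_of_bound _ 0 T (T ^ n * (C * Mu ^ 2)) hT0.le
    · exact ((measurable_id.pow_const n).mul (measurable_const.mul
        (((hu_cont.measurable.pow_const 2).indicator measurableSet_closedBall).comp
          hc_meas))).aestronglyMeasurable
    · intro r hr
      have hr0 : (0:ℝ) ≤ r := hr.1.le
      have habs : |F1 r| = F1 r := abs_of_nonneg (by
        exact mul_nonneg (pow_nonneg hr0 n) (mul_nonneg hC (hind_nonneg _)))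
      rw [habs, hF1def]
      have h1 : r ^ n ≤ T ^ n := pow_le_pow_left₀ hr0 hr.2 n
      have h2 : C * (closedBall (0:E) R₀).indicator (fun y => u y ^ 2) (r • ω) ≤ C * Mu ^ 2 :=
        mul_le_mul_of_nonneg_left (hind_le _) hC
      exact mul_le_mul h1 h2 (mul_nonneg hC (hind_nonneg _)) (pow_nonneg hT0.le n)
    · intro r hr
      have h0 := (hzero_tail r hr).1
      have : (closedBall (0:E) R₀).indicator (fun y => u y ^ 2) (r • ω) = 0 := by
        rcases hind_cases (r • ω) with h | h
        · rw [h, h0]; ring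
        · exact h
      simp only [hF1def, this]
      ring
  -- integrability of F2 on (0,∞)
  have iF2 : IntegrableOn F2 (Ioi (0:ℝ)) := by
    apply integrableOn_Ioi_of_bound _ 0 T (T ^ n * ((δ/2) * (MD ^ 2 + d * Mu ^ 2))) hT0.le
    · exact ((continuous_pow n).mul (continuous_const.mul
        (((hDu_cont.comp hc_cont).norm.pow 2).add
          (continuous_const.mul (hucω.pow 2))))).aestronglyMeasurable
    · intro r hr
      have hr0 : (0:ℝ) ≤ r := hr.1.le
      have hnn : (0:ℝ) ≤ (δ/2) * (‖fderiv ℝ u (r • ω)‖ ^ 2 + d * u (r • ω) ^ 2) := by positivity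
      have habs : |F2 r| = F2 r := abs_of_nonneg (mul_nonneg (pow_nonneg hr0 n) hnn)
      rw [habs, hF2def]
      have h1 : r ^ n ≤ T ^ n := pow_le_pow_left₀ hr0 hr.2 n
      have h2 : (δ/2) * (‖fderiv ℝ u (r • ω)‖ ^ 2 + ↑d * u (r • ω) ^ 2)
          ≤ (δ/2) * (MD ^ 2 + ↑d * Mu ^ 2) := by
        have hA := hMDb (r • ω)
        have hB := hMub (r • ω)
        have hd0 : (0:ℝ) ≤ (d:ℝ) := by positivity
        have hdB := mul_le_mul_of_nonneg_left hB hd0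
        have hsum : ‖fderiv ℝ u (r • ω)‖ ^ 2 + ↑d * u (r • ω) ^ 2 ≤ MD ^ 2 + ↑d * Mu ^ 2 := by
          linarith
        have := mul_le_mul_of_nonneg_left hsum (by linarith : (0:ℝ) ≤ δ/2)
        linarith
      exact mul_le_mul h1 h2 hnn (pow_nonneg hT0.le n)
    · intro r hr
      obtain ⟨h0, h0'⟩ := hzero_tail r hr
      simp only [hF2def, h0, h0']
      simp
  -- rewrite LHS integrand
  have hLHSeq : ∫ r in Ioi (0:ℝ), r ^ n * (V (r • ω) * u (r • ω) ^ 2)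
      = ∫ r in Ioi (0:ℝ), φ r * g r := by
    refine integral_congr_ae (Eventually.of_forall fun r => ?_)
    simp only [hφdef, hgdef]
    ring
  -- split the integral
  have hIoc0_sub : Ioc (0:ℝ) R₀ ⊆ Ioi 0 := Ioc_subset_Ioi_self
  have hIoiR₀_sub : Ioi R₀ ⊆ Ioi (0:ℝ) := Ioi_subset_Ioi hR₀0.le
  have hIocRT_sub : Ioc R₀ T ⊆ Ioi (0:ℝ) := fun x hx => lt_trans hR₀0 hx.1
  have hsplit : ∫ r in Ioi (0:ℝ), φ r * g r
      = (∫ r in Ioc (0:ℝ) R₀, φ r * g r) + ∫ r in Ioi R₀, φ r * g r := by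
    rw [← Ioc_union_Ioi_eq_Ioi hR₀0.le]
    exact setIntegral_union (Ioc_disjoint_Ioi le_rfl) measurableSet_Ioi
      (iφg.mono_set hIoc0_sub) (iφg.mono_set hIoiR₀_sub)
  have houter : ∫ r in Ioi R₀, φ r * g r = ∫ r in Ioc R₀ T, φ r * g r := by
    rw [← Ioc_union_Ioi_eq_Ioi hT.le,
      setIntegral_union (Ioc_disjoint_Ioi le_rfl) measurableSet_Ioi
        (iφg.mono_set (fun x hx => lt_trans hR₀0 hx.1))
        (iφg.mono_set (fun x hx => lt_trans hT0 hx))]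
    have hz : ∫ r in Ioi T, φ r * g r = 0 := by
      have heq : EqOn (fun r => φ r * g r) (fun _ => (0:ℝ)) (Ioi T) := fun r hr => by
        simp only [hφdef, hgdef, (hzero_tail r hr).1]
        ring
      rw [setIntegral_congr_fun measurableSet_Ioi heq]
      simp
    rw [hz, add_zero]
  -- inner region estimate
  have h1 : |∫ r in Ioc (0:ℝ) R₀, φ r * g r| ≤ ∫ r in Ioi (0:ℝ), F1 r := by
    calc |∫ r in Ioc (0:ℝ) R₀, φ r * g r| ≤ ∫ r in Ioc (0:ℝ) R₀, |φ r * g r| := by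
          simpa only [Real.norm_eq_abs] using
            norm_integral_le_integral_norm (μ := volume.restrict (Ioc (0:ℝ) R₀))
              (fun r => φ r * g r)
      _ ≤ ∫ r in Ioc (0:ℝ) R₀, F1 r := by
          refine setIntegral_mono_on ((iφg.mono_set hIoc0_sub).abs)
            (iF1.mono_set hIoc0_sub) measurableSet_Ioc ?_
          intro r hr
          have hr0 : (0:ℝ) ≤ r := hr.1.le
          have hmem : r • ω ∈ closedBall (0:E) R₀ := by
            rw [mem_closedBall_zero_iff, hnorm r hr0]
            exact hr.2
          have hindval : (closedBall (0:E) R₀).indicator (fun y => u y ^ 2) (r • ω)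
              = u (r • ω) ^ 2 := indicator_of_mem hmem _
          have hgr : |g r| = r ^ n * u (r • ω) ^ 2 := by
            rw [hgdef]
            exact abs_of_nonneg (mul_nonneg (pow_nonneg hr0 n) (sq_nonneg _))
          have hVb : |φ r| ≤ C := hCb _ hmem
          rw [abs_mul, hgr]
          simp only [hF1def, hindval]
          calc |φ r| * (r ^ n * u (r • ω) ^ 2) ≤ C * (r ^ n * u (r • ω) ^ 2) :=
                mul_le_mul_of_nonneg_right hVb
                  (mul_nonneg (pow_nonneg hr0 n) (sq_nonneg _))
            _ = r ^ n * (C * u (r • ω) ^ 2) := by ring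
      _ ≤ ∫ r in Ioi (0:ℝ), F1 r := by
          refine setIntegral_mono_set iF1 ?_ hIoc0_sub.eventuallyLE
          filter_upwards [ae_restrict_mem measurableSet_Ioi] with r hr
          exact mul_nonneg (pow_nonneg (le_of_lt hr) n) (mul_nonneg hC (hind_nonneg _))
  -- outer region estimate
  have h2 : |∫ r in Ioc R₀ T, φ r * g r| ≤ ∫ r in Ioi (0:ℝ), F2 r := by
    refine le_trans key ?_
    have ig' : IntegrableOn (fun t => |g' t|) (Ioc R₀ T) :=
      (hg'c.abs.continuousOn.integrableOn_compact isCompact_Icc).mono_set Ioc_subset_Icc_self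
    have ibnd : IntegrableOn
        (fun t => t ^ n * (‖fderiv ℝ u (t • ω)‖ ^ 2 + ↑d * u (t • ω) ^ 2)) (Ioc R₀ T) := by
      refine (((continuous_pow n).mul (((hDu_cont.comp hc_cont).norm.pow 2).add
        (continuous_const.mul (hucω.pow 2)))).continuousOn.integrableOn_compact
          isCompact_Icc).mono_set Ioc_subset_Icc_self
    calc (δ/2) * ∫ t in Ioc R₀ T, |g' t|
        ≤ (δ/2) * ∫ t in Ioc R₀ T, t ^ n * (‖fderiv ℝ u (t • ω)‖ ^ 2 + ↑d * u (t • ω) ^ 2) := by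
          refine mul_le_mul_of_nonneg_left
            (setIntegral_mono_on ig' ibnd measurableSet_Ioc hg'bound) (by linarith)
      _ = ∫ t in Ioc R₀ T, F2 t := by
          rw [← integral_const_mul]
          refine integral_congr_ae (Eventually.of_forall fun t => ?_)
          simp only [hF2def]
          ring
      _ ≤ ∫ t in Ioi (0:ℝ), F2 t := by
          refine setIntegral_mono_set iF2 ?_ hIocRT_sub.eventuallyLE
          filter_upwards [ae_restrict_mem measurableSet_Ioi] with r hr
          exact mul_nonneg (pow_nonneg (le_of_lt hr) n) (by positivity)
  -- assemble
  calc |∫ r in Ioi (0:ℝ), r ^ n * (V (r • ω) * u (r • ω) ^ 2)|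
      = |(∫ r in Ioc (0:ℝ) R₀, φ r * g r) + ∫ r in Ioc R₀ T, φ r * g r| := by
        rw [hLHSeq, hsplit, houter]
    _ ≤ |∫ r in Ioc (0:ℝ) R₀, φ r * g r| + |∫ r in Ioc R₀ T, φ r * g r| := abs_add_le _ _
    _ ≤ (∫ r in Ioi (0:ℝ), F1 r) + ∫ r in Ioi (0:ℝ), F2 r := add_le_add h1 h2
    _ = ∫ r in Ioi (0:ℝ), (F1 r + F2 r) := (integral_add iF1 iF2).symm
    _ = _ := by
        refine integral_congr_ae (Eventually.of_forall fun r => ?_)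
        simp only [hF1def, hF2def]
        ring




lemma polar_aux (hd : 1 ≤ d) (f : E → ℝ) (hf : Integrable f) :
    Integrable (fun p : sphere (0:E) 1 × Ioi (0:ℝ) => f (p.2.1 • p.1.1))
      ((volume : Measure E).toSphere.prod
        (Measure.volumeIoiPow (Module.finrank ℝ (EuclideanSpace ℝ (Fin d)) - 1))) := by
  have hdim : Module.finrank ℝ (EuclideanSpace ℝ (Fin d)) = d := finrank_euclideanSpace_fin
  haveI : Nontrivial E := by
    refine Module.nontrivial_of_finrank_pos (R := ℝ) (M := E) ?_
    rw [hdim]; omega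
  set μ : Measure E := volume
  set F : sphere (0:E) 1 × Ioi (0:ℝ) → ℝ := fun p => f (p.2.1 • p.1.1) with hF
  have hcomp : ∀ x : ({0}ᶜ : Set E), f x.1 = F (homeomorphUnitSphereProd E x) := by
    intro x
    have := (homeomorphUnitSphereProd E).symm_apply_apply x
    rw [hF]
    conv_lhs => rw [← this]
    rw [homeomorphUnitSphereProd_symm_apply_coe]
  rw [← μ.measurePreserving_homeomorphUnitSphereProd.integrable_comp_emb
    (Homeomorph.measurableEmbedding _)]
  have : (F ∘ (homeomorphUnitSphereProd E)) = fun x : ({0}ᶜ : Set E) => f x.1 := by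
    ext x; exact (hcomp x).symm
  rw [this]
  have hmap : Measure.map Subtype.val (μ.comap Subtype.val) = μ.restrict ({(0:E)}ᶜ) :=
    map_comap_subtype_coe (measurableSet_singleton (0:E)).compl μ
  have h := (MeasurableEmbedding.subtype_coe
    (measurableSet_singleton (0:E)).compl).integrable_map_iff (g := f) (μ := μ.comap Subtype.val)
  rw [hmap] at h
  exact h.mp hf.restrict

lemma integral_volumeIoiPow' (n : ℕ) (f : ℝ → ℝ) :
    ∫ x : Ioi (0:ℝ), f x.1 ∂(Measure.volumeIoiPow n) = ∫ r in Ioi (0:ℝ), r ^ n * f r := by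
  rw [Measure.volumeIoiPow]
  simp only [ENNReal.ofReal]
  rw [integral_withDensity_eq_integral_smul
      ((measurable_subtype_coe.pow_const _).real_toNNReal) (fun x : Ioi (0:ℝ) => f x.1),
    integral_subtype_comap measurableSet_Ioi (fun a : ℝ => (a ^ n).toNNReal • f a)]
  refine setIntegral_congr_fun measurableSet_Ioi fun x hx => ?_
  rw [NNReal.smul_def, Real.coe_toNNReal _ (pow_nonneg (le_of_lt hx) _), smul_eq_mul]

lemma polar_integral (hd : 1 ≤ d) (f : E → ℝ) (hf : Integrable f) :
    ∫ x, f x = ∫ ω : sphere (0:E) 1,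
      ∫ r in Ioi (0:ℝ), r ^ (d - 1) * f (r • ω.1) ∂(volume) ∂((volume : Measure E).toSphere) := by
  have hdim : Module.finrank ℝ (EuclideanSpace ℝ (Fin d)) = d := finrank_euclideanSpace_fin
  haveI : Nontrivial E := by
    refine Module.nontrivial_of_finrank_pos (R := ℝ) (M := E) ?_
    rw [hdim]; omega
  set μ : Measure E := volume
  set F : sphere (0:E) 1 × Ioi (0:ℝ) → ℝ := fun p => f (p.2.1 • p.1.1) with hF
  have hcomp : ∀ x : ({0}ᶜ : Set E), f x.1 = F (homeomorphUnitSphereProd E x) := by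
    intro x
    have := (homeomorphUnitSphereProd E).symm_apply_apply x
    rw [hF]
    conv_lhs => rw [← this]
    rw [homeomorphUnitSphereProd_symm_apply_coe]
  have h1 : ∫ x, f x ∂μ = ∫ x : ({0}ᶜ : Set E), f x.1 ∂(μ.comap Subtype.val) := by
    rw [integral_subtype_comap (measurableSet_singleton _).compl fun x => f x,
      MeasureTheory.restrict_compl_singleton]
  have h2 := μ.measurePreserving_homeomorphUnitSphereProd.integral_comp
      (Homeomorph.measurableEmbedding _) F
  have hFi := polar_aux hd f hf
  calc ∫ x, f x ∂μ
      = ∫ x : ({0}ᶜ : Set E), F (homeomorphUnitSphereProd E x) ∂(μ.comap Subtype.val) := by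
        rw [h1]; exact integral_congr_ae (Eventually.of_forall hcomp)
    _ = ∫ p, F p ∂(μ.toSphere.prod (Measure.volumeIoiPow (Module.finrank ℝ E - 1))) := h2
    _ = ∫ ω : sphere (0:E) 1, ∫ r : Ioi (0:ℝ),
          F (ω, r) ∂(Measure.volumeIoiPow (Module.finrank ℝ E - 1)) ∂μ.toSphere :=
        integral_prod F hFi
    _ = _ := by
        refine integral_congr_ae (Eventually.of_forall fun ω => ?_)
        rw [hdim]
        exact integral_volumeIoiPow' (d-1) (fun r => f (r • ω.1))

lemma polar_integrable (hd : 1 ≤ d) (f : E → ℝ) (hf : Integrable f) :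
    Integrable (fun ω : sphere (0:E) 1 => ∫ r in Ioi (0:ℝ), r ^ (d - 1) * f (r • ω.1))
      ((volume : Measure E).toSphere) := by
  have hdim : Module.finrank ℝ (EuclideanSpace ℝ (Fin d)) = d := finrank_euclideanSpace_fin
  have hFi := polar_aux hd f hf
  have := hFi.integral_prod_left
  refine this.congr (Eventually.of_forall fun ω => ?_)
  rw [hdim]
  exact integral_volumeIoiPow' (d-1) (fun r => f (r • ω.1))

end

/-- Infinitesimal form-boundedness of a potential with decaying ray tail integrals:
|∫ V|u|²| ≤ δ ∫|∇u|² + C_δ ∫|u|². -/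

theorem infinitesimal_form_bound (d : ℕ) (hd : 1 ≤ d)
    (V : EuclideanSpace ℝ (Fin d) → ℝ) (hVmeas : Measurable V)
    (hVloc : ∀ K : Set (EuclideanSpace ℝ (Fin d)), IsCompact K →
      ∃ C : ℝ, ∀ x ∈ K, |V x| ≤ C)
    (W : ℝ → EuclideanSpace ℝ (Fin d) → ℝ)
    (hW : ∀ ω : EuclideanSpace ℝ (Fin d), ‖ω‖ = 1 → ∀ r : ℝ, 0 < r →
      Tendsto (fun b => ∫ s in r..b, V (s • ω)) atTop (nhds (W r ω)))
    (hWdecay : ∀ δ : ℝ, 0 < δ → ∃ R : ℝ, ∀ r : ℝ, R < r →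
      ∀ ω : EuclideanSpace ℝ (Fin d), ‖ω‖ = 1 → |W r ω| ≤ δ) :
    ∀ δ : ℝ, 0 < δ → ∃ Cδ : ℝ,
      ∀ u : EuclideanSpace ℝ (Fin d) → ℝ,
        ContDiff ℝ (⊤ : ℕ∞) u → HasCompactSupport u →
        |∫ x, V x * |u x|^2|
          ≤ δ * (∫ x, ‖fderiv ℝ u x‖^2) + Cδ * ∫ x, |u x|^2 := by
  intro δ hδ
  have hdn : (d - 1) + 1 = d := by omega
  obtain ⟨R, hR⟩ := hWdecay (δ/4) (by linarith)
  set R₀ : ℝ := max R 1 + 1 with hR₀def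
  have hR₀1 : 1 < R₀ := by
    have := le_max_right R 1
    simp only [hR₀def]; linarith
  have hRR₀ : R < R₀ := by
    have := le_max_left R 1
    simp only [hR₀def]; linarith
  have hR₀0 : (0:ℝ) < R₀ := lt_trans one_pos hR₀1
  obtain ⟨C, hCb⟩ := hVloc (closedBall 0 R₀) (isCompact_closedBall _ _)
  have hC : 0 ≤ C := le_trans (abs_nonneg _) (hCb 0 (mem_closedBall_self hR₀0.le))
  refine ⟨C + δ * d, ?_⟩
  intro u hu hsupp
  have hu_cont : Continuous u := hu.continuous
  have hDu_cont : Continuous (fderiv ℝ u) := (hu.fderiv_right (m := (⊤ : ℕ∞)) (by simp)).continuous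
  -- global bounds
  obtain ⟨Mu, hMu'⟩ := hu_cont.bounded_above_of_compact_support hsupp
  have hMu : ∀ x, |u x| ≤ Mu := fun x => by
    have := hMu' x; rwa [Real.norm_eq_abs] at this
  obtain ⟨MD, hMD⟩ := hDu_cont.bounded_above_of_compact_support (hsupp.fderiv (𝕜 := ℝ))
  -- choice of T
  obtain ⟨M, hM⟩ := ((hsupp.union (hsupp.fderiv (𝕜 := ℝ))).isBounded).subset_closedBall (0 : EuclideanSpace ℝ (Fin d))
  set T : ℝ := max M R₀ + 1 with hTdef
  have hT : R₀ < T := by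
    have := le_max_right M R₀
    simp only [hTdef]; linarith
  have hMT : M < T := by
    have := le_max_left M R₀
    simp only [hTdef]; linarith
  have hTu : ∀ x : EuclideanSpace ℝ (Fin d), T ≤ ‖x‖ → u x = 0 ∧ fderiv ℝ u x = 0 := by
    intro x hx
    have hnot : x ∉ tsupport u ∪ tsupport (fderiv ℝ u) := by
      intro hmem
      have := hM hmem
      rw [mem_closedBall_zero_iff] at this
      linarith
    exact ⟨image_eq_zero_of_notMem_tsupport (fun h => hnot (Or.inl h)),
      image_eq_zero_of_notMem_tsupport (fun h => hnot (Or.inr h))⟩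
  -- tail-integral bound
  have hΦ : ∀ ω : EuclideanSpace ℝ (Fin d), ‖ω‖ = 1 →
      ∀ t ∈ Ioc R₀ T, |∫ s in Ioc R₀ t, V (s • ω)| ≤ δ / 2 := by
    intro ω hω t ht
    have hc_cont : Continuous fun s : ℝ => s • ω := continuous_id.smul continuous_const
    have hφI : ∀ a b : ℝ, IntervalIntegrable (fun s => V (s • ω)) volume a b := by
      intro a b
      rw [intervalIntegrable_iff]
      obtain ⟨CK, hCK⟩ := hVloc ((fun s : ℝ => s • ω) '' uIcc a b) (isCompact_uIcc.image hc_cont)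
      refine Measure.integrableOn_of_bounded (M := CK) measure_Ioc_lt_top.ne
        ((hVmeas.comp hc_cont.measurable).aestronglyMeasurable) ?_
      filter_upwards [ae_restrict_mem measurableSet_uIoc] with s hs
      rw [Real.norm_eq_abs]
      exact hCK _ ⟨s, Ioc_subset_Icc_self hs, rfl⟩
    have ht0 : (0:ℝ) < t := lt_trans hR₀0 ht.1
    have h1 := hW ω hω R₀ hR₀0
    have h2 := hW ω hω t ht0
    have h3 : Tendsto (fun b => (∫ s in R₀..t, V (s • ω)) + ∫ s in t..b, V (s • ω)) atTop
        (nhds ((∫ s in R₀..t, V (s • ω)) + W t ω)) := tendsto_const_nhds.add h2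
    have h4 : Tendsto (fun b => ∫ s in R₀..b, V (s • ω)) atTop
        (nhds ((∫ s in R₀..t, V (s • ω)) + W t ω)) := by
      refine h3.congr fun b => ?_
      exact intervalIntegral.integral_add_adjacent_intervals (hφI R₀ t) (hφI t b)
    have h5 : W R₀ ω = (∫ s in R₀..t, V (s • ω)) + W t ω := tendsto_nhds_unique h1 h4
    have h6 : ∫ s in Ioc R₀ t, V (s • ω) = W R₀ ω - W t ω := by
      rw [← intervalIntegral.integral_of_le ht.1.le]
      linarith
    rw [h6]
    have hA := hR R₀ hRR₀ ω hω
    have hB := hR t (lt_trans hRR₀ ht.1) ω hω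
    rw [sub_eq_add_neg]
    refine le_trans (abs_add_le _ _) ?_
    rw [abs_neg]
    linarith
  -- the majorant
  set G : EuclideanSpace ℝ (Fin d) → ℝ := fun x =>
    C * (closedBall (0 : EuclideanSpace ℝ (Fin d)) R₀).indicator (fun y => u y ^ 2) x
      + (δ / 2) * (‖fderiv ℝ u x‖ ^ 2 + d * u x ^ 2) with hGdef
  -- integrability on E
  have hu2supp : HasCompactSupport (fun x => u x ^ 2) :=
    hsupp.comp_left (g := fun t : ℝ => t ^ 2) (by simp)
  have hu2i : Integrable (fun x => u x ^ 2) :=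
    (hu_cont.pow 2).integrable_of_hasCompactSupport hu2supp
  have hDu2i : Integrable (fun x => ‖fderiv ℝ u x‖ ^ 2) :=
    (show Continuous fun x => ‖fderiv ℝ u x‖ ^ 2 from hDu_cont.norm.pow 2).integrable_of_hasCompactSupport
      ((hsupp.fderiv (𝕜 := ℝ)).comp_left (g := fun L : EuclideanSpace ℝ (Fin d) →L[ℝ] ℝ => ‖L‖ ^ 2) (by simp))
  have hVu2i : Integrable (fun x => V x * u x ^ 2) := by
    have hsub : Function.support (fun x => V x * u x ^ 2) ⊆ tsupport u := by
      intro x hx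
      by_contra h
      have h0 : u x = 0 := image_eq_zero_of_notMem_tsupport h
      apply hx
      simp [h0]
    rw [← integrableOn_iff_integrable_of_support_subset hsub]
    obtain ⟨CV, hCV⟩ := hVloc (tsupport u) hsupp
    refine Measure.integrableOn_of_bounded (M := CV * Mu ^ 2) hsupp.measure_lt_top.ne
      ((hVmeas.mul (hu_cont.measurable.pow_const 2)).aestronglyMeasurable) ?_
    filter_upwards [ae_restrict_mem (isClosed_tsupport u).measurableSet] with x hx
    rw [Real.norm_eq_abs, abs_mul]
    have h1 := hCV x hx
    have h2 : |u x ^ 2| ≤ Mu ^ 2 := by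
      rw [abs_of_nonneg (sq_nonneg _)]
      nlinarith [hMu x, abs_nonneg (u x), sq_abs (u x)]
    exact mul_le_mul h1 h2 (abs_nonneg _) (le_trans (abs_nonneg _) h1)
  have hGi : Integrable G := by
    refine Integrable.add ?_ ?_
    · exact (hu2i.indicator measurableSet_closedBall).const_mul C
    · exact ((hDu2i.add (hu2i.const_mul d)).const_mul (δ/2))
  -- polar decompositions
  have hJint := polar_integrable hd G hGi
  have hpolarV := polar_integral hd (fun x => V x * u x ^ 2) hVu2i
  have hpolarG := polar_integral hd G hGi
  have hper : ∀ ω : sphere (0 : EuclideanSpace ℝ (Fin d)) 1,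
      |∫ r in Ioi (0:ℝ), r ^ (d-1) * (V (r • ω.1) * u (r • ω.1) ^ 2)|
        ≤ ∫ r in Ioi (0:ℝ), r ^ (d-1) * G (r • ω.1) := by
    intro ω
    have hω : ‖(ω : EuclideanSpace ℝ (Fin d))‖ = 1 := by
      have := ω.2
      rwa [mem_sphere_zero_iff_norm] at this
    have h := per_omega (d-1) hdn V hVmeas hVloc u hu δ C R₀ T Mu MD hδ hC hR₀1 hT
      hMu hMD hCb hTu ω.1 hω (hΦ ω.1 hω)
    simpa only [hGdef] using h
  -- final integral computations
  have hIu : 0 ≤ ∫ x, u x ^ 2 := integral_nonneg fun x => sq_nonneg _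
  have hID : 0 ≤ ∫ x, ‖fderiv ℝ u x‖ ^ 2 := integral_nonneg fun x => sq_nonneg _
  have hind_int : ∫ x, (closedBall (0 : EuclideanSpace ℝ (Fin d)) R₀).indicator
      (fun y => u y ^ 2) x ≤ ∫ x, u x ^ 2 := by
    rw [integral_indicator measurableSet_closedBall]
    exact setIntegral_le_integral hu2i (Eventually.of_forall fun x => sq_nonneg _)
  have hsplitG : ∫ x, G x
      = C * (∫ x, (closedBall (0 : EuclideanSpace ℝ (Fin d)) R₀).indicator (fun y => u y ^ 2) x)
        + (δ/2) * ((∫ x, ‖fderiv ℝ u x‖ ^ 2) + d * ∫ x, u x ^ 2) := by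
    simp only [hGdef]
    have hint1 : Integrable (fun x => C * (closedBall (0 : EuclideanSpace ℝ (Fin d)) R₀).indicator
        (fun y => u y ^ 2) x) := (hu2i.indicator measurableSet_closedBall).const_mul C
    have hint2 : Integrable (fun x : EuclideanSpace ℝ (Fin d) =>
        ‖fderiv ℝ u x‖ ^ 2 + ↑d * u x ^ 2) := hDu2i.add (hu2i.const_mul d)
    have hint3 : Integrable (fun x : EuclideanSpace ℝ (Fin d) =>
        (δ/2) * (‖fderiv ℝ u x‖ ^ 2 + ↑d * u x ^ 2)) := hint2.const_mul (δ/2)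
    rw [integral_add hint1 hint3, integral_const_mul, integral_const_mul,
      integral_add hDu2i (hu2i.const_mul d), integral_const_mul]
  have hfinal : ∫ x, G x ≤ δ * (∫ x, ‖fderiv ℝ u x‖ ^ 2) + (C + δ * d) * ∫ x, u x ^ 2 := by
    rw [hsplitG]
    have h1 : C * (∫ x, (closedBall (0 : EuclideanSpace ℝ (Fin d)) R₀).indicator
        (fun y => u y ^ 2) x) ≤ C * ∫ x, u x ^ 2 := mul_le_mul_of_nonneg_left hind_int hC
    have hd0 : (0:ℝ) ≤ (d:ℝ) := Nat.cast_nonneg d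
    nlinarith [mul_nonneg hδ.le hID, mul_nonneg (mul_nonneg hδ.le hd0) hIu]
  -- assemble
  have habs : ∀ x, V x * |u x| ^ 2 = V x * u x ^ 2 := fun x => by rw [sq_abs]
  have habs2 : ∀ x : EuclideanSpace ℝ (Fin d), |u x| ^ 2 = u x ^ 2 := fun x => sq_abs _
  simp only [habs, habs2]
  calc |∫ x, V x * u x ^ 2|
      = |∫ ω : sphere (0 : EuclideanSpace ℝ (Fin d)) 1,
          ∫ r in Ioi (0:ℝ), r ^ (d-1) * (V (r • ω.1) * u (r • ω.1) ^ 2)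
            ∂(volume) ∂((volume : Measure (EuclideanSpace ℝ (Fin d))).toSphere)| := by
        rw [hpolarV]
    _ ≤ ∫ ω : sphere (0 : EuclideanSpace ℝ (Fin d)) 1,
          |∫ r in Ioi (0:ℝ), r ^ (d-1) * (V (r • ω.1) * u (r • ω.1) ^ 2)|
            ∂((volume : Measure (EuclideanSpace ℝ (Fin d))).toSphere) := by
        simpa only [Real.norm_eq_abs] using norm_integral_le_integral_norm
          (μ := (volume : Measure (EuclideanSpace ℝ (Fin d))).toSphere)
          (fun ω : sphere (0 : EuclideanSpace ℝ (Fin d)) 1 =>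
            ∫ r in Ioi (0:ℝ), r ^ (d-1) * (V (r • ω.1) * u (r • ω.1) ^ 2))
    _ ≤ ∫ ω : sphere (0 : EuclideanSpace ℝ (Fin d)) 1,
          (∫ r in Ioi (0:ℝ), r ^ (d-1) * G (r • ω.1))
            ∂((volume : Measure (EuclideanSpace ℝ (Fin d))).toSphere) :=
        integral_mono_of_nonneg (Eventually.of_forall fun ω => abs_nonneg _) hJint
          (Eventually.of_forall hper)
    _ = ∫ x, G x := hpolarG.symm
    _ ≤ δ * (∫ x, ‖fderiv ℝ u x‖ ^ 2) + (C + δ * d) * ∫ x, u x ^ 2 := hfinal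
end
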